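/- arXiv:1406.2755 — 12 statements merged into one kernel-verified Lean document; each statement's English description precedes it below -/
import Mathlib

section
/- For every natural number n, every integer s with 0 ≤ s ≤ ⌊n/2⌋, and every real number x, the incomplete tribonacci polynomial satisfies T_{n+1}^{(s)}(x) = ∑_{λ} x^{2δ(λ)+ν(λ)}, where the sum is over all tilings λ of length n containing at most s longer pieces. -/
/-- The incomplete tribonacci polynomial `T_n^{(s)}(x)`, for subscript `n ≥ 1`:
`T_{n+1}^{(s)}(x) = ∑_{i=0}^{s} ∑_{j=0}^{i} C(i,j) C(n-i-j, i) x^{2n-3(i+j)}`. -/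
def incTrib (n s : ℕ) (x : ℝ) : ℝ :=
  ∑ i ∈ Finset.range (s + 1), ∑ j ∈ Finset.range (i + 1),
    (Nat.choose i j : ℝ) * (Nat.choose (n - 1 - i - j) i : ℝ) * x ^ (2 * (n - 1) - 3 * (i + j))


def tilF : ℕ → Finset (List ℕ)
  | 0 => {[]}
  | 1 => {[1]}
  | 2 => {[1,1], [2]}
  | (n+3) => ((tilF (n+2)).image (List.cons 1)) ∪ ((tilF (n+1)).image (List.cons 2)) ∪
      ((tilF n).image (List.cons 3))

lemma mem_tilF : ∀ n (l : List ℕ), l ∈ tilF n ↔ l.sum = n ∧ ∀ b ∈ l, b = 1 ∨ b = 2 ∨ b = 3 := by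
  intro n
  induction n using Nat.strong_induction_on with
  | _ n ih =>
    have hbase : ∀ (l : List ℕ) (a : ℕ) (t : List ℕ), l = a :: t →
        (l.sum = n ∧ ∀ b ∈ l, b = 1 ∨ b = 2 ∨ b = 3) →
        (a = 1 ∨ a = 2 ∨ a = 3) ∧ t.sum = n - a ∧ (∀ b ∈ t, b = 1 ∨ b = 2 ∨ b = 3) ∧ a ≤ n := by
      rintro l a t rfl ⟨hs, hb⟩
      have ha := hb a (by simp)
      simp at hs
      exact ⟨ha, by omega, fun b hb' => hb b (by simp [hb']), by omega⟩
    match n with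
    | 0 =>
      intro l
      constructor
      · intro h; simp [tilF] at h; subst h; simp
      · rintro ⟨hs, hb⟩
        cases l with
        | nil => simp [tilF]
        | cons a t => have := hbase _ a t rfl ⟨hs, hb⟩; simp at hs; omega
    | 1 =>
      intro l
      constructor
      · intro h; simp [tilF] at h; subst h; simp
      · rintro ⟨hs, hb⟩
        cases l with
        | nil => simp at hs
        | cons a t =>
          obtain ⟨ha, hts, htb, han⟩ := hbase _ a t rfl ⟨hs, hb⟩
          have ha1 : a = 1 := by omega
          subst ha1
          cases t with
          | nil => simp [tilF]
          | cons c u =>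
            have := htb c (by simp)
            simp at hs; omega
    | 2 =>
      intro l
      constructor
      · intro h; simp [tilF] at h
        rcases h with h | h <;> subst h <;> simp
      · rintro ⟨hs, hb⟩
        cases l with
        | nil => simp at hs
        | cons a t =>
          obtain ⟨ha, hts, htb, han⟩ := hbase _ a t rfl ⟨hs, hb⟩
          rcases ha with rfl | rfl | rfl
          · cases t with
            | nil => simp at hs
            | cons c u =>
              have hc := htb c (by simp)
              have hc1 : c = 1 := by simp at hs; omega
              subst hc1
              cases u with
              | nil => simp [tilF]
              | cons d v => have := htb d (by simp); simp at hs; omega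
          · cases t with
            | nil => simp [tilF]
            | cons c u => have := htb c (by simp); simp at hs; omega
          · simp at hs; omega
    | (m+3) =>
      intro l
      constructor
      · intro h
        simp only [tilF, Finset.mem_union, Finset.mem_image] at h
        have key : ∀ (a k : ℕ) (t : List ℕ), a + k = m + 3 → (a = 1 ∨ a = 2 ∨ a = 3) →
            t.sum = k → (∀ b ∈ t, b = 1 ∨ b = 2 ∨ b = 3) →
            ((a :: t).sum = m + 3 ∧ ∀ b ∈ a :: t, b = 1 ∨ b = 2 ∨ b = 3) := by
          intro a k t hak ha h1 h2
          refine ⟨by simp [h1]; omega, ?_⟩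
          rintro b hb
          rcases List.mem_cons.1 hb with rfl | hb
          · exact ha
          · exact h2 b hb
        rcases h with (⟨t, ht, rfl⟩ | ⟨t, ht, rfl⟩) | ⟨t, ht, rfl⟩
        · obtain ⟨h1, h2⟩ := (ih (m+2) (by omega) t).1 ht
          exact key 1 (m+2) t (by omega) (by simp) h1 h2
        · obtain ⟨h1, h2⟩ := (ih (m+1) (by omega) t).1 ht
          exact key 2 (m+1) t (by omega) (by simp) h1 h2
        · obtain ⟨h1, h2⟩ := (ih m (by omega) t).1 ht
          exact key 3 m t (by omega) (by simp) h1 h2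
      · rintro ⟨hs, hb⟩
        cases l with
        | nil => simp at hs
        | cons a t =>
          obtain ⟨ha, hts, htb, han⟩ := hbase _ a t rfl ⟨hs, hb⟩
          simp only [tilF, Finset.mem_union, Finset.mem_image]
          rcases ha with rfl | rfl | rfl
          · exact Or.inl (Or.inl ⟨t, (ih (m+2) (by omega) t).2 ⟨by omega, htb⟩, rfl⟩)
          · exact Or.inl (Or.inr ⟨t, (ih (m+1) (by omega) t).2 ⟨by omega, htb⟩, rfl⟩)
          · exact Or.inr ⟨t, (ih m (by omega) t).2 ⟨by omega, htb⟩, rfl⟩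

noncomputable def wsum (n s : ℕ) (x : ℝ) : ℝ :=
  ∑ l ∈ (tilF n).filter (fun l => l.countP (fun b => 2 ≤ b) ≤ s),
    x ^ (2 * l.count 1 + l.count 2)

lemma tilF_eq (n : ℕ) : tilF (n+3) = ((tilF (n+2)).image (List.cons 1)) ∪
    ((tilF (n+1)).image (List.cons 2)) ∪ ((tilF n).image (List.cons 3)) := by
  rw [tilF]

lemma cons_piece (a k s : ℕ) (x : ℝ) :
    ∑ l ∈ (((tilF k).image (List.cons a)).filter (fun l => l.countP (fun b => 2 ≤ b) ≤ s)),
      x ^ (2 * l.count 1 + l.count 2)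
    = ∑ l ∈ (tilF k).filter (fun l => (a :: l).countP (fun b => 2 ≤ b) ≤ s),
      x ^ (2 * (a :: l).count 1 + (a :: l).count 2) := by
  rw [Finset.filter_image]
  exact Finset.sum_image (fun u _ v _ h => List.cons_injective h)

lemma hdisj (a b : ℕ) (s t : Finset (List ℕ)) (hab : a ≠ b) :
    Disjoint (s.image (List.cons a)) (t.image (List.cons b)) := by
  rw [Finset.disjoint_left]
  rintro l hl hl'
  simp only [Finset.mem_image] at hl hl'
  obtain ⟨u, _, hu⟩ := hl
  obtain ⟨v, _, hv⟩ := hl'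
  injection hu.trans hv.symm with h _
  exact hab h

lemma wsum_split (n s : ℕ) (x : ℝ) :
    wsum (n+3) s x =
      (∑ l ∈ (tilF (n+2)).filter (fun l => (1 :: l).countP (fun b => 2 ≤ b) ≤ s),
        x ^ (2 * (1 :: l).count 1 + (1 :: l).count 2))
      + (∑ l ∈ (tilF (n+1)).filter (fun l => (2 :: l).countP (fun b => 2 ≤ b) ≤ s),
        x ^ (2 * (2 :: l).count 1 + (2 :: l).count 2))
      + (∑ l ∈ (tilF n).filter (fun l => (3 :: l).countP (fun b => 2 ≤ b) ≤ s),
        x ^ (2 * (3 :: l).count 1 + (3 :: l).count 2)) := by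
  rw [wsum, tilF_eq, Finset.filter_union, Finset.filter_union, Finset.sum_union, Finset.sum_union,
    cons_piece, cons_piece, cons_piece]
  · exact Finset.disjoint_filter_filter (hdisj 1 2 _ _ (by norm_num))
  · rw [Finset.disjoint_union_left]
    exact ⟨Finset.disjoint_filter_filter (hdisj 1 3 _ _ (by norm_num)),
      Finset.disjoint_filter_filter (hdisj 2 3 _ _ (by norm_num))⟩

lemma wsum_rec (n s : ℕ) (x : ℝ) :
    wsum (n+3) (s+1) x = x^2 * wsum (n+2) (s+1) x + x * wsum (n+1) s x + wsum n s x := by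
  rw [wsum_split, wsum, wsum, wsum, Finset.mul_sum, Finset.mul_sum]
  congr 1
  · congr 1
    · refine Finset.sum_congr (by apply Finset.filter_congr; intro l _; simp) ?_
      intro l _
      simp [List.count_cons]
      ring
    · refine Finset.sum_congr (by apply Finset.filter_congr; intro l _; simp [List.countP_cons]) ?_
      intro l _
      simp [List.count_cons]
      ring
  · refine Finset.sum_congr (by apply Finset.filter_congr; intro l _; simp [List.countP_cons]) ?_
    intro l _
    simp [List.count_cons]

lemma wsum_rec0 (n : ℕ) (x : ℝ) :
    wsum (n+3) 0 x = x^2 * wsum (n+2) 0 x := by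
  rw [wsum_split, wsum, Finset.mul_sum]
  have h2 : ∀ l : List ℕ, ¬ ((2 :: l).countP (fun b => 2 ≤ b) ≤ 0) := by
    intro l; simp [List.countP_cons]
  have h3 : ∀ l : List ℕ, ¬ ((3 :: l).countP (fun b => 2 ≤ b) ≤ 0) := by
    intro l; simp [List.countP_cons]
  rw [Finset.filter_false_of_mem (fun l _ => h2 l), Finset.filter_false_of_mem (fun l _ => h3 l)]
  simp only [Finset.sum_empty, add_zero]
  refine Finset.sum_congr (by apply Finset.filter_congr; intro l _; simp) ?_
  intro l _
  simp [List.count_cons]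
  ring

lemma wsum_zero (s : ℕ) (x : ℝ) : wsum 0 s x = 1 := by
  simp [wsum, tilF, Finset.filter_singleton]

lemma wsum_one (s : ℕ) (x : ℝ) : wsum 1 s x = x ^ 2 := by
  simp [wsum, tilF, Finset.filter_singleton]

lemma wsum_two_zero (x : ℝ) : wsum 2 0 x = x ^ 4 := by
  simp [wsum, tilF, Finset.filter_insert, Finset.filter_singleton, List.count_cons,
    List.countP_cons]

lemma wsum_two_succ (s : ℕ) (x : ℝ) : wsum 2 (s+1) x = x ^ 4 + x := by
  simp [wsum, tilF, Finset.filter_insert, Finset.filter_singleton, List.count_cons,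
    List.countP_cons, Finset.sum_insert]

lemma pow_align (x : ℝ) (c : ℝ) (k e1 e2 : ℕ) (h : c = 0 ∨ e1 = k + e2) :
    c * x ^ e1 = x ^ k * (c * x ^ e2) := by
  rcases h with rfl | rfl
  · ring
  · rw [pow_add]; ring

lemma term_split (m i j : ℕ) (hj : j ≤ i + 1) (x : ℝ) :
    ((i+1).choose j : ℝ) * ((m+3-(i+1)-j).choose (i+1) : ℝ) * x ^ (2*(m+3) - 3*((i+1)+j))
    = x^2 * (((i+1).choose j : ℝ) * ((m+2-(i+1)-j).choose (i+1) : ℝ) * x ^ (2*(m+2) - 3*((i+1)+j)))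
    + x * ((i.choose j : ℝ) * ((m+1-i-j).choose i : ℝ) * x ^ (2*(m+1) - 3*(i+j)))
    + (if j = 0 then 0
       else (i.choose (j-1) : ℝ) * ((m-i-(j-1)).choose i : ℝ) * x ^ (2*m - 3*(i+(j-1)))) := by
  by_cases hz : 2*(i+1)+j ≤ m+3
  · -- good regime
    have e1 : m+3-(i+1)-j = (m+1-i-j) + 1 := by omega
    have e2 : m+2-(i+1)-j = m+1-i-j := by omega
    rw [e1, e2, Nat.choose_succ_succ]
    push_cast
    rcases j with _ | j'
    · rw [if_pos rfl]
      simp only [Nat.choose_zero_right, Nat.cast_one, add_zero, one_mul]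
      have A1 : (((m+1-i-0).choose (i+1) : ℕ) : ℝ) * x ^ (2*(m+3) - 3*(i+1))
          = x^2 * ((((m+1-i-0).choose (i+1) : ℕ) : ℝ) * x ^ (2*(m+2) - 3*(i+1))) := by
        apply pow_align
        right; omega
      have A2 : (((m+1-i-0).choose i : ℕ) : ℝ) * x ^ (2*(m+3) - 3*(i+1))
          = x^1 * ((((m+1-i-0).choose i : ℕ) : ℝ) * x ^ (2*(m+1) - 3*i)) := by
        apply pow_align
        right; omega
      rw [pow_one] at A2
      linear_combination A1 + A2
    · simp only [if_neg (Nat.succ_ne_zero j'), Nat.succ_sub_one]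
      rw [Nat.choose_succ_succ i j']
      push_cast
      have e3 : m+1-i-(j'+1) = m-i-j' := by omega
      rw [e3]
      rw [show 2*(m+3) - 3*((i+1)+(j'+1)) = 2*m - 3*(i+j') from by omega]
      have A1 : (((m-i-j').choose (i+1) : ℕ) : ℝ) * x ^ (2*m - 3*(i+j'))
          = x^2 * ((((m-i-j').choose (i+1) : ℕ) : ℝ) * x ^ (2*(m+2) - 3*((i+1)+(j'+1)))) := by
        apply pow_align
        by_cases h : 3*((i+1)+(j'+1)) ≤ 2*(m+2)
        · right; omega
        · left
          rw [Nat.choose_eq_zero_of_lt (show m-i-j' < i+1 by omega)]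
          exact Nat.cast_zero
      have A2 : ((i.choose (j'+1) : ℕ) : ℝ) * (((m-i-j').choose i : ℕ) : ℝ) * x ^ (2*m - 3*(i+j'))
          = x^1 * (((i.choose (j'+1) : ℕ) : ℝ) * (((m-i-j').choose i : ℕ) : ℝ)
              * x ^ (2*(m+1) - 3*(i+(j'+1)))) := by
        apply pow_align
        by_cases h : 3*(i+(j'+1)) ≤ 2*(m+1)
        · right; omega
        · left
          rw [Nat.choose_eq_zero_of_lt (show i < j'+1 by omega)]
          simp
      rw [pow_one] at A2
      linear_combination ((i.choose j' : ℕ) : ℝ) * A1 + ((i.choose (j'+1) : ℕ) : ℝ) * A1 + A2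
  · -- zero regime: every term vanishes
    rw [Nat.choose_eq_zero_of_lt (show m+3-(i+1)-j < i+1 by omega),
      Nat.choose_eq_zero_of_lt (show m+2-(i+1)-j < i+1 by omega)]
    push_cast
    rcases j with _ | j'
    · rw [if_pos rfl]
      rw [Nat.choose_eq_zero_of_lt (show m+1-i-0 < i by omega)]
      simp
    · rw [if_neg (Nat.succ_ne_zero j'), Nat.add_sub_cancel]
      rw [Nat.choose_eq_zero_of_lt (show m-i-j' < i by omega)]
      rcases Nat.lt_or_ge i (j'+1) with hij | hij
      · rw [Nat.choose_eq_zero_of_lt hij]; simp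
      · rw [Nat.choose_eq_zero_of_lt (show m+1-i-(j'+1) < i by omega)]; simp

lemma incTrib_s0 (m : ℕ) (x : ℝ) : incTrib (m+1) 0 x = x ^ (2*m) := by
  simp [incTrib]

lemma incTrib_one (s : ℕ) (x : ℝ) : incTrib 1 s x = 1 := by
  rw [incTrib, Finset.sum_range_succ']
  have h1 : (∑ i ∈ Finset.range s, ∑ j ∈ Finset.range (i+1+1),
      ((i+1).choose j : ℝ) * ((1-1-(i+1)-j).choose (i+1) : ℝ) * x ^ (2*(1-1) - 3*((i+1)+j)))
      = 0 := by
    apply Finset.sum_eq_zero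
    intro i _
    apply Finset.sum_eq_zero
    intro j _
    rw [show 1-1-(i+1)-j = 0 from by omega, Nat.choose_eq_zero_of_lt (Nat.succ_pos i)]
    simp
  rw [h1, zero_add]
  simp

lemma incTrib_two (s : ℕ) (x : ℝ) : incTrib 2 s x = x ^ 2 := by
  rw [incTrib, Finset.sum_range_succ']
  have h1 : (∑ i ∈ Finset.range s, ∑ j ∈ Finset.range (i+1+1),
      ((i+1).choose j : ℝ) * ((2-1-(i+1)-j).choose (i+1) : ℝ) * x ^ (2*(2-1) - 3*((i+1)+j)))
      = 0 := by
    apply Finset.sum_eq_zero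
    intro i _
    apply Finset.sum_eq_zero
    intro j _
    rw [show 2-1-(i+1)-j = 0 from by omega, Nat.choose_eq_zero_of_lt (Nat.succ_pos i)]
    simp
  rw [h1, zero_add]
  simp

lemma incTrib_three_succ (s : ℕ) (x : ℝ) : incTrib 3 (s+1) x = x ^ 4 + x := by
  rw [incTrib, Finset.sum_range_succ', Finset.sum_range_succ']
  have h1 : (∑ i ∈ Finset.range s, ∑ j ∈ Finset.range (i+1+1+1),
      ((i+1+1).choose j : ℝ) * ((3-1-(i+1+1)-j).choose (i+1+1) : ℝ)
        * x ^ (2*(3-1) - 3*((i+1+1)+j))) = 0 := by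
    apply Finset.sum_eq_zero
    intro i _
    apply Finset.sum_eq_zero
    intro j _
    rw [show 3-1-(i+1+1)-j = 0 from by omega, Nat.choose_eq_zero_of_lt (Nat.succ_pos _)]
    simp
  rw [h1, zero_add]
  norm_num [Finset.sum_range_succ]
  ring

lemma incTrib_rec (m s : ℕ) (x : ℝ) :
    incTrib (m+4) (s+1) x
      = x^2 * incTrib (m+3) (s+1) x + x * incTrib (m+2) s x + incTrib (m+1) s x := by
  simp only [incTrib, show m+4-1 = m+3 from rfl, show m+3-1 = m+2 from rfl,
    show m+2-1 = m+1 from rfl, show m+1-1 = m from rfl]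
  rw [Finset.sum_range_succ']
  conv_rhs => rw [Finset.sum_range_succ']
  have hsplit : ∀ i ∈ Finset.range (s+1),
      (∑ j ∈ Finset.range (i+1+1),
        ((i+1).choose j : ℝ) * ((m+3-(i+1)-j).choose (i+1) : ℝ) * x ^ (2*(m+3) - 3*((i+1)+j)))
      = x^2 * (∑ j ∈ Finset.range (i+1+1),
          ((i+1).choose j : ℝ) * ((m+2-(i+1)-j).choose (i+1) : ℝ) * x ^ (2*(m+2) - 3*((i+1)+j)))
      + x * (∑ j ∈ Finset.range (i+1),
          (i.choose j : ℝ) * ((m+1-i-j).choose i : ℝ) * x ^ (2*(m+1) - 3*(i+j)))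
      + (∑ j ∈ Finset.range (i+1),
          (i.choose j : ℝ) * ((m-i-j).choose i : ℝ) * x ^ (2*m - 3*(i+j))) := by
    intro i _
    have hterm : ∀ j ∈ Finset.range (i+1+1),
        ((i+1).choose j : ℝ) * ((m+3-(i+1)-j).choose (i+1) : ℝ) * x ^ (2*(m+3) - 3*((i+1)+j))
        = x^2 * (((i+1).choose j : ℝ) * ((m+2-(i+1)-j).choose (i+1) : ℝ)
            * x ^ (2*(m+2) - 3*((i+1)+j)))
        + x * ((i.choose j : ℝ) * ((m+1-i-j).choose i : ℝ) * x ^ (2*(m+1) - 3*(i+j)))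
        + (if j = 0 then 0
           else (i.choose (j-1) : ℝ) * ((m-i-(j-1)).choose i : ℝ) * x ^ (2*m - 3*(i+(j-1)))) := by
      intro j hjr
      exact term_split m i j (by simpa using Nat.lt_succ_iff.mp (Finset.mem_range.mp hjr)) x
    rw [Finset.sum_congr rfl hterm, Finset.sum_add_distrib, Finset.sum_add_distrib,
      ← Finset.mul_sum, ← Finset.mul_sum]
    congr 1
    · congr 1
      rw [Finset.sum_range_succ]
      rw [Nat.choose_eq_zero_of_lt (Nat.lt_succ_self i)]
      push_cast
      rw [zero_mul, zero_mul, add_zero]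
    · rw [Finset.sum_range_succ']
      simp [Nat.add_sub_cancel]
  rw [Finset.sum_congr rfl hsplit, Finset.sum_add_distrib, Finset.sum_add_distrib,
    ← Finset.mul_sum, ← Finset.mul_sum]
  rw [Finset.sum_range_one, Finset.sum_range_one]
  norm_num
  rw [show 2*(m+3) = 2 + 2*(m+2) from by ring, pow_add]
  ring


lemma key (x : ℝ) : ∀ n s, incTrib (n+1) s x = wsum n s x := by
  intro n
  induction n using Nat.strong_induction_on with
  | _ n ih =>
    match n with
    | 0 => intro s; rw [incTrib_one, wsum_zero]
    | 1 => intro s; rw [incTrib_two, wsum_one]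
    | 2 =>
      intro s
      rcases s with _ | s'
      · rw [incTrib_s0 2, wsum_two_zero]
      · rw [incTrib_three_succ, wsum_two_succ]
    | (m+3) =>
      intro s
      rcases s with _ | s'
      · rw [incTrib_s0 (m+3), wsum_rec0, ← ih (m+2) (by omega) 0, incTrib_s0 (m+2),
          show 2*(m+3) = 2 + 2*(m+2) from by ring, pow_add]
      · rw [show m+3+1 = m+4 from rfl, incTrib_rec m s' x, wsum_rec,
          ih (m+2) (by omega) (s'+1), ih (m+1) (by omega) s', ih m (by omega) s']

/-- A tiling of length `n` is a composition of `n` all of whose parts are at most `3`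
(parts of a composition are positive, so parts lie in `{1,2,3}`: squares, dominos,
trominos).  `T_{n+1}^{(s)}(x)` is the total weight `x^(2δ(λ)+ν(λ))` over all tilings `λ`
of length `n` with at most `s` longer pieces (parts `≥ 2`), where `δ` counts squares
and `ν` counts dominos. -/
theorem incTrib_eq_sum_tilings (n s : ℕ) (hs : s ≤ n / 2) (x : ℝ) :
    incTrib (n + 1) s x =
      ∑ c ∈ Finset.univ.filter (fun c : Composition n =>
          (∀ b ∈ c.blocks, b ≤ 3) ∧ c.blocks.countP (fun b => 2 ≤ b) ≤ s),
        x ^ (2 * c.blocks.count 1 + c.blocks.count 2) := by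
  rw [key x n s, wsum]
  symm
  apply Finset.sum_bij (i := fun (c : Composition n) _ => c.blocks)
  · intro c hc
    obtain ⟨-, h3, hcount⟩ := Finset.mem_filter.mp hc
    refine Finset.mem_filter.mpr ⟨(mem_tilF n c.blocks).mpr ⟨c.blocks_sum, ?_⟩, by simpa using hcount⟩
    intro b hb
    have h1 := c.blocks_pos (by simpa using hb)
    have h2 := h3 b hb
    omega
  · intro c₁ h₁ c₂ h₂ h
    exact Composition.ext h
  · intro l hl
    obtain ⟨hmem, hcount⟩ := Finset.mem_filter.mp hl
    obtain ⟨hsum, hb⟩ := (mem_tilF n l).mp hmem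
    refine ⟨⟨l, ?_, hsum⟩, Finset.mem_filter.mpr ⟨Finset.mem_univ _, ?_, ?_⟩, rfl⟩
    · intro b hbl
      have := hb b hbl
      omega
    · intro b hbl
      have := hb b hbl
      omega
    · simpa using hcount
  · intro c hc
    rfl
end

section
/- For every natural number n, every integer k with 0 ≤ k ≤ ⌊n/2⌋, and every real number x, the total weight of all tilings of length n containing exactly k longer pieces equals ∑_{j=0}^{k} C(k,j) C(n-k-j, k) x^{2n-3(k+j)}; that is, ∑_{λ} x^{2δ(λ)+ν(λ)} = ∑_{j=0}^{k} C(k,j) C(n-k-j, k) x^{2n-3(k+j)}, where the sum on the left is over all tilings λ of length n with exactly k entries ≥ 2. -/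
open Finset

private def tilings : ℕ → Finset (List ℕ)
  | 0 => {[]}
  | 1 => {[1]}
  | 2 => {[1,1], [2]}
  | (n+3) =>
      ((tilings (n+2)).image (fun l => 1 :: l)) ∪
      ((tilings (n+1)).image (fun l => 2 :: l)) ∪
      ((tilings n).image (fun l => 3 :: l))

private lemma mem_tilings : ∀ (n : ℕ) (l : List ℕ),
    l ∈ tilings n ↔ l.sum = n ∧ ∀ b ∈ l, 0 < b ∧ b ≤ 3
  | 0, l => by
      constructor
      · intro h
        simp only [tilings, mem_singleton] at h
        subst h; simp
      · rintro ⟨hs, hb⟩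
        match l with
        | [] => simp [tilings]
        | a :: t =>
            exfalso
            have := (hb a (by simp)).1
            simp only [List.sum_cons] at hs
            omega
  | 1, l => by
      constructor
      · intro h
        simp only [tilings, mem_singleton] at h
        subst h; simp
      · rintro ⟨hs, hb⟩
        match l with
        | [] => simp at hs
        | a :: t =>
            have ha := (hb a (by simp)).1
            simp only [List.sum_cons] at hs
            have ht : t.sum = 0 := by omega
            have ht' : t = [] := by
              match t with
              | [] => rfl
              | b :: u =>
                have := (hb b (by simp)).1
                simp only [List.sum_cons] at ht
                omega
            subst ht'
            simp only [List.sum_nil, add_zero] at hs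
            subst hs
            simp [tilings]
  | 2, l => by
      constructor
      · intro h
        simp only [tilings, mem_insert, mem_singleton] at h
        rcases h with rfl | rfl <;> simp
      · rintro ⟨hs, hb⟩
        match l with
        | [] => simp at hs
        | [a] =>
            simp only [List.sum_cons, List.sum_nil, add_zero] at hs
            subst hs
            simp [tilings]
        | a :: b :: t =>
            have ha := (hb a (by simp)).1
            have hbb := (hb b (by simp)).1
            simp only [List.sum_cons] at hs
            have ht : t.sum = 0 := by omega
            have ht' : t = [] := by
              match t with
              | [] => rfl
              | c :: u =>
                have := (hb c (by simp)).1
                simp only [List.sum_cons] at ht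
                omega
            subst ht'
            simp only [List.sum_nil, add_zero] at hs
            have : a = 1 ∧ b = 1 := by omega
            obtain ⟨rfl, rfl⟩ := this
            simp [tilings]
  | (n+3), l => by
      constructor
      · intro h
        simp only [tilings, mem_union, mem_image] at h
        rcases h with (⟨t, ht, rfl⟩ | ⟨t, ht, rfl⟩) | ⟨t, ht, rfl⟩ <;>
        · obtain ⟨hs, hb⟩ := (mem_tilings _ t).1 ht
          refine ⟨by simp only [List.sum_cons, hs]; omega, ?_⟩
          intro b hb'
          simp only [List.mem_cons] at hb'
          rcases hb' with rfl | h'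
          · omega
          · exact hb b h'
      · rintro ⟨hs, hb⟩
        match l with
        | [] => simp at hs
        | a :: t =>
            have ha := hb a (by simp)
            simp only [List.sum_cons] at hs
            have htb : ∀ b ∈ t, 0 < b ∧ b ≤ 3 := fun b h => hb b (by simp [h])
            have h3 : a = 1 ∨ a = 2 ∨ a = 3 := by omega
            simp only [tilings, mem_union, mem_image]
            rcases h3 with rfl | rfl | rfl
            · exact Or.inl (Or.inl ⟨t, (mem_tilings _ t).2 ⟨by omega, htb⟩, rfl⟩)
            · exact Or.inl (Or.inr ⟨t, (mem_tilings _ t).2 ⟨by omega, htb⟩, rfl⟩)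
            · exact Or.inr ⟨t, (mem_tilings _ t).2 ⟨by omega, htb⟩, rfl⟩

private noncomputable def f (n k : ℕ) (x : ℝ) : ℝ :=
  ∑ l ∈ (tilings n).filter (fun l => l.countP (fun b => 2 ≤ b) = k),
    x ^ (2 * l.count 1 + l.count 2)

private noncomputable def g (n k : ℕ) (x : ℝ) : ℝ :=
  ∑ j ∈ Finset.range (k + 1),
    (Nat.choose k j : ℝ) * (Nat.choose (n - k - j) k : ℝ) * x ^ (2 * n - 3 * (k + j))

private lemma sum_filter_image_cons (a : ℕ) (s : Finset (List ℕ))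
    (p : List ℕ → Prop) [DecidablePred p] (w : List ℕ → ℝ) :
    ∑ l ∈ (s.image (fun l => a :: l)).filter p, w l
      = ∑ l ∈ s.filter (fun l => p (a :: l)), w (a :: l) := by
  rw [Finset.filter_image]
  exact Finset.sum_image (fun x _ y _ h => by simpa using h)

private lemma disj_image_cons {a b : ℕ} (h : a ≠ b) (s t : Finset (List ℕ)) :
    Disjoint (s.image (fun l => a :: l)) (t.image (fun l => b :: l)) := by
  simp only [Finset.disjoint_left, mem_image]
  rintro l ⟨u, _, rfl⟩ ⟨v, _, hv⟩
  simp only [List.cons.injEq] at hv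
  exact h hv.1.symm

private lemma f_split (n k : ℕ) (x : ℝ) :
    f (n+3) k x =
      (∑ l ∈ (tilings (n+2)).filter (fun l => l.countP (fun b => 2 ≤ b) = k),
          x ^ (2 * ((1:ℕ) :: l).count 1 + ((1:ℕ) :: l).count 2))
      + (∑ l ∈ (tilings (n+1)).filter (fun l => l.countP (fun b => 2 ≤ b) + 1 = k),
          x ^ (2 * ((2:ℕ) :: l).count 1 + ((2:ℕ) :: l).count 2))
      + (∑ l ∈ (tilings n).filter (fun l => l.countP (fun b => 2 ≤ b) + 1 = k),
          x ^ (2 * ((3:ℕ) :: l).count 1 + ((3:ℕ) :: l).count 2)) := by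
  unfold f
  rw [show tilings (n+3) = ((tilings (n+2)).image (fun l => 1 :: l)) ∪
      ((tilings (n+1)).image (fun l => 2 :: l)) ∪
      ((tilings n).image (fun l => 3 :: l)) from by rw [tilings]]
  rw [Finset.filter_union, Finset.filter_union]
  rw [Finset.sum_union (by
    rw [Finset.disjoint_union_left]
    exact ⟨Finset.disjoint_filter_filter (disj_image_cons (by norm_num) _ _),
      Finset.disjoint_filter_filter (disj_image_cons (by norm_num) _ _)⟩)]
  rw [Finset.sum_union (Finset.disjoint_filter_filter (disj_image_cons (by norm_num) _ _))]
  rw [sum_filter_image_cons, sum_filter_image_cons, sum_filter_image_cons]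
  have e1 : Finset.filter (fun l : List ℕ => (1 :: l).countP (fun b => 2 ≤ b) = k) (tilings (n+2))
      = Finset.filter (fun l => l.countP (fun b => 2 ≤ b) = k) (tilings (n+2)) := by
    apply Finset.filter_congr; intro l _; simp [List.countP_cons]
  have e2 : Finset.filter (fun l : List ℕ => (2 :: l).countP (fun b => 2 ≤ b) = k) (tilings (n+1))
      = Finset.filter (fun l => l.countP (fun b => 2 ≤ b) + 1 = k) (tilings (n+1)) := by
    apply Finset.filter_congr; intro l _; simp [List.countP_cons]
  have e3 : Finset.filter (fun l : List ℕ => (3 :: l).countP (fun b => 2 ≤ b) = k) (tilings n)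
      = Finset.filter (fun l => l.countP (fun b => 2 ≤ b) + 1 = k) (tilings n) := by
    apply Finset.filter_congr; intro l _; simp [List.countP_cons]
  rw [e1, e2, e3]

private lemma f_rec0 (n : ℕ) (x : ℝ) : f (n+3) 0 x = x^2 * f (n+2) 0 x := by
  rw [f_split]
  rw [show Finset.filter (fun l : List ℕ => l.countP (fun b => 2 ≤ b) + 1 = 0) (tilings (n+1))
      = ∅ from Finset.filter_eq_empty_iff.2 (fun _ => by omega),
    show Finset.filter (fun l : List ℕ => l.countP (fun b => 2 ≤ b) + 1 = 0) (tilings n)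
      = ∅ from Finset.filter_eq_empty_iff.2 (fun _ => by omega)]
  simp only [Finset.sum_empty, add_zero]
  rw [f, Finset.mul_sum]
  apply Finset.sum_congr rfl
  intro l _
  simp only [List.count_cons]
  norm_num
  rw [show 2 * (l.count 1 + 1) + l.count 2 = 2 + (2 * l.count 1 + l.count 2) from by ring,
    pow_add]

private lemma f_recS (n k : ℕ) (x : ℝ) :
    f (n+3) (k+1) x = x^2 * f (n+2) (k+1) x + x * f (n+1) k x + f n k x := by
  rw [f_split]
  have e2 : Finset.filter (fun l : List ℕ => l.countP (fun b => 2 ≤ b) + 1 = k + 1) (tilings (n+1))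
      = Finset.filter (fun l => l.countP (fun b => 2 ≤ b) = k) (tilings (n+1)) := by
    apply Finset.filter_congr; intro l _; simp
  have e3 : Finset.filter (fun l : List ℕ => l.countP (fun b => 2 ≤ b) + 1 = k + 1) (tilings n)
      = Finset.filter (fun l => l.countP (fun b => 2 ≤ b) = k) (tilings n) := by
    apply Finset.filter_congr; intro l _; simp
  rw [e2, e3]
  have h1 : (∑ l ∈ Finset.filter (fun l : List ℕ => l.countP (fun b => 2 ≤ b) = k + 1)
        (tilings (n+2)), x ^ (2 * ((1:ℕ) :: l).count 1 + ((1:ℕ) :: l).count 2))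
      = x^2 * f (n+2) (k+1) x := by
    rw [f, Finset.mul_sum]
    apply Finset.sum_congr rfl
    intro l _
    simp only [List.count_cons]
    norm_num
    ring
  have h2 : (∑ l ∈ Finset.filter (fun l : List ℕ => l.countP (fun b => 2 ≤ b) = k)
        (tilings (n+1)), x ^ (2 * ((2:ℕ) :: l).count 1 + ((2:ℕ) :: l).count 2))
      = x * f (n+1) k x := by
    rw [f, Finset.mul_sum]
    apply Finset.sum_congr rfl
    intro l _
    simp only [List.count_cons]
    norm_num
    ring
  have h3 : (∑ l ∈ Finset.filter (fun l : List ℕ => l.countP (fun b => 2 ≤ b) = k)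
        (tilings n), x ^ (2 * ((3:ℕ) :: l).count 1 + ((3:ℕ) :: l).count 2))
      = f n k x := by
    rw [f]
    apply Finset.sum_congr rfl
    intro l _
    simp [List.count_cons]
  rw [h1, h2, h3]

private lemma g_rec0 (n : ℕ) (x : ℝ) : g (n+3) 0 x = x^2 * g (n+2) 0 x := by
  simp only [g, zero_add, Finset.sum_range_one, Nat.choose_zero_right, Nat.choose_self,
    Nat.sub_zero, Nat.cast_one, one_mul, mul_zero, Nat.sub_zero]
  rw [show 2 * (n+3) = 2 + 2 * (n+2) from by ring, pow_add]

private lemma key1 (k a : ℕ) (x : ℝ) :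
    ((k+1+a).choose (k+1) : ℝ) * x ^ (k + 2*a + 1)
      = x^2 * (((k+a).choose (k+1) : ℝ) * x ^ (k + 2*a - 1))
        + x * (((k+a).choose k : ℝ) * x ^ (k + 2*a)) := by
  match a with
  | 0 =>
      simp only [add_zero, mul_zero, Nat.choose_succ_self, Nat.cast_zero, zero_mul, mul_zero,
        zero_add, Nat.choose_self, Nat.cast_one, one_mul]
      ring
  | (a'+1) =>
      simp only [← Nat.add_assoc]
      rw [show k + 2*(a'+1) - 1 = k + 2*a' + 1 from by omega,
        show k + 2*(a'+1) + 1 = k + 2*a' + 3 from by omega,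
        show k + 2*(a'+1) = k + 2*a' + 2 from by omega,
        Nat.choose_succ_succ (k+1+a') k,
        show k + 1 + a' = k + a' + 1 from by omega]
      simp only [Nat.succ_eq_add_one]
      push_cast
      ring

private lemma key2 (j b a : ℕ) (x : ℝ) :
    ((j+b+1).choose (j+1) : ℝ) * ((j+b+1+a).choose (j+b+1) : ℝ) * x ^ (b + 2*a)
      - x^2 * (((j+b+1).choose (j+1) : ℝ) * ((j+b+a).choose (j+b+1) : ℝ) * x ^ (b + 2*a - 2))
      - x * (((j+b).choose (j+1) : ℝ) * ((j+b+a).choose (j+b) : ℝ) * x ^ (b + 2*a - 1))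
    = ((j+b).choose j : ℝ) * ((j+b+a).choose (j+b) : ℝ) * x ^ (b + 2*a) := by
  match a, b with
  | 0, 0 =>
      simp [Nat.choose_succ_self, Nat.choose_self]
  | 0, (b'+1) =>
      simp only [← Nat.add_assoc, Nat.mul_zero, Nat.add_zero]
      rw [Nat.choose_succ_succ (j+b'+1) j,
        show (j+b'+1).choose (j+b'+1+1) = 0 from Nat.choose_succ_self _,
        show b'+1-1 = b' from rfl]
      simp only [Nat.choose_self, Nat.succ_eq_add_one, Nat.cast_zero, Nat.cast_one]
      push_cast
      ring
  | (a'+1), b =>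
      simp only [← Nat.add_assoc]
      rw [show b + 2*(a'+1) - 2 = b + 2*a' from by omega,
        show b + 2*(a'+1) - 1 = b + 2*a' + 1 from by omega,
        show b + 2*(a'+1) = b + 2*a' + 2 from by omega,
        Nat.choose_succ_succ (j+b) j,
        show j+b+1+a'+1 = (j+b+a'+1)+1 from by omega,
        Nat.choose_succ_succ (j+b+a'+1) (j+b),
        show j + b + a' + 1 = j + b + (a'+1) from by omega]
      simp only [Nat.succ_eq_add_one]
      push_cast
      ring

private lemma g_recS (n k : ℕ) (x : ℝ) :
    g (n+3) (k+1) x = x^2 * g (n+2) (k+1) x + x * g (n+1) k x + g n k x := by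
  unfold g
  rw [Finset.mul_sum, Finset.mul_sum]
  have hB : (∑ j ∈ Finset.range (k+1),
        x * ((k.choose j : ℝ) * (((n+1) - k - j).choose k : ℝ) * x ^ (2*(n+1) - 3*(k+j))))
      = ∑ j ∈ Finset.range (k+1+1),
        x * ((k.choose j : ℝ) * (((n+1) - k - j).choose k : ℝ) * x ^ (2*(n+1) - 3*(k+j))) := by
    conv_rhs => rw [Finset.sum_range_succ]
    simp [Nat.choose_succ_self]
  rw [hB]
  have key : ∑ j ∈ Finset.range (k+1+1),
      ((((k+1).choose j : ℝ) * (((n+3) - (k+1) - j).choose (k+1) : ℝ)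
          * x ^ (2*(n+3) - 3*((k+1)+j)))
        - x^2 * (((k+1).choose j : ℝ) * (((n+2) - (k+1) - j).choose (k+1) : ℝ)
          * x ^ (2*(n+2) - 3*((k+1)+j)))
        - x * ((k.choose j : ℝ) * (((n+1) - k - j).choose k : ℝ) * x ^ (2*(n+1) - 3*(k+j))))
      = ∑ j ∈ Finset.range (k+1),
        (k.choose j : ℝ) * ((n - k - j).choose k : ℝ) * x ^ (2*n - 3*(k+j)) := by
    rw [Finset.sum_range_succ']
    have hz : (((k+1).choose 0 : ℝ) * (((n+3) - (k+1) - 0).choose (k+1) : ℝ)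
          * x ^ (2*(n+3) - 3*((k+1)+0)))
        - x^2 * (((k+1).choose 0 : ℝ) * (((n+2) - (k+1) - 0).choose (k+1) : ℝ)
          * x ^ (2*(n+2) - 3*((k+1)+0)))
        - x * ((k.choose 0 : ℝ) * (((n+1) - k - 0).choose k : ℝ) * x ^ (2*(n+1) - 3*(k+0)))
        = 0 := by
      by_cases h : 2*k ≤ n+1
      · obtain ⟨a, ha⟩ : ∃ a, n + 1 = 2*k + a := ⟨n+1-2*k, by omega⟩
        rw [show n+3-(k+1)-0 = k+1+a from by omega,
          show n+2-(k+1)-0 = k+a from by omega,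
          show n+1-k-0 = k+a from by omega,
          show 2*(n+3)-3*((k+1)+0) = k+2*a+1 from by omega,
          show 2*(n+2)-3*((k+1)+0) = k+2*a-1 from by omega,
          show 2*(n+1)-3*(k+0) = k+2*a from by omega]
        simp only [Nat.choose_zero_right, Nat.cast_one, one_mul]
        linear_combination key1 k a x
      · have z1 : (n+3-(k+1)-0).choose (k+1) = 0 := Nat.choose_eq_zero_of_lt (by omega)
        have z2 : (n+2-(k+1)-0).choose (k+1) = 0 := Nat.choose_eq_zero_of_lt (by omega)
        have z3 : (n+1-k-0).choose k = 0 := Nat.choose_eq_zero_of_lt (by omega)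
        rw [z1, z2, z3]
        push_cast
        ring
    rw [hz, add_zero]
    apply Finset.sum_congr rfl
    intro j hj
    have hjk : j ≤ k := by
      have := Finset.mem_range.1 hj; omega
    by_cases h : 2*k + j ≤ n
    · obtain ⟨b, hb⟩ : ∃ b, k = j + b := ⟨k-j, by omega⟩
      obtain ⟨a, ha⟩ : ∃ a, n = 2*k + j + a := ⟨n-(2*k+j), by omega⟩
      rw [hb]
      rw [show n+3-(j+b+1)-(j+1) = j+b+1+a from by omega,
        show n+2-(j+b+1)-(j+1) = j+b+a from by omega,
        show n+1-(j+b)-(j+1) = j+b+a from by omega,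
        show n-(j+b)-j = j+b+a from by omega,
        show 2*(n+3)-3*((j+b+1)+(j+1)) = b+2*a from by omega,
        show 2*(n+2)-3*((j+b+1)+(j+1)) = b+2*a-2 from by omega,
        show 2*(n+1)-3*((j+b)+(j+1)) = b+2*a-1 from by omega,
        show 2*n-3*((j+b)+j) = b+2*a from by omega]
      linear_combination key2 j b a x
    · have z1 : (n+3-(k+1)-(j+1)).choose (k+1) = 0 := Nat.choose_eq_zero_of_lt (by omega)
      have z2 : (n+2-(k+1)-(j+1)).choose (k+1) = 0 := Nat.choose_eq_zero_of_lt (by omega)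
      have z3 : (n+1-k-(j+1)).choose k = 0 := Nat.choose_eq_zero_of_lt (by omega)
      have z4 : (n-k-j).choose k = 0 := Nat.choose_eq_zero_of_lt (by omega)
      rw [z1, z2, z3, z4]
      push_cast
      ring
  rw [Finset.sum_sub_distrib, Finset.sum_sub_distrib] at key
  linarith [key]

private lemma f_base0 (k : ℕ) (x : ℝ) : f 0 k x = g 0 k x := by
  cases k with
  | zero =>
      rw [f, g]
      rw [show tilings 0 = {[]} from by rw [tilings]]
      rw [Finset.filter_singleton, if_pos (by simp), Finset.sum_singleton]
      simp
  | succ k =>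
      rw [f, g]
      rw [show tilings 0 = {[]} from by rw [tilings]]
      rw [Finset.filter_singleton]
      rw [if_neg (by simp)]
      rw [Finset.sum_empty]
      symm
      apply Finset.sum_eq_zero
      intro j hj
      rw [show (0 : ℕ) - (k+1) - j = 0 from by omega,
        Nat.choose_eq_zero_of_lt (Nat.succ_pos k)]
      simp

private lemma f_base1 (k : ℕ) (x : ℝ) : f 1 k x = g 1 k x := by
  cases k with
  | zero =>
      rw [f, g]
      rw [show tilings 1 = {[1]} from by rw [tilings]]
      rw [Finset.filter_singleton, if_pos (by simp), Finset.sum_singleton]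
      simp [List.count_cons]
  | succ k =>
      rw [f, g]
      rw [show tilings 1 = {[1]} from by rw [tilings]]
      rw [Finset.filter_singleton]
      rw [if_neg (by simp)]
      rw [Finset.sum_empty]
      symm
      apply Finset.sum_eq_zero
      intro j hj
      rw [show (1 : ℕ) - (k+1) - j = 0 from by omega,
        Nat.choose_eq_zero_of_lt (Nat.succ_pos k)]
      simp

private lemma f_base2 (k : ℕ) (x : ℝ) : f 2 k x = g 2 k x := by
  match k with
  | 0 =>
      rw [f, g]
      rw [show tilings 2 = {[1,1],[2]} from by rw [tilings]]
      rw [Finset.filter_insert, if_pos (by simp), Finset.filter_singleton, if_neg (by simp)]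
      simp
  | 1 =>
      rw [f, g]
      rw [show tilings 2 = {[1,1],[2]} from by rw [tilings]]
      rw [Finset.filter_insert, if_neg (by simp), Finset.filter_singleton, if_pos (by simp)]
      rw [Finset.sum_singleton, Finset.sum_range_succ, Finset.sum_range_one]
      norm_num
  | (k+2) =>
      rw [f, g]
      rw [show tilings 2 = {[1,1],[2]} from by rw [tilings]]
      rw [Finset.filter_insert, if_neg (by simp), Finset.filter_singleton, if_neg (by simp)]
      rw [Finset.sum_empty]
      symm
      apply Finset.sum_eq_zero
      intro j hj
      rw [show (2 : ℕ) - (k+2) - j = 0 from by omega,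
        Nat.choose_eq_zero_of_lt (Nat.succ_pos (k+1))]
      simp

private lemma f_eq_g (n : ℕ) : ∀ k x, f n k x = g n k x := by
  induction n using Nat.strong_induction_on with
  | _ n ih =>
    match n, ih with
    | 0, _ => exact f_base0
    | 1, _ => exact f_base1
    | 2, _ => exact f_base2
    | (m+3), ih =>
      intro k x
      cases k with
      | zero => rw [f_rec0, g_rec0, ih (m+2) (by omega)]
      | succ k =>
          rw [f_recS, g_recS, ih (m+2) (by omega), ih (m+1) (by omega), ih m (by omega)]

/-- A tiling of length `n` is a composition of `n` all of whose parts are at most `3`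
(so parts lie in `{1,2,3}`: squares, dominos, trominos).  The total weight
`x^(2δ(λ)+ν(λ))` over all tilings `λ` of length `n` with exactly `k` longer pieces
(parts `≥ 2`) equals `∑_{j=0}^{k} C(k,j) C(n-k-j, k) x^{2n-3(k+j)}`; here `δ` counts
squares and `ν` counts dominos. -/
theorem sum_tilings_exactly_k_longer (n k : ℕ) (hk : k ≤ n / 2) (x : ℝ) :
    ∑ c ∈ Finset.univ.filter (fun c : Composition n =>
        (∀ b ∈ c.blocks, b ≤ 3) ∧ c.blocks.countP (fun b => 2 ≤ b) = k),
      x ^ (2 * c.blocks.count 1 + c.blocks.count 2) =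
    ∑ j ∈ Finset.range (k + 1),
      (Nat.choose k j : ℝ) * (Nat.choose (n - k - j) k : ℝ) * x ^ (2 * n - 3 * (k + j)) := by
  have h := f_eq_g n k x
  rw [g] at h
  rw [← h, f]
  refine Finset.sum_bij' (fun (c : Composition n) _ => c.blocks)
    (fun l hl => ⟨l, fun {i} hi => (((mem_tilings n l).1 (Finset.mem_filter.1 hl).1).2 i hi).1,
        ((mem_tilings n l).1 (Finset.mem_filter.1 hl).1).1⟩)
    ?_ ?_ ?_ ?_ ?_
  · intro c hc
    rw [Finset.mem_filter] at hc ⊢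
    obtain ⟨-, h3, hcnt⟩ := hc
    exact ⟨(mem_tilings n c.blocks).2 ⟨c.blocks_sum, fun b hb => ⟨c.blocks_pos hb, h3 b hb⟩⟩, hcnt⟩
  · intro l hl
    rw [Finset.mem_filter] at hl ⊢
    exact ⟨Finset.mem_univ _, fun b hb => (((mem_tilings n l).1 hl.1).2 b hb).2, hl.2⟩
  · intro c hc; rfl
  · intro l hl; rfl
  · intro c hc; rfl
end

section
/- For all natural numbers n and s with n ≥ 2s+1 and every real number x, T_{n+3}^{(s)}(x) = x^2 T_{n+2}^{(s)}(x) + x T_{n+1}^{(s)}(x) + T_n^{(s)}(x) − ( x·B(n−s, s)(x) + B(n−1−s, s)(x) ). -/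
/-- `B(n,i)(x) = ∑_{j=0}^{i} C(i,j) C(n-j, i) x^{2n-i-3j}`. -/
def Bpoly (n i : ℕ) (x : ℝ) : ℝ :=
  ∑ j ∈ Finset.range (i + 1),
    (Nat.choose i j : ℝ) * (Nat.choose (n - j) i : ℝ) * x ^ (2 * n - i - 3 * j)

open Finset

lemma row_split (n i : ℕ) (x : ℝ) (hn : 1 ≤ n) :
    ∑ j ∈ range (i + 2),
        ((i+1).choose j : ℝ) * ((n - i - j).choose i : ℝ) * x ^ (2*n + 1 - 3*(i+j))
    = x * (∑ j ∈ range (i + 1),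
          (i.choose j : ℝ) * ((n - i - j).choose i : ℝ) * x ^ (2*n - 3*(i+j)))
      + ∑ j ∈ range (i + 1),
          (i.choose j : ℝ) * ((n - 1 - i - j).choose i : ℝ) * x ^ (2*(n-1) - 3*(i+j)) := by
  have hpeel : ∑ j ∈ range (i + 2),
      ((i+1).choose j : ℝ) * ((n - i - j).choose i : ℝ) * x ^ (2*n + 1 - 3*(i+j))
      = (∑ j ∈ range (i + 1),
          ((i+1).choose (j+1) : ℝ) * ((n - i - (j+1)).choose i : ℝ) * x ^ (2*n + 1 - 3*(i+(j+1))))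
        + ((i+1).choose 0 : ℝ) * ((n - i - 0).choose i : ℝ) * x ^ (2*n + 1 - 3*(i+0)) :=
    Finset.sum_range_succ' _ (i+1)
  rw [hpeel]
  have hsplit : ∀ j ∈ range (i+1),
      ((i+1).choose (j+1) : ℝ) * ((n - i - (j+1)).choose i : ℝ) * x ^ (2*n + 1 - 3*(i+(j+1)))
      = (i.choose j : ℝ) * ((n - 1 - i - j).choose i : ℝ) * x ^ (2*(n-1) - 3*(i+j))
        + (i.choose (j+1) : ℝ) * ((n - i - (j+1)).choose i : ℝ) * x ^ (2*n + 1 - 3*(i+(j+1))) := by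
    intro j _
    rw [Nat.choose_succ_succ i j]
    push_cast
    rw [show n - i - (j+1) = n - 1 - i - j by omega,
        show 2*n + 1 - 3*(i+(j+1)) = 2*(n-1) - 3*(i+j) by omega]
    ring
  rw [Finset.sum_congr rfl hsplit, Finset.sum_add_distrib]
  have hback : (∑ j ∈ range (i + 1),
      (i.choose (j+1) : ℝ) * ((n - i - (j+1)).choose i : ℝ) * x ^ (2*n + 1 - 3*(i+(j+1))))
      + ((i+1).choose 0 : ℝ) * ((n - i - 0).choose i : ℝ) * x ^ (2*n + 1 - 3*(i+0))
      = ∑ j ∈ range (i + 2),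
          (i.choose j : ℝ) * ((n - i - j).choose i : ℝ) * x ^ (2*n + 1 - 3*(i+j)) := by
    rw [Finset.sum_range_succ' (fun j => (i.choose j : ℝ) * ((n - i - j).choose i : ℝ)
        * x ^ (2*n + 1 - 3*(i+j))) (i+1)]
    norm_num
  have hdrop : ∑ j ∈ range (i + 2),
      (i.choose j : ℝ) * ((n - i - j).choose i : ℝ) * x ^ (2*n + 1 - 3*(i+j))
      = ∑ j ∈ range (i + 1),
          (i.choose j : ℝ) * ((n - i - j).choose i : ℝ) * x ^ (2*n + 1 - 3*(i+j)) := by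
    rw [Finset.sum_range_succ]
    simp [Nat.choose_succ_self]
  have hx : ∑ j ∈ range (i + 1),
      (i.choose j : ℝ) * ((n - i - j).choose i : ℝ) * x ^ (2*n + 1 - 3*(i+j))
      = x * ∑ j ∈ range (i + 1),
          (i.choose j : ℝ) * ((n - i - j).choose i : ℝ) * x ^ (2*n - 3*(i+j)) := by
    rw [Finset.mul_sum]
    refine Finset.sum_congr rfl fun j hj => ?_
    have hj' : j ≤ i := by
      have := Finset.mem_range.mp hj; omega
    by_cases hc : (n - i - j).choose i = 0
    · simp [hc]
    · have hle : i ≤ n - i - j := by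
        by_contra hlt; exact hc (Nat.choose_eq_zero_of_lt (by omega))
      rw [show 2*n + 1 - 3*(i+j) = (2*n - 3*(i+j)) + 1 by omega, pow_succ]
      ring
  linarith [hback, hdrop, hx]

lemma pascal_row (n s i : ℕ) (x : ℝ) (hn : 2 * s + 1 ≤ n) (hi : i + 1 ≤ s) :
    ∑ j ∈ range (i + 2),
        ((i+1).choose j : ℝ) * ((n + 2 - (i+1) - j).choose (i+1) : ℝ)
          * x ^ (2*(n+2) - 3*((i+1)+j))
    = x ^ 2 * ∑ j ∈ range (i + 2),
        ((i+1).choose j : ℝ) * ((n + 1 - (i+1) - j).choose (i+1) : ℝ)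
          * x ^ (2*(n+1) - 3*((i+1)+j))
      + ∑ j ∈ range (i + 2),
        ((i+1).choose j : ℝ) * ((n - i - j).choose i : ℝ) * x ^ (2*n + 1 - 3*(i+j)) := by
  rw [Finset.mul_sum, ← Finset.sum_add_distrib]
  refine Finset.sum_congr rfl fun j hj => ?_
  have hj' : j ≤ i + 1 := by
    have := Finset.mem_range.mp hj; omega
  rw [show n + 2 - (i+1) - j = (n - i - j) + 1 by omega,
      show n + 1 - (i+1) - j = n - i - j by omega,
      Nat.choose_succ_succ (n - i - j) i]
  push_cast
  rw [show 2*(n+2) - 3*((i+1)+j) = 2*n + 1 - 3*(i+j) by omega]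
  by_cases hb : (n - i - j).choose (i+1) = 0
  · rw [hb]; push_cast; ring
  · have hle : i + 1 ≤ n - i - j := by
      by_contra hlt; exact hb (Nat.choose_eq_zero_of_lt (by omega))
    rw [show 2*n + 1 - 3*(i+j) = 2 + (2*(n+1) - 3*((i+1)+j)) by omega, pow_add]
    ring

/-- For `n ≥ 2s+1`:
`T_{n+3}^{(s)}(x) = x^2 T_{n+2}^{(s)}(x) + x T_{n+1}^{(s)}(x) + T_n^{(s)}(x)
  − (x B(n−s,s)(x) + B(n−1−s,s)(x))`. -/
theorem incTrib_recurrence (n s : ℕ) (hn : 2 * s + 1 ≤ n) (x : ℝ) :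
    incTrib (n + 3) s x =
      x ^ 2 * incTrib (n + 2) s x + x * incTrib (n + 1) s x + incTrib n s x -
        (x * Bpoly (n - s) s x + Bpoly (n - 1 - s) s x) := by
  -- leftover sum
  set L : ℕ → ℝ := fun i => ∑ j ∈ range (i + 2),
      ((i+1).choose j : ℝ) * ((n - i - j).choose i : ℝ) * x ^ (2*n + 1 - 3*(i+j)) with hL
  -- Step 1: T_{n+3} = x² T_{n+2} + ∑_{i<s} L i
  have step1 : incTrib (n + 3) s x = x ^ 2 * incTrib (n + 2) s x + ∑ i ∈ range s, L i := by
    unfold incTrib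
    simp only [show n + 3 - 1 = n + 2 by omega, show n + 2 - 1 = n + 1 by omega]
    rw [Finset.mul_sum]
    have hG : ∑ i ∈ range s, L i
        = ∑ i ∈ range (s + 1), (if i = 0 then 0 else L (i - 1)) := by
      rw [Finset.sum_range_succ' (fun i => if i = 0 then (0:ℝ) else L (i - 1)) s]
      simp
    rw [hG, ← Finset.sum_add_distrib]
    refine Finset.sum_congr rfl fun i hi => ?_
    have hi' : i ≤ s := by
      have := Finset.mem_range.mp hi; omega
    match i with
    | 0 =>
      rw [Finset.sum_range_one, Finset.sum_range_one]
      rw [show 2*(n+2) - 3*(0+0) = 2 + (2*(n+1) - 3*(0+0)) by omega, pow_add]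
      norm_num
    | i + 1 =>
      simp only [Nat.succ_ne_zero, if_false, Nat.add_sub_cancel]
      exact pascal_row n s i x hn hi'
  -- Step 2: reshape each L i
  have step2 : ∑ i ∈ range s, L i
      = x * (∑ i ∈ range s, ∑ j ∈ range (i + 1),
            (i.choose j : ℝ) * ((n - i - j).choose i : ℝ) * x ^ (2*n - 3*(i+j)))
        + ∑ i ∈ range s, ∑ j ∈ range (i + 1),
            (i.choose j : ℝ) * ((n - 1 - i - j).choose i : ℝ) * x ^ (2*(n-1) - 3*(i+j)) := by
    rw [Finset.mul_sum, ← Finset.sum_add_distrib]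
    exact Finset.sum_congr rfl fun i _ => row_split n i x (by omega)
  -- Step 3: identify with T_{n+1} minus B(n-s,s)
  have step3 : ∑ i ∈ range s, ∑ j ∈ range (i + 1),
        (i.choose j : ℝ) * ((n - i - j).choose i : ℝ) * x ^ (2*n - 3*(i+j))
      = incTrib (n + 1) s x - Bpoly (n - s) s x := by
    have hT : incTrib (n + 1) s x
        = (∑ i ∈ range s, ∑ j ∈ range (i + 1),
            (i.choose j : ℝ) * ((n - i - j).choose i : ℝ) * x ^ (2*n - 3*(i+j)))
          + ∑ j ∈ range (s + 1),
            (s.choose j : ℝ) * ((n - s - j).choose s : ℝ) * x ^ (2*n - 3*(s+j)) := by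
      unfold incTrib
      simp only [Nat.add_sub_cancel]
      exact Finset.sum_range_succ _ s
    have hB : Bpoly (n - s) s x
        = ∑ j ∈ range (s + 1),
            (s.choose j : ℝ) * ((n - s - j).choose s : ℝ) * x ^ (2*n - 3*(s+j)) := by
      unfold Bpoly
      refine Finset.sum_congr rfl fun j _ => ?_
      rw [show 2*(n-s) - s - 3*j = 2*n - 3*(s+j) by omega]
    rw [hT, hB]; ring
  -- Step 4: identify with T_n minus B(n-1-s,s)
  have step4 : ∑ i ∈ range s, ∑ j ∈ range (i + 1),
        (i.choose j : ℝ) * ((n - 1 - i - j).choose i : ℝ) * x ^ (2*(n-1) - 3*(i+j))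
      = incTrib n s x - Bpoly (n - 1 - s) s x := by
    have hT : incTrib n s x
        = (∑ i ∈ range s, ∑ j ∈ range (i + 1),
            (i.choose j : ℝ) * ((n - 1 - i - j).choose i : ℝ) * x ^ (2*(n-1) - 3*(i+j)))
          + ∑ j ∈ range (s + 1),
            (s.choose j : ℝ) * ((n - 1 - s - j).choose s : ℝ) * x ^ (2*(n-1) - 3*(s+j)) := by
      unfold incTrib
      exact Finset.sum_range_succ _ s
    have hB : Bpoly (n - 1 - s) s x
        = ∑ j ∈ range (s + 1),
            (s.choose j : ℝ) * ((n - 1 - s - j).choose s : ℝ) * x ^ (2*(n-1) - 3*(s+j)) := by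
      unfold Bpoly
      refine Finset.sum_congr rfl fun j _ => ?_
      rw [show 2*(n-1-s) - s - 3*j = 2*(n-1) - 3*(s+j) by omega]
    rw [hT, hB]; ring
  rw [step1, step2, step3, step4]; ring
end

section
/- For all natural numbers h ≥ 1, s ≥ 0, n with n ≥ 2s+2, and every real number x, (1+x^3) · ∑_{i=0}^{h-1} x^{2(h-i-1)} T_{n+i}^{(s)}(x) = T_{n+h+2}^{(s+1)}(x) − x^{2h} T_{n+2}^{(s+1)}(x) + x^{2h+1} T_n^{(s)}(x) − x T_{n+h}^{(s)}(x). -/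
open Finset

lemma pascal_cast (a b : ℕ) :
    (((a+1).choose (b+1) : ℕ) : ℝ) = (a.choose (b+1) : ℝ) + (a.choose b : ℝ) := by
  rw [Nat.choose_succ_succ]; push_cast; ring

lemma per_i (m i : ℕ) (hmi : 2 * i + 2 ≤ m) (x : ℝ) :
    (∑ j ∈ range (i+1+1), ((i+1).choose j : ℝ) * (((m + 2 - (i+1) - j).choose (i+1) : ℕ) : ℝ) * x ^ (2*(m+2) - 3*((i+1)+j)))
      = (∑ j ∈ range (i+1+1), x^2 * (((i+1).choose j : ℝ) * (((m + 1 - (i+1) - j).choose (i+1) : ℕ) : ℝ) * x ^ (2*(m+1) - 3*((i+1)+j))))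
      + (∑ j ∈ range (i+1), x * ((i.choose j : ℝ) * (((m - i - j).choose i : ℕ) : ℝ) * x ^ (2*m - 3*(i+j))))
      + (∑ j ∈ range (i+1), (i.choose j : ℝ) * (((m - 1 - i - j).choose i : ℕ) : ℝ) * x ^ (2*(m-1) - 3*(i+j))) := by
  have key1 : ∀ j ∈ range (i+1+1),
      ((i+1).choose j : ℝ) * (((m + 2 - (i+1) - j).choose (i+1) : ℕ) : ℝ) * x ^ (2*(m+2) - 3*((i+1)+j))
        = x^2 * (((i+1).choose j : ℝ) * (((m + 1 - (i+1) - j).choose (i+1) : ℕ) : ℝ) * x ^ (2*(m+1) - 3*((i+1)+j)))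
          + ((i+1).choose j : ℝ) * (((m - i - j).choose i : ℕ) : ℝ) * x ^ (2*(m+2) - 3*((i+1)+j)) := by
    intro j hj
    rw [mem_range] at hj
    have h1 : m + 2 - (i+1) - j = (m - i - j) + 1 := by omega
    have h2 : m + 1 - (i+1) - j = m - i - j := by omega
    rw [h1, h2, Nat.choose_succ_succ]
    push_cast
    by_cases hz : (m - i - j).choose (i+1) = 0
    · simp [hz]
    · have hle : i + 1 ≤ m - i - j := by
        by_contra hlt
        exact hz (Nat.choose_eq_zero_of_lt (by omega))
      have he : 2*(m+2) - 3*((i+1)+j) = 2 + (2*(m+1) - 3*((i+1)+j)) := by omega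
      rw [he, pow_add]
      ring
  have split : ∀ j ∈ range (i+1+1),
      ((i+1).choose j : ℝ) * (((m - i - j).choose i : ℕ) : ℝ) * x ^ (2*(m+2) - 3*((i+1)+j))
        = (i.choose j : ℝ) * (((m - i - j).choose i : ℕ) : ℝ) * x ^ (2*(m+2) - 3*((i+1)+j))
          + (((i+1).choose j : ℝ) - (i.choose j : ℝ)) * (((m - i - j).choose i : ℕ) : ℝ) * x ^ (2*(m+2) - 3*((i+1)+j)) := by
    intro j _; ring
  have hP : (∑ j ∈ range (i+1+1), (i.choose j : ℝ) * (((m - i - j).choose i : ℕ) : ℝ) * x ^ (2*(m+2) - 3*((i+1)+j)))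
      = ∑ j ∈ range (i+1), x * ((i.choose j : ℝ) * (((m - i - j).choose i : ℕ) : ℝ) * x ^ (2*m - 3*(i+j))) := by
    rw [Finset.sum_range_succ, Nat.choose_eq_zero_of_lt (by omega : i < i+1)]
    simp only [Nat.cast_zero, zero_mul, add_zero]
    refine Finset.sum_congr rfl ?_
    intro j hj
    rw [mem_range] at hj
    by_cases hz : (m - i - j).choose i = 0
    · simp [hz]
    · have hle : i ≤ m - i - j := by
        by_contra hlt
        exact hz (Nat.choose_eq_zero_of_lt (by omega))
      have he : 2*(m+2) - 3*((i+1)+j) = 1 + (2*m - 3*(i+j)) := by omega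
      rw [he, pow_add]
      ring
  have hQ : (∑ j ∈ range (i+1+1), (((i+1).choose j : ℝ) - (i.choose j : ℝ)) * (((m - i - j).choose i : ℕ) : ℝ) * x ^ (2*(m+2) - 3*((i+1)+j)))
      = ∑ j ∈ range (i+1), (i.choose j : ℝ) * (((m - 1 - i - j).choose i : ℕ) : ℝ) * x ^ (2*(m-1) - 3*(i+j)) := by
    rw [Finset.sum_range_succ']
    simp only [Nat.choose_zero_right, Nat.cast_one, sub_self, zero_mul, add_zero]
    refine Finset.sum_congr rfl ?_
    intro j hj
    rw [mem_range] at hj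
    have hc : ((i+1).choose (j+1) : ℝ) - (i.choose (j+1) : ℝ) = (i.choose j : ℝ) := by
      rw [pascal_cast]; ring
    have h1 : m - i - (j+1) = m - 1 - i - j := by omega
    have he : 2*(m+2) - 3*((i+1)+(j+1)) = 2*(m-1) - 3*(i+j) := by omega
    rw [hc, h1, he]
  rw [Finset.sum_congr rfl key1, Finset.sum_add_distrib, Finset.sum_congr rfl split,
    Finset.sum_add_distrib, hP, hQ]
  ring

lemma keyrec (m s : ℕ) (hm : 2 * s + 2 ≤ m) (x : ℝ) :
    incTrib (m+3) (s+1) x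
      = x^2 * incTrib (m+2) (s+1) x + x * incTrib (m+1) s x + incTrib m s x := by
  unfold incTrib
  simp only [show m+3-1 = m+2 by omega, show m+2-1 = m+1 by omega, show m+1-1 = m by omega,
    Finset.mul_sum]
  rw [Finset.sum_range_succ'
      (fun i => ∑ j ∈ range (i+1), (i.choose j : ℝ) * (((m + 2 - i - j).choose i : ℕ) : ℝ) * x ^ (2*(m+2) - 3*(i+j))) (s+1),
    Finset.sum_range_succ'
      (fun i => ∑ j ∈ range (i+1), x^2 * ((i.choose j : ℝ) * (((m + 1 - i - j).choose i : ℕ) : ℝ) * x ^ (2*(m+1) - 3*(i+j)))) (s+1)]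
  have h0 : (∑ j ∈ range (0+1), ((0:ℕ).choose j : ℝ) * (((m + 2 - 0 - j).choose 0 : ℕ) : ℝ) * x ^ (2*(m+2) - 3*(0+j)))
      = x ^ (2*(m+2)) := by simp
  have h0' : (∑ j ∈ range (0+1), x^2 * (((0:ℕ).choose j : ℝ) * (((m + 1 - 0 - j).choose 0 : ℕ) : ℝ) * x ^ (2*(m+1) - 3*(0+j))))
      = x ^ (2*(m+2)) := by
    simp [← pow_add]
    congr 1
    omega
  rw [h0, h0']
  have hmain : ∀ i ∈ range (s+1),
      (∑ j ∈ range (i+1+1), ((i+1).choose j : ℝ) * (((m + 2 - (i+1) - j).choose (i+1) : ℕ) : ℝ) * x ^ (2*(m+2) - 3*((i+1)+j)))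
        = (∑ j ∈ range (i+1+1), x^2 * (((i+1).choose j : ℝ) * (((m + 1 - (i+1) - j).choose (i+1) : ℕ) : ℝ) * x ^ (2*(m+1) - 3*((i+1)+j))))
          + (∑ j ∈ range (i+1), x * ((i.choose j : ℝ) * (((m - i - j).choose i : ℕ) : ℝ) * x ^ (2*m - 3*(i+j))))
          + (∑ j ∈ range (i+1), (i.choose j : ℝ) * (((m - 1 - i - j).choose i : ℕ) : ℝ) * x ^ (2*(m-1) - 3*(i+j))) := by
    intro i hi
    rw [mem_range] at hi
    exact per_i m i (by omega) x
  rw [Finset.sum_congr rfl hmain]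
  simp only [Finset.sum_add_distrib]
  ring

/-- For `h ≥ 1` and `n ≥ 2s+2`:
`(1+x^3) ∑_{i=0}^{h-1} x^{2(h-i-1)} T_{n+i}^{(s)}(x)
  = T_{n+h+2}^{(s+1)}(x) − x^{2h} T_{n+2}^{(s+1)}(x) + x^{2h+1} T_n^{(s)}(x) − x T_{n+h}^{(s)}(x)`. -/
theorem incTrib_identity1 (h s n : ℕ) (hh : 1 ≤ h) (hn : 2 * s + 2 ≤ n) (x : ℝ) :
    (1 + x ^ 3) * ∑ i ∈ Finset.range h, x ^ (2 * (h - i - 1)) * incTrib (n + i) s x =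
      incTrib (n + h + 2) (s + 1) x - x ^ (2 * h) * incTrib (n + 2) (s + 1) x +
        x ^ (2 * h + 1) * incTrib n s x - x * incTrib (n + h) s x := by
  induction h with
  | zero => omega
  | succ k ih =>
    rcases Nat.eq_zero_or_pos k with rfl | hk
    · -- base case h = 1
      have hrec := keyrec n s hn x
      norm_num [Finset.sum_range_one]
      rw [show n + 1 + 2 = n + 3 by omega]
      linear_combination -hrec
    · have ihh := ih hk
      have hsum : (∑ i ∈ Finset.range (k+1), x ^ (2 * (k + 1 - i - 1)) * incTrib (n + i) s x)
          = x^2 * (∑ i ∈ Finset.range k, x ^ (2 * (k - i - 1)) * incTrib (n + i) s x)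
            + incTrib (n + k) s x := by
        rw [Finset.sum_range_succ, Finset.mul_sum]
        congr 1
        · refine Finset.sum_congr rfl ?_
          intro i hi
          rw [mem_range] at hi
          rw [show 2 * (k + 1 - i - 1) = 2 + 2 * (k - i - 1) by omega, pow_add]
          ring
        · rw [show 2 * (k + 1 - k - 1) = 0 by omega]
          ring
      have hrec := keyrec (n + k) s (by omega) x
      rw [hsum, show n + (k + 1) + 2 = n + k + 3 by omega, show n + (k + 1) = n + k + 1 by omega]
      linear_combination (x^2) * ihh - hrec
end

section
/- For every natural number n ≥ 1 and every real number x, with ℓ = ⌊n/2⌋, ∑_{s=0}^{ℓ} T_{n+1}^{(s)}(x) = (ℓ+1) T_{n+1}(x) − ∑_{i=0}^{ℓ} ∑_{j=0}^{i} i · C(i,j) C(n-i-j, i) x^{2n-3(i+j)}. -/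
/-- The tribonacci polynomials. -/
def tribPoly : ℕ → ℝ → ℝ
  | 0, _ => 0
  | 1, _ => 1
  | 2, x => x ^ 2
  | (n + 3), x => x ^ 2 * tribPoly (n + 2) x + x * tribPoly (n + 1) x + tribPoly n x

open Finset

/-- term of the closed form for `tribPoly (n+1)`. -/
def aT (x : ℝ) (n i j : ℕ) : ℝ :=
  (Nat.choose i j : ℝ) * (Nat.choose (n - i - j) i : ℝ) * x ^ (2 * n - 3 * (i + j))

def GT (x : ℝ) (n : ℕ) : ℝ :=
  ∑ i ∈ range (n / 2 + 1), ∑ j ∈ range (i + 1), aT x n i j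

lemma aT_zero {x : ℝ} {n i j : ℕ} (h : n < 2 * i + j ∨ i < j) : aT x n i j = 0 := by
  have h' : i < j ∨ n - i - j < i := by omega
  rcases h' with h' | h'
  · simp [aT, Nat.choose_eq_zero_of_lt h']
  · simp [aT, Nat.choose_eq_zero_of_lt h']

lemma rect_eq (x : ℝ) (n M K : ℕ) (hM : n / 2 + 1 ≤ M) (hK : n / 2 + 1 ≤ K) :
    ∑ i ∈ range M, ∑ j ∈ range K, aT x n i j = GT x n := by
  have h1 : ∑ i ∈ range (n / 2 + 1), ∑ j ∈ range K, aT x n i j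
      = ∑ i ∈ range M, ∑ j ∈ range K, aT x n i j := by
    refine Finset.sum_subset (Finset.range_subset_range.2 hM) fun i _ hi => ?_
    refine Finset.sum_eq_zero fun j _ => aT_zero ?_
    simp only [Finset.mem_range, not_lt] at hi
    omega
  rw [← h1, GT]
  refine Finset.sum_congr rfl fun i hi => ?_
  simp only [Finset.mem_range] at hi
  refine (Finset.sum_subset (Finset.range_subset_range.2 (show i + 1 ≤ K by omega))
    fun j _ hj => aT_zero (Or.inr ?_)).symm
  simp only [Finset.mem_range, not_lt] at hj
  omega

/-- `P`-terms -/
def Pt (x : ℝ) (n i j : ℕ) : ℝ :=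
  (Nat.choose i j : ℝ) * (Nat.choose (n + 2 - i - j) i : ℝ) * x ^ (2 * (n + 3) - 3 * (i + j))

/-- `Q`-terms -/
def Qt (x : ℝ) (n i j : ℕ) : ℝ :=
  (Nat.choose (i + 1) j : ℝ) * (Nat.choose (n + 1 - i - j) i : ℝ) *
    x ^ (2 * (n + 3) - 3 * ((i + 1) + j))

/-- `R`-terms -/
def Rt (x : ℝ) (n i j : ℕ) : ℝ :=
  (Nat.choose i j : ℝ) * (Nat.choose (n + 1 - i - j) i : ℝ) *
    x ^ (2 * (n + 3) - 3 * (i + j + 1))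

lemma pasc1 (n i j : ℕ) :
    Nat.choose (i + 1) j * Nat.choose (n + 3 - (i + 1) - j) (i + 1)
      = Nat.choose (i + 1) j * Nat.choose (n + 2 - (i + 1) - j) (i + 1)
        + Nat.choose (i + 1) j * Nat.choose (n + 1 - i - j) i := by
  by_cases h : i + 1 + j ≤ n + 2
  · have h1 : n + 3 - (i + 1) - j = (n + 2 - (i + 1) - j) + 1 := by omega
    have h2 : n + 1 - i - j = n + 2 - (i + 1) - j := by omega
    rw [h1, h2, Nat.choose_succ_succ']
    ring
  · by_cases hi : i = 0
    · subst hi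
      have hj : 1 < j := by omega
      simp [Nat.choose_eq_zero_of_lt hj]
    · have e1 : n + 3 - (i + 1) - j = 0 ∨ Nat.choose (n + 3 - (i+1) - j) (i+1) = 0 := by
        left; omega
      have h1 : n + 3 - (i + 1) - j < i + 1 := by omega
      have h2 : n + 2 - (i + 1) - j < i + 1 := by omega
      have h3 : n + 1 - i - j < i := by omega
      rw [Nat.choose_eq_zero_of_lt h1, Nat.choose_eq_zero_of_lt h2, Nat.choose_eq_zero_of_lt h3]
      simp

lemma hrow (x : ℝ) (n i j : ℕ) :
    aT x (n + 3) (i + 1) j = Pt x n (i + 1) j + Qt x n i j := by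
  have hp := pasc1 n i j
  have he1 : n + 3 - (i + 1) - j = n + 3 - (i + 1) - j := rfl
  unfold aT Pt Qt
  have hcast : ((Nat.choose (i+1) j : ℕ) : ℝ) * (Nat.choose (n + 3 - (i + 1) - j) (i+1) : ℝ)
      = ((Nat.choose (i+1) j * Nat.choose (n + 3 - (i + 1) - j) (i+1) : ℕ) : ℝ) := by
    push_cast; ring
  rw [hcast, hp]
  have h2 : n + 2 - (i + 1) - j = n + 2 - (i + 1) - j := rfl
  push_cast
  ring

lemma hrow0 (x : ℝ) (n j : ℕ) : aT x (n + 3) 0 j = Pt x n 0 j := by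
  simp [aT, Pt]

lemma hP (x : ℝ) (n i j : ℕ) : Pt x n i j = x ^ 2 * aT x (n + 2) i j := by
  unfold Pt aT
  by_cases hij : i < j
  · simp [Nat.choose_eq_zero_of_lt hij]
  by_cases h2 : n + 2 - i - j < i
  · simp [Nat.choose_eq_zero_of_lt h2]
  have he : 2 * (n + 3) - 3 * (i + j) = 2 + (2 * (n + 2) - 3 * (i + j)) := by omega
  rw [he, pow_add]
  ring

lemma hQsplit (x : ℝ) (n i j : ℕ) :
    Qt x n i (j + 1) = aT x n i j + Rt x n i (j + 1) := by
  unfold Qt aT Rt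
  have he : 2 * (n + 3) - 3 * ((i + 1) + (j + 1)) = 2 * n - 3 * (i + j) := by omega
  have he2 : 2 * (n + 3) - 3 * (i + (j + 1) + 1) = 2 * n - 3 * (i + j) := by omega
  have hc : n + 1 - i - (j + 1) = n - i - j := by omega
  rw [he, he2, hc, Nat.choose_succ_succ]
  push_cast
  ring

lemma hQ0 (x : ℝ) (n i : ℕ) : Qt x n i 0 = Rt x n i 0 := by
  simp [Qt, Rt]

lemma hR (x : ℝ) (n i j : ℕ) : Rt x n i j = x * aT x (n + 1) i j := by
  unfold Rt aT
  by_cases hij : i < j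
  · simp [Nat.choose_eq_zero_of_lt hij]
  by_cases h2 : n + 1 - i - j < i
  · simp [Nat.choose_eq_zero_of_lt h2]
  have he : 2 * (n + 3) - 3 * (i + j + 1) = 1 + (2 * (n + 1) - 3 * (i + j)) := by omega
  rw [he, pow_add]
  ring

lemma GT_rec (x : ℝ) (n : ℕ) :
    GT x (n + 3) = x ^ 2 * GT x (n + 2) + x * GT x (n + 1) + GT x n := by
  rw [← rect_eq x (n + 3) (n + 6) (n + 6) (by omega) (by omega)]
  rw [Finset.sum_range_succ' (fun i => ∑ j ∈ range (n + 6), aT x (n + 3) i j) (n + 5)]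
  have hrows : ∑ i ∈ range (n + 5), ∑ j ∈ range (n + 6), aT x (n + 3) (i + 1) j
      = ∑ i ∈ range (n + 5), ∑ j ∈ range (n + 6), (Pt x n (i + 1) j + Qt x n i j) := by
    refine Finset.sum_congr rfl fun i _ => Finset.sum_congr rfl fun j _ => hrow x n i j
  have hrow0s : ∑ j ∈ range (n + 6), aT x (n + 3) 0 j = ∑ j ∈ range (n + 6), Pt x n 0 j :=
    Finset.sum_congr rfl fun j _ => hrow0 x n j
  rw [hrows, hrow0s]
  have hsplit : ∑ i ∈ range (n + 5), ∑ j ∈ range (n + 6), (Pt x n (i + 1) j + Qt x n i j)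
      = (∑ i ∈ range (n + 5), ∑ j ∈ range (n + 6), Pt x n (i + 1) j)
        + ∑ i ∈ range (n + 5), ∑ j ∈ range (n + 6), Qt x n i j := by
    rw [← Finset.sum_add_distrib]
    exact Finset.sum_congr rfl fun i _ => Finset.sum_add_distrib
  rw [hsplit]
  have hPsum : (∑ i ∈ range (n + 5), ∑ j ∈ range (n + 6), Pt x n (i + 1) j)
      + ∑ j ∈ range (n + 6), Pt x n 0 j
      = ∑ i ∈ range (n + 6), ∑ j ∈ range (n + 6), Pt x n i j :=
    (Finset.sum_range_succ' (fun i => ∑ j ∈ range (n + 6), Pt x n i j) (n + 5)).symm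
  have hPval : ∑ i ∈ range (n + 6), ∑ j ∈ range (n + 6), Pt x n i j
      = x ^ 2 * GT x (n + 2) := by
    have : ∑ i ∈ range (n + 6), ∑ j ∈ range (n + 6), Pt x n i j
        = x ^ 2 * ∑ i ∈ range (n + 6), ∑ j ∈ range (n + 6), aT x (n + 2) i j := by
      rw [Finset.mul_sum]
      refine Finset.sum_congr rfl fun i _ => ?_
      rw [Finset.mul_sum]
      exact Finset.sum_congr rfl fun j _ => hP x n i j
    rw [this, rect_eq x (n + 2) (n + 6) (n + 6) (by omega) (by omega)]
  have hQsum : ∑ i ∈ range (n + 5), ∑ j ∈ range (n + 6), Qt x n i j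
      = GT x n + x * GT x (n + 1) := by
    have hinner : ∀ i, ∑ j ∈ range (n + 6), Qt x n i j
        = (∑ j ∈ range (n + 5), aT x n i j) + ∑ j ∈ range (n + 6), Rt x n i j := by
      intro i
      rw [Finset.sum_range_succ' (fun j => Qt x n i j) (n + 5)]
      rw [Finset.sum_range_succ' (fun j => Rt x n i j) (n + 5)]
      have : ∑ j ∈ range (n + 5), Qt x n i (j + 1)
          = ∑ j ∈ range (n + 5), (aT x n i j + Rt x n i (j + 1)) :=
        Finset.sum_congr rfl fun j _ => hQsplit x n i j
      rw [this, Finset.sum_add_distrib, hQ0]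
      ring
    rw [Finset.sum_congr rfl fun i _ => hinner i, Finset.sum_add_distrib]
    have h1 : ∑ i ∈ range (n + 5), ∑ j ∈ range (n + 5), aT x n i j = GT x n :=
      rect_eq x n (n + 5) (n + 5) (by omega) (by omega)
    have h2 : ∑ i ∈ range (n + 5), ∑ j ∈ range (n + 6), Rt x n i j
        = x * GT x (n + 1) := by
      have : ∑ i ∈ range (n + 5), ∑ j ∈ range (n + 6), Rt x n i j
          = x * ∑ i ∈ range (n + 5), ∑ j ∈ range (n + 6), aT x (n + 1) i j := by
        rw [Finset.mul_sum]
        refine Finset.sum_congr rfl fun i _ => ?_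
        rw [Finset.mul_sum]
        exact Finset.sum_congr rfl fun j _ => hR x n i j
      rw [this, rect_eq x (n + 1) (n + 5) (n + 6) (by omega) (by omega)]
    rw [h1, h2]
  linear_combination hPsum + hPval + hQsum

lemma trib_eq_GT (x : ℝ) : ∀ n, tribPoly (n + 1) x = GT x n
  | 0 => by norm_num [GT, aT, tribPoly, Finset.sum_range_succ]
  | 1 => by norm_num [GT, aT, tribPoly, Finset.sum_range_succ]
  | 2 => by
      norm_num [GT, aT, tribPoly, Finset.sum_range_succ]
      ring
  | (n + 3) => by
      show tribPoly ((n + 1) + 3) x = GT x (n + 3)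
      rw [tribPoly, trib_eq_GT x (n + 2), trib_eq_GT x (n + 1), trib_eq_GT x n, GT_rec]

lemma sum_partial (m : ℕ) (f : ℕ → ℝ) :
    ∑ s ∈ range m, ∑ i ∈ range (s + 1), f i
      = ∑ i ∈ range m, ((m - i : ℕ) : ℝ) * f i := by
  induction m with
  | zero => simp
  | succ m ih =>
    rw [Finset.sum_range_succ, ih]
    have h1 : ∀ i ∈ range m, ((m + 1 - i : ℕ) : ℝ) * f i = ((m - i : ℕ) : ℝ) * f i + f i := by
      intro i hi
      simp only [Finset.mem_range] at hi
      have hc : m + 1 - i = (m - i) + 1 := by omega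
      rw [hc]
      push_cast
      ring
    have hR : ∑ i ∈ range (m + 1), ((m + 1 - i : ℕ) : ℝ) * f i
        = (∑ i ∈ range m, (((m - i : ℕ) : ℝ) * f i + f i)) + ((m + 1 - m : ℕ) : ℝ) * f m := by
      rw [Finset.sum_range_succ]
      exact congrArg (· + _) (Finset.sum_congr rfl h1)
    rw [hR, Finset.sum_add_distrib, Finset.sum_range_succ f m]
    have h2 : ((m + 1 - m : ℕ) : ℝ) = 1 := by norm_num
    rw [h2]
    ring

/-- For `n ≥ 1`, with `ℓ = ⌊n/2⌋`:
`∑_{s=0}^{ℓ} T_{n+1}^{(s)}(x) = (ℓ+1) T_{n+1}(x)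
  − ∑_{i=0}^{ℓ} ∑_{j=0}^{i} i C(i,j) C(n-i-j, i) x^{2n-3(i+j)}`. -/
theorem sum_incTrib_eq (n : ℕ) (hn : 1 ≤ n) (x : ℝ) :
    ∑ s ∈ Finset.range (n / 2 + 1), incTrib (n + 1) s x =
      ((n / 2 : ℕ) + 1 : ℝ) * tribPoly (n + 1) x -
        ∑ i ∈ Finset.range (n / 2 + 1), ∑ j ∈ Finset.range (i + 1),
          (i : ℝ) * (Nat.choose i j : ℝ) * (Nat.choose (n - i - j) i : ℝ) *
            x ^ (2 * n - 3 * (i + j)) := by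
  have hinc : ∀ s, incTrib (n + 1) s x
      = ∑ i ∈ range (s + 1), ∑ j ∈ range (i + 1), aT x n i j := by
    intro s
    unfold incTrib aT
    simp [Nat.add_sub_cancel]
  have h1 : ∑ s ∈ range (n / 2 + 1), incTrib (n + 1) s x
      = ∑ i ∈ range (n / 2 + 1), ((n / 2 + 1 - i : ℕ) : ℝ)
          * ∑ j ∈ range (i + 1), aT x n i j := by
    rw [Finset.sum_congr rfl fun s _ => hinc s]
    exact sum_partial (n / 2 + 1) _
  rw [h1]
  have h2 : ∀ i ∈ range (n / 2 + 1),
      ((n / 2 + 1 - i : ℕ) : ℝ) * ∑ j ∈ range (i + 1), aT x n i j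
        = ((n / 2 : ℕ) + 1 : ℝ) * (∑ j ∈ range (i + 1), aT x n i j)
          - ∑ j ∈ range (i + 1), (i : ℝ) * Nat.choose i j * Nat.choose (n - i - j) i
              * x ^ (2 * n - 3 * (i + j)) := by
    intro i hi
    simp only [Finset.mem_range] at hi
    have hc : ((n / 2 + 1 - i : ℕ) : ℝ) = ((n / 2 : ℕ) + 1 : ℝ) - (i : ℝ) := by
      have : n / 2 + 1 - i + i = n / 2 + 1 := by omega
      push_cast [Nat.cast_sub (by omega : i ≤ n / 2 + 1)]
      ring
    have hS : (i : ℝ) * ∑ j ∈ range (i + 1), aT x n i j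
        = ∑ j ∈ range (i + 1), (i : ℝ) * Nat.choose i j * Nat.choose (n - i - j) i
            * x ^ (2 * n - 3 * (i + j)) := by
      rw [Finset.mul_sum]
      refine Finset.sum_congr rfl fun j _ => ?_
      simp only [aT]
      ring
    rw [hc, ← hS]
    ring
  rw [Finset.sum_congr rfl h2, Finset.sum_sub_distrib, ← Finset.mul_sum]
  rw [trib_eq_GT x n, GT]
end

section
/- For every natural number n ≥ 1 and every real number x, with ℓ = ⌊n/2⌋, ∑_{s=0}^{ℓ} T_{n+1}^{(s)}(x) = (ℓ+1) T_{n+1}(x) − ∑_{j=1}^{n-1} ( x·T_j(x) + T_{j-1}(x) ) · T_{n-j}(x). -/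
open Finset

noncomputable def fI (x : ℝ) (n i : ℕ) : ℝ :=
  ∑ j ∈ Finset.range (i+1),
    (Nat.choose i j : ℝ) * (Nat.choose (n - i - j) i : ℝ) * x ^ (2*n - 3*(i+j))

lemma fI_zero (x : ℝ) {n i : ℕ} (h : n < 2*i) : fI x n i = 0 := by
  unfold fI
  apply Finset.sum_eq_zero
  intro j hj
  have : (n - i - j).choose i = 0 := Nat.choose_eq_zero_of_lt (by omega)
  simp [this]

lemma fI_zero_idx (x : ℝ) (n : ℕ) : fI x n 0 = x ^ (2*n) := by
  simp [fI]

lemma key_s7 (x : ℝ) (n i j : ℕ) :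
    ((i+1).choose j : ℝ) * ((n+2-i-j).choose (i+1) : ℝ) * x ^ (2*(n+3) - 3*(i+1+j)) =
    x^2 * (((i+1).choose j : ℝ) * ((n+1-i-j).choose (i+1) : ℝ) * x ^ (2*(n+2) - 3*(i+1+j))) +
    ((i+1).choose j : ℝ) * ((n+1-i-j).choose i : ℝ) * x ^ (2*(n+3) - 3*(i+1+j)) := by
  by_cases hj : i+1 < j
  · simp [Nat.choose_eq_zero_of_lt hj]
  push_neg at hj
  by_cases hz : n+1-i-j < i+1
  · have h0 : ((n+1-i-j).choose (i+1) : ℝ) = 0 := by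
      simp [Nat.choose_eq_zero_of_lt hz]
    rw [h0]
    by_cases hc : i + j ≤ n+1
    · have e : n+2-i-j = (n+1-i-j)+1 := by omega
      rw [e, Nat.choose_succ_succ]
      push_cast
      rw [Nat.choose_eq_zero_of_lt hz]
      push_cast
      ring
    · have e1 : n+2-i-j = 0 := by omega
      have e2 : n+1-i-j = 0 := by omega
      rcases Nat.eq_zero_or_pos i with hi | hi
      · subst hi
        have : (1:ℕ).choose j = 0 := Nat.choose_eq_zero_of_lt (by omega)
        simp [this]
      · rw [e1, e2]
        have : (0:ℕ).choose i = 0 := Nat.choose_eq_zero_of_lt hi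
        simp [this, Nat.choose_eq_zero_of_lt (show 0 < i+1 by omega)]
  · push_neg at hz
    have e : n+2-i-j = (n+1-i-j)+1 := by omega
    have eexp : 2*(n+3) - 3*(i+1+j) = (2*(n+2) - 3*(i+1+j)) + 2 := by omega
    rw [e, Nat.choose_succ_succ, eexp, pow_add]
    push_cast
    ring

lemma S_rec (x : ℝ) (w : ℕ → ℝ) (n : ℕ) :
    ∑ i ∈ range (n+4), w i * fI x (n+3) i =
    x^2 * ∑ i ∈ range (n+3), w i * fI x (n+2) i
      + x * ∑ i ∈ range (n+2), w (i+1) * fI x (n+1) i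
      + ∑ i ∈ range (n+1), w (i+1) * fI x n i := by
  -- Q i : leftover after removing the x^2-part
  set Q : ℕ → ℝ := fun i => ∑ j ∈ range (i+2),
    w (i+1) * (((i+1).choose j : ℝ) * ((n+1-i-j).choose i : ℝ) * x ^ (2*(n+3) - 3*(i+1+j)))
    with hQdef
  have hsplit : ∀ i, w (i+1) * fI x (n+3) (i+1)
      = x^2 * (w (i+1) * fI x (n+2) (i+1)) + Q i := by
    intro i
    unfold fI
    rw [hQdef]
    simp only []
    rw [Finset.mul_sum, Finset.mul_sum, Finset.mul_sum, ← Finset.sum_add_distrib]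
    apply Finset.sum_congr rfl
    intro j hj
    have e1 : n+3-(i+1)-j = n+2-i-j := by omega
    have e2 : n+2-(i+1)-j = n+1-i-j := by omega
    rw [e1, e2, key_s7 x n i j]
    ring
  have hQ : ∀ i, Q i = x * (w (i+1) * fI x (n+1) i) + w (i+1) * fI x n i := by
    intro i
    rw [hQdef]
    simp only []
    rw [Finset.sum_range_succ']
    -- split Pascal on the shifted terms
    have hterm : ∀ j, w (i+1) * (((i+1).choose (j+1) : ℝ) * ((n+1-i-(j+1)).choose i : ℝ)
          * x ^ (2*(n+3) - 3*(i+1+(j+1))))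
        = w (i+1) * ((i.choose j : ℝ) * ((n-i-j).choose i : ℝ) * x ^ (2*n - 3*(i+j)))
          + w (i+1) * ((i.choose (j+1) : ℝ) * ((n+1-i-(j+1)).choose i : ℝ)
          * x ^ (2*(n+3) - 3*(i+1+(j+1)))) := by
      intro j
      have e1 : n+1-i-(j+1) = n-i-j := by omega
      have e2 : 2*(n+3) - 3*(i+1+(j+1)) = 2*n - 3*(i+j) := by omega
      rw [Nat.choose_succ_succ, e1, e2]
      push_cast
      ring
    rw [Finset.sum_congr rfl (fun j _ => hterm j), Finset.sum_add_distrib]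
    -- first piece is w (i+1) * fI x n i
    have hV : ∑ j ∈ range (i+1),
        w (i+1) * ((i.choose j : ℝ) * ((n-i-j).choose i : ℝ) * x ^ (2*n - 3*(i+j)))
        = w (i+1) * fI x n i := by
      rw [fI, Finset.mul_sum]
    -- remaining pieces reassemble to U
    have hU : (∑ j ∈ range (i+1),
          w (i+1) * ((i.choose (j+1) : ℝ) * ((n+1-i-(j+1)).choose i : ℝ)
            * x ^ (2*(n+3) - 3*(i+1+(j+1)))))
        + w (i+1) * (((i+1).choose 0 : ℝ) * ((n+1-i-0).choose i : ℝ)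
            * x ^ (2*(n+3) - 3*(i+1+0)))
        = x * (w (i+1) * fI x (n+1) i) := by
      have hassemble : (∑ j ∈ range (i+1),
            w (i+1) * ((i.choose (j+1) : ℝ) * ((n+1-i-(j+1)).choose i : ℝ)
              * x ^ (2*(n+3) - 3*(i+1+(j+1)))))
          + w (i+1) * (((i+1).choose 0 : ℝ) * ((n+1-i-0).choose i : ℝ)
              * x ^ (2*(n+3) - 3*(i+1+0)))
          = ∑ j ∈ range (i+2),
            w (i+1) * ((i.choose j : ℝ) * ((n+1-i-j).choose i : ℝ)
              * x ^ (2*(n+3) - 3*(i+1+j))) := by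
        rw [Finset.sum_range_succ' (fun j => w (i+1) * ((i.choose j : ℝ)
          * ((n+1-i-j).choose i : ℝ) * x ^ (2*(n+3) - 3*(i+1+j)))) (i+1)]
        norm_num
      rw [hassemble, Finset.sum_range_succ]
      have htop : (i.choose (i+1) : ℝ) = 0 := by
        simp [Nat.choose_eq_zero_of_lt (Nat.lt_succ_self i)]
      rw [htop]
      rw [fI, Finset.mul_sum, Finset.mul_sum]
      rw [Finset.sum_congr rfl (fun j hj => ?_)]
      · ring
      · -- per-term with exponent shift
        simp only [Finset.mem_range] at hj
        by_cases hc : (n+1-i-j).choose i = 0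
        · simp [hc]
        · have hge : ¬ (n+1-i-j < i) := fun h => hc (Nat.choose_eq_zero_of_lt h)
          have e : 2*(n+3) - 3*(i+1+j) = (2*(n+1) - 3*(i+j)) + 1 := by omega
          rw [e, pow_succ]
          ring
    rw [hV]
    linarith [hU]
  -- now assemble the outer sum
  rw [Finset.sum_range_succ]
  have htop : fI x (n+3) (n+3) = 0 := fI_zero x (by omega)
  rw [htop]
  rw [Finset.sum_range_succ' _ (n+2)]
  rw [Finset.sum_congr rfl (fun i _ => hsplit i), Finset.sum_add_distrib]
  have h1 : ∑ i ∈ range (n+2), Q i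
      = x * (∑ i ∈ range (n+2), w (i+1) * fI x (n+1) i)
        + (∑ i ∈ range (n+1), w (i+1) * fI x n i) := by
    rw [Finset.sum_congr rfl (fun i _ => hQ i), Finset.sum_add_distrib, Finset.mul_sum]
    have hlast : ∑ i ∈ range (n+2), w (i+1) * fI x n i
        = ∑ i ∈ range (n+1), w (i+1) * fI x n i := by
      rw [Finset.sum_range_succ, fI_zero x (show n < 2*(n+1) by omega)]
      ring
    rw [hlast]
  have h2 : x^2 * ∑ i ∈ range (n+3), w i * fI x (n+2) i
      = ∑ i ∈ range (n+2), x^2 * (w (i+1) * fI x (n+2) (i+1))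
        + x^2 * (w 0 * fI x (n+2) 0) := by
    rw [Finset.sum_range_succ' _ (n+2), mul_add, Finset.mul_sum]
  have h3 : w 0 * fI x (n+3) 0 = x^2 * (w 0 * fI x (n+2) 0) := by
    rw [fI_zero_idx, fI_zero_idx]
    rw [show 2*(n+3) = 2 + 2*(n+2) by ring, pow_add]
    ring
  rw [h1, h3, h2]
  ring

noncomputable def Gs (x : ℝ) (n : ℕ) : ℝ := ∑ i ∈ range (n+1), fI x n i
noncomputable def Hs (x : ℝ) (n : ℕ) : ℝ := ∑ i ∈ range (n+1), (i:ℝ) * fI x n i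

lemma tribPoly_add3 (x : ℝ) (n : ℕ) :
    tribPoly (n+3) x = x ^ 2 * tribPoly (n + 2) x + x * tribPoly (n + 1) x + tribPoly n x := rfl

lemma Gs_rec (x : ℝ) (n : ℕ) :
    Gs x (n+3) = x^2 * Gs x (n+2) + x * Gs x (n+1) + Gs x n := by
  have h := S_rec x (fun _ => 1) n
  simpa [Gs, one_mul] using h

lemma Hs_rec (x : ℝ) (n : ℕ) :
    Hs x (n+3) = x^2 * Hs x (n+2) + x * (Hs x (n+1) + Gs x (n+1)) + (Hs x n + Gs x n) := by
  have h := S_rec x (fun i => (i:ℝ)) n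
  have e : ∀ m k : ℕ, ∑ i ∈ range k, ((i+1:ℕ):ℝ) * fI x m i
      = (∑ i ∈ range k, (i:ℝ) * fI x m i) + ∑ i ∈ range k, fI x m i := by
    intro m k
    rw [← Finset.sum_add_distrib]
    apply Finset.sum_congr rfl
    intro i _
    push_cast
    ring
  rw [e, e] at h
  unfold Hs Gs
  linear_combination h

lemma Gs_eq (x : ℝ) : ∀ n, Gs x n = tribPoly (n+1) x := by
  intro n
  induction n using Nat.strong_induction_on with
  | _ n ih =>
    match n with
    | 0 => norm_num [Gs, fI, tribPoly]
    | 1 => norm_num [Gs, fI, Finset.sum_range_succ, tribPoly]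
    | 2 => norm_num [Gs, fI, Finset.sum_range_succ, tribPoly]; ring
    | (m+3) =>
      rw [Gs_rec, ih (m+2) (by omega), ih (m+1) (by omega), ih m (by omega)]
      simp only [show m+3+1 = (m+1)+3 from rfl, tribPoly_add3 x (m+1),
        show m+1+2 = m+2+1 from rfl, show m+1+1 = m+2 from rfl]

noncomputable def Cv (x : ℝ) (n : ℕ) : ℝ :=
  ∑ j ∈ range (n+1), tribPoly j x * tribPoly (n-j) x

noncomputable def Cvp (x : ℝ) (n : ℕ) : ℝ :=
  ∑ j ∈ range n, tribPoly j x * tribPoly (n-1-j) x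

lemma Cvp_succ (x : ℝ) (n : ℕ) : Cvp x (n+1) = Cv x n := by
  unfold Cvp Cv
  apply Finset.sum_congr rfl
  intro j _
  norm_num

lemma Cv_rec' (x : ℝ) (n : ℕ) :
    Cv x (n+2) = x^2 * Cv x (n+1) + x * Cv x n + Cvp x n + tribPoly (n+1) x := by
  have hterm : ∀ j ∈ range n, tribPoly j x * tribPoly (n+2-j) x
      = x^2 * (tribPoly j x * tribPoly (n+1-j) x) + x * (tribPoly j x * tribPoly (n-j) x)
        + tribPoly j x * tribPoly (n-1-j) x := by
    intro j hj
    simp only [Finset.mem_range] at hj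
    have e3 : n+2-j = (n-1-j)+3 := by omega
    have e2 : n+1-j = (n-1-j)+2 := by omega
    have e1 : n-j = (n-1-j)+1 := by omega
    rw [e3, e2, e1, tribPoly_add3]
    ring
  have hL : Cv x (n+2)
      = ∑ j ∈ range n, (x^2 * (tribPoly j x * tribPoly (n+1-j) x)
          + x * (tribPoly j x * tribPoly (n-j) x) + tribPoly j x * tribPoly (n-1-j) x)
        + x^2 * tribPoly n x + tribPoly (n+1) x := by
    unfold Cv
    rw [Finset.sum_range_succ, Finset.sum_range_succ, Finset.sum_range_succ,
      Finset.sum_congr rfl hterm]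
    rw [show n+2-(n+2) = 0 from by omega, show n+2-(n+1) = 1 from by omega,
      show n+2-n = 2 from by omega]
    show _ = _ + x^2 * tribPoly n x + tribPoly (n+1) x
    simp [tribPoly]
    ring
  have hA : Cv x (n+1) = ∑ j ∈ range n, tribPoly j x * tribPoly (n+1-j) x + tribPoly n x := by
    unfold Cv
    rw [Finset.sum_range_succ, Finset.sum_range_succ,
      show n+1-(n+1) = 0 from by omega, show n+1-n = 1 from by omega]
    simp [tribPoly]
  have hB : Cv x n = ∑ j ∈ range n, tribPoly j x * tribPoly (n-j) x := by
    unfold Cv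
    rw [Finset.sum_range_succ, show n-n = 0 from by omega]
    simp [tribPoly]
  rw [hL, hA, hB]
  unfold Cvp
  rw [Finset.sum_add_distrib, Finset.sum_add_distrib, ← Finset.mul_sum, ← Finset.mul_sum]
  ring

lemma Hs_eq (x : ℝ) : ∀ n, Hs x n = x * Cv x n + Cvp x n := by
  intro n
  induction n using Nat.strong_induction_on with
  | _ n ih =>
    match n with
    | 0 => norm_num [Hs, fI, Cv, Cvp, tribPoly]
    | 1 => norm_num [Hs, fI, Cv, Cvp, Finset.sum_range_succ, tribPoly]
    | 2 => norm_num [Hs, fI, Cv, Cvp, Finset.sum_range_succ, tribPoly]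
    | (m+3) =>
      rw [Hs_rec, ih (m+2) (by omega), ih (m+1) (by omega), ih m (by omega),
        Gs_eq, Gs_eq]
      have c4 : Cv x (m+3) = x^2 * Cv x (m+2) + x * Cv x (m+1) + Cv x m
          + tribPoly (m+2) x := by
        have h := Cv_rec' x (m+1)
        rw [Cvp_succ] at h
        exact h
      have c5 : Cv x (m+2) = x^2 * Cv x (m+1) + x * Cv x m + Cvp x m
          + tribPoly (m+1) x := Cv_rec' x m
      rw [Cvp_succ x (m+1), Cvp_succ x m, Cvp_succ x (m+2), c4, c5]
      ring

lemma swap_sum (f : ℕ → ℝ) : ∀ m, ∑ s ∈ range (m+1), ∑ i ∈ range (s+1), f i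
    = ∑ i ∈ range (m+1), ((m+1-i : ℕ) : ℝ) * f i := by
  intro m
  induction m with
  | zero => simp
  | succ m ih =>
    rw [Finset.sum_range_succ _ (m+1), ih,
      Finset.sum_range_succ (fun i => ((m+1+1-i : ℕ) : ℝ) * f i) (m+1)]
    have hc : ∀ i ∈ range (m+1), ((m+1+1-i : ℕ):ℝ) * f i
        = ((m+1-i : ℕ):ℝ) * f i + f i := by
      intro i hi
      simp only [Finset.mem_range] at hi
      rw [show m+1+1-i = (m+1-i)+1 from by omega]
      push_cast
      ring
    rw [Finset.sum_congr rfl hc, Finset.sum_add_distrib,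
      show m+1+1-(m+1) = 1 from by omega,
      Finset.sum_range_succ f (m+1)]
    push_cast
    ring

/-- For `n ≥ 1`, with `ℓ = ⌊n/2⌋`:
`∑_{s=0}^{ℓ} T_{n+1}^{(s)}(x) = (ℓ+1) T_{n+1}(x)
  − ∑_{j=1}^{n-1} (x T_j(x) + T_{j-1}(x)) T_{n-j}(x)`. -/
theorem sum_incTrib_eq' (n : ℕ) (hn : 1 ≤ n) (x : ℝ) :
    ∑ s ∈ Finset.range (n / 2 + 1), incTrib (n + 1) s x =
      ((n / 2 : ℕ) + 1 : ℝ) * tribPoly (n + 1) x -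
        ∑ j ∈ Finset.Icc 1 (n - 1),
          (x * tribPoly j x + tribPoly (j - 1) x) * tribPoly (n - j) x := by
  obtain ⟨m, rfl⟩ : ∃ m, n = m + 1 := ⟨n - 1, by omega⟩
  -- rewrite incTrib in terms of fI
  have hinc : ∀ s, incTrib (m+1+1) s x = ∑ i ∈ range (s+1), fI x (m+1) i := by
    intro s
    unfold incTrib fI
    apply Finset.sum_congr rfl
    intro i _
    apply Finset.sum_congr rfl
    intro j _
    norm_num
  rw [Finset.sum_congr rfl (fun s _ => hinc s), swap_sum]
  set L := (m+1)/2 with hL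
  -- split the weight
  have hsplitw : ∀ i ∈ range (L+1), ((L+1-i : ℕ):ℝ) * fI x (m+1) i
      = ((L:ℝ)+1) * fI x (m+1) i - (i:ℝ) * fI x (m+1) i := by
    intro i hi
    simp only [Finset.mem_range] at hi
    rw [show ((L+1-i : ℕ):ℝ) = ((L:ℝ)+1) - (i:ℝ) from by
      rw [Nat.cast_sub (by omega)]; push_cast; ring]
    ring
  rw [Finset.sum_congr rfl hsplitw, Finset.sum_sub_distrib, ← Finset.mul_sum]
  -- extend ranges
  have hzero : ∀ i, L + 1 ≤ i → fI x (m+1) i = 0 := by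
    intro i hi
    apply fI_zero
    omega
  have hext1 : ∑ i ∈ range (L+1), fI x (m+1) i = ∑ i ∈ range (m+2), fI x (m+1) i := by
    apply Finset.sum_subset (Finset.range_subset_range.2 (by omega))
    intro i _ hni
    simp only [Finset.mem_range, not_lt] at hni
    exact hzero i hni
  have hext2 : ∑ i ∈ range (L+1), (i:ℝ) * fI x (m+1) i
      = ∑ i ∈ range (m+2), (i:ℝ) * fI x (m+1) i := by
    apply Finset.sum_subset (Finset.range_subset_range.2 (by omega))
    intro i _ hni
    simp only [Finset.mem_range, not_lt] at hni
    rw [hzero i hni, mul_zero]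
  rw [hext1, hext2]
  have hG : ∑ i ∈ range (m+2), fI x (m+1) i = tribPoly (m+2) x := Gs_eq x (m+1)
  have hH : ∑ i ∈ range (m+2), (i:ℝ) * fI x (m+1) i = x * Cv x (m+1) + Cv x m := by
    have := Hs_eq x (m+1)
    rw [Cvp_succ] at this
    exact this
  rw [hG, hH]
  -- now handle the RHS Icc sum
  have hIcc : ∑ j ∈ Finset.Icc 1 (m+1-1),
      (x * tribPoly j x + tribPoly (j-1) x) * tribPoly (m+1-j) x
      = x * Cv x (m+1) + Cv x m := by
    rw [show m+1-1 = m from rfl, ← Finset.Ico_add_one_right_eq_Icc, Finset.sum_Ico_eq_sum_range]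
    have hterm : ∀ k ∈ range (m+1-1),
        (x * tribPoly (1+k) x + tribPoly (1+k-1) x) * tribPoly (m+1-(1+k)) x
        = x * (tribPoly (k+1) x * tribPoly (m-k) x) + tribPoly k x * tribPoly (m-k) x := by
      intro k hk
      rw [show 1+k-1 = k from by omega, show m+1-(1+k) = m-k from by omega,
        show 1+k = k+1 from by omega]
      ring
    rw [show m+1-1 = m from rfl] at hterm ⊢
    rw [Finset.sum_congr rfl hterm, Finset.sum_add_distrib, ← Finset.mul_sum]
    have h1 : Cv x (m+1) = ∑ k ∈ range m, tribPoly (k+1) x * tribPoly (m-k) x := by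
      unfold Cv
      rw [Finset.sum_range_succ' _ (m+1)]
      simp only [tribPoly]
      rw [Finset.sum_range_succ]
      have e0 : ∀ k, m+1-(k+1) = m-k := by intro k; omega
      rw [show m+1-(m+1) = 0 from by omega]
      simp only [tribPoly]
      rw [Finset.sum_congr rfl (fun k _ => by rw [e0 k])]
      ring
    have h2 : Cv x m = ∑ k ∈ range m, tribPoly k x * tribPoly (m-k) x := by
      unfold Cv
      rw [Finset.sum_range_succ, show m-m = 0 from by omega]
      simp [tribPoly]
    rw [h1, h2]
  rw [hIcc]
end

section
/- Let a_n = ∑_{i=0}^{⌊n/2⌋} ∑_{j=0}^{i} i · C(i,j) C(n-i-j, i) for n ≥ 1, and a_0 = 0. Then, as an identity of formal power series in z over ℚ, (1 − z − z^2 − z^3)^2 · ∑_{n ≥ 0} a_n z^n = z^2 + z^3. -/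
open PowerSeries

/-- `a 0 = 0` and, for `n ≥ 1`,
`a n = ∑_{i=0}^{⌊n/2⌋} ∑_{j=0}^{i} i · C(i,j) C(n-i-j, i)`. -/
def aSeq (n : ℕ) : ℚ :=
  if n = 0 then 0
  else ∑ i ∈ Finset.range (n / 2 + 1), ∑ j ∈ Finset.range (i + 1),
    (i : ℚ) * (Nat.choose i j : ℚ) * (Nat.choose (n - i - j) i : ℚ)

def cN (n i : ℕ) : ℕ := ∑ j ∈ Finset.range (i + 1), Nat.choose i j * Nat.choose (n - i - j) i

def bN (n : ℕ) : ℕ := ∑ i ∈ Finset.range (n + 1), cN n i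

def aN (n : ℕ) : ℕ := ∑ i ∈ Finset.range (n + 1), i * cN n i

lemma cN_eq_zero {n i : ℕ} (h : n < 2 * i) : cN n i = 0 := by
  apply Finset.sum_eq_zero
  intro j hj
  have : n - i - j < i := by omega
  simp [Nat.choose_eq_zero_of_lt this]

lemma cN_zero (n : ℕ) : cN n 0 = 1 := by simp [cN]

lemma choose_aux (n i j : ℕ) (hj : j ≤ i + 1) :
    Nat.choose (n + 2 - i - j) (i + 1)
      = Nat.choose (n + 1 - i - j) (i + 1) + Nat.choose (n + 1 - i - j) i := by
  rcases le_or_gt (i + j) (n + 1) with h | h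
  · have he : n + 2 - i - j = (n + 1 - i - j) + 1 := by omega
    rw [he, Nat.choose_succ_succ']
    omega
  · have hi : 1 ≤ i := by omega
    have h1 : n + 2 - i - j = 0 := by omega
    have h2 : n + 1 - i - j = 0 := by omega
    rw [h1, h2, Nat.choose_eq_zero_of_lt (by omega : (0:ℕ) < i + 1),
      Nat.choose_eq_zero_of_lt (by omega : (0:ℕ) < i)]

lemma cN_rec (n i : ℕ) :
    cN (n + 3) (i + 1) = cN (n + 2) (i + 1) + (cN (n + 1) i + cN n i) := by
  have hD : cN (n + 3) (i + 1) = cN (n + 2) (i + 1)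
      + ∑ j ∈ Finset.range (i + 2), Nat.choose (i+1) j * Nat.choose (n + 1 - i - j) i := by
    unfold cN
    rw [← Finset.sum_add_distrib]
    apply Finset.sum_congr rfl
    intro j hj
    have hj' : j ≤ i + 1 := by simpa [Nat.lt_succ_iff] using hj
    have e1 : n + 3 - (i + 1) - j = n + 2 - i - j := by omega
    have e2 : n + 2 - (i + 1) - j = n + 1 - i - j := by omega
    rw [e1, e2, choose_aux n i j hj', Nat.mul_add]
  have hsplit : ∑ j ∈ Finset.range (i + 2), Nat.choose (i+1) j * Nat.choose (n + 1 - i - j) i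
      = cN (n + 1) i + cN n i := by
    rw [Finset.sum_range_succ' (fun j => Nat.choose (i+1) j * Nat.choose (n + 1 - i - j) i) (i+1)]
    have : ∀ k, Nat.choose (i+1) (k+1) = Nat.choose i k + Nat.choose i (k+1) :=
      fun k => Nat.choose_succ_succ i k
    simp only [this, Nat.add_mul]
    rw [Finset.sum_add_distrib]
    have hA : (∑ k ∈ Finset.range (i + 1), Nat.choose i k * Nat.choose (n + 1 - i - (k+1)) i)
        = cN n i := by
      unfold cN
      apply Finset.sum_congr rfl
      intro k hk
      have : n + 1 - i - (k + 1) = n - i - k := by omega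
      rw [this]
    have hB : (∑ k ∈ Finset.range (i + 1), Nat.choose i (k+1) * Nat.choose (n + 1 - i - (k+1)) i)
        + Nat.choose (i+1) 0 * Nat.choose (n + 1 - i - 0) i = cN (n + 1) i := by
      unfold cN
      rw [Finset.sum_range_succ' (fun j => Nat.choose i j * Nat.choose (n + 1 - i - j) i) i]
      rw [Finset.sum_range_succ]
      have hz : Nat.choose i (i + 1) = 0 := Nat.choose_eq_zero_of_lt (by omega)
      simp [hz]
    omega
  omega

lemma bN_rec (n : ℕ) : bN (n + 3) = bN (n + 2) + bN (n + 1) + bN n := by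
  have h3 : bN (n + 3)
      = 1 + ∑ i ∈ Finset.range (n + 3), cN (n + 3) (i + 1) := by
    unfold bN
    rw [Finset.sum_range_succ' (fun i => cN (n + 3) i) (n + 3), cN_zero]
    omega
  have h2 : bN (n + 2) = 1 + ∑ i ∈ Finset.range (n + 3), cN (n + 2) (i + 1) := by
    unfold bN
    rw [Finset.sum_range_succ' (fun i => cN (n + 2) i) (n + 2), cN_zero]
    rw [Finset.sum_range_succ (fun i => cN (n + 2) (i + 1)) (n + 2),
      cN_eq_zero (by omega : n + 2 < 2 * (n + 3))]
    omega
  have h1 : bN (n + 1) = ∑ i ∈ Finset.range (n + 3), cN (n + 1) i := by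
    unfold bN
    rw [Finset.sum_range_succ (fun i => cN (n + 1) i) (n + 2),
      cN_eq_zero (by omega : n + 1 < 2 * (n + 2))]
    simp only [show n + 1 + 1 = n + 2 from rfl]
    omega
  have h0 : bN n = ∑ i ∈ Finset.range (n + 3), cN n i := by
    unfold bN
    rw [Finset.sum_range_succ (fun i => cN n i) (n + 2),
      cN_eq_zero (by omega : n < 2 * (n + 2))]
    rw [Finset.sum_range_succ (fun i => cN n i) (n + 1),
      cN_eq_zero (by omega : n < 2 * (n + 1))]
    omega
  have key : ∑ i ∈ Finset.range (n + 3), cN (n + 3) (i + 1)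
      = ∑ i ∈ Finset.range (n + 3), cN (n + 2) (i + 1)
        + (∑ i ∈ Finset.range (n + 3), cN (n + 1) i
          + ∑ i ∈ Finset.range (n + 3), cN n i) := by
    rw [← Finset.sum_add_distrib, ← Finset.sum_add_distrib]
    exact Finset.sum_congr rfl fun i _ => cN_rec n i
  omega

lemma aN_rec (n : ℕ) :
    aN (n + 3) = aN (n + 2) + aN (n + 1) + aN n + bN (n + 1) + bN n := by
  have h3 : aN (n + 3) = ∑ i ∈ Finset.range (n + 3), (i + 1) * cN (n + 3) (i + 1) := by
    unfold aN
    rw [Finset.sum_range_succ' (fun i => i * cN (n + 3) i) (n + 3)]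
    simp
  have h2 : aN (n + 2) = ∑ i ∈ Finset.range (n + 3), (i + 1) * cN (n + 2) (i + 1) := by
    unfold aN
    rw [Finset.sum_range_succ' (fun i => i * cN (n + 2) i) (n + 2)]
    rw [Finset.sum_range_succ (fun i => (i+1) * cN (n + 2) (i + 1)) (n + 2),
      cN_eq_zero (by omega : n + 2 < 2 * (n + 3))]
    omega
  have h1 : aN (n + 1) + bN (n + 1)
      = ∑ i ∈ Finset.range (n + 3), (i + 1) * cN (n + 1) i := by
    unfold aN bN
    rw [Finset.sum_range_succ (fun i => (i+1) * cN (n + 1) i) (n + 2),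
      cN_eq_zero (by omega : n + 1 < 2 * (n + 2))]
    simp only [Nat.add_mul, Nat.one_mul]
    rw [Finset.sum_add_distrib]
    simp only [show n + 1 + 1 = n + 2 from rfl]
    omega
  have h0 : aN n + bN n = ∑ i ∈ Finset.range (n + 3), (i + 1) * cN n i := by
    unfold aN bN
    rw [Finset.sum_range_succ (fun i => (i+1) * cN n i) (n + 2),
      cN_eq_zero (by omega : n < 2 * (n + 2))]
    rw [Finset.sum_range_succ (fun i => (i+1) * cN n i) (n + 1),
      cN_eq_zero (by omega : n < 2 * (n + 1))]
    simp only [Nat.add_mul, Nat.one_mul]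
    rw [Finset.sum_add_distrib]
    omega
  have key : ∑ i ∈ Finset.range (n + 3), (i + 1) * cN (n + 3) (i + 1)
      = ∑ i ∈ Finset.range (n + 3), (i + 1) * cN (n + 2) (i + 1)
        + (∑ i ∈ Finset.range (n + 3), (i + 1) * cN (n + 1) i
          + ∑ i ∈ Finset.range (n + 3), (i + 1) * cN n i) := by
    rw [← Finset.sum_add_distrib, ← Finset.sum_add_distrib]
    apply Finset.sum_congr rfl
    intro i _
    rw [cN_rec n i]
    ring
  omega

lemma aSeq_eq (n : ℕ) : aSeq n = (aN n : ℚ) := by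
  unfold aSeq aN
  rcases Nat.eq_zero_or_pos n with h | h
  · subst h; simp [cN]
  · rw [if_neg (by omega)]
    have hsub : Finset.range (n / 2 + 1) ⊆ Finset.range (n + 1) :=
      Finset.range_subset_range.2 (by omega)
    rw [← Finset.sum_subset hsub (fun i _ hi => by
      have : n < 2 * i := by
        simp only [Finset.mem_range, not_lt] at hi ⊢
        omega
      simp [cN_eq_zero this])]
    push_cast [cN, Finset.mul_sum]
    apply Finset.sum_congr rfl
    intro i _
    apply Finset.sum_congr rfl
    intro j _
    ring

-- power series part

noncomputable def Bps : PowerSeries ℚ := PowerSeries.mk fun n => (bN n : ℚ)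

lemma claim1 : (1 - (X : PowerSeries ℚ) - X ^ 2 - X ^ 3) * Bps = 1 := by
  have hre : (1 - (X : PowerSeries ℚ) - X ^ 2 - X ^ 3) * Bps
      = Bps - Bps * X ^ 1 - Bps * X ^ 2 - Bps * X ^ 3 := by ring
  rw [hre]
  ext n
  simp only [map_sub, PowerSeries.coeff_mul_X_pow', PowerSeries.coeff_mk,
    PowerSeries.coeff_one, Bps]
  match n with
  | 0 => norm_num [show bN 0 = 1 by decide]
  | 1 => norm_num [show bN 1 = 1 by decide, show bN 0 = 1 by decide]
  | 2 => norm_num [show bN 2 = 2 by decide, show bN 1 = 1 by decide, show bN 0 = 1 by decide]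
  | (m+3) =>
    have h := bN_rec m
    rw [if_pos (by omega), if_pos (by omega), if_pos (by omega), if_neg (by omega)]
    have e1 : m + 3 - 1 = m + 2 := by omega
    have e2 : m + 3 - 2 = m + 1 := by omega
    have e3 : m + 3 - 3 = m := by omega
    rw [e1, e2, e3, h]
    push_cast
    ring

lemma claim2 : (1 - (X : PowerSeries ℚ) - X ^ 2 - X ^ 3) * PowerSeries.mk aSeq
    = (X ^ 2 + X ^ 3) * Bps := by
  have hA : PowerSeries.mk aSeq = PowerSeries.mk fun n => (aN n : ℚ) := by
    ext n; simp [aSeq_eq]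
  rw [hA]
  have hre : (1 - (X : PowerSeries ℚ) - X ^ 2 - X ^ 3) * (PowerSeries.mk fun n => (aN n : ℚ))
      = (PowerSeries.mk fun n => (aN n : ℚ))
        - (PowerSeries.mk fun n => (aN n : ℚ)) * X ^ 1
        - (PowerSeries.mk fun n => (aN n : ℚ)) * X ^ 2
        - (PowerSeries.mk fun n => (aN n : ℚ)) * X ^ 3 := by ring
  have hre2 : ((X : PowerSeries ℚ) ^ 2 + X ^ 3) * Bps = Bps * X ^ 2 + Bps * X ^ 3 := by ring
  rw [hre, hre2]
  ext n
  simp only [map_sub, map_add, PowerSeries.coeff_mul_X_pow', PowerSeries.coeff_mk, Bps]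
  match n with
  | 0 => norm_num [show aN 0 = 0 by decide]
  | 1 => norm_num [show aN 1 = 0 by decide, show aN 0 = 0 by decide]
  | 2 => norm_num [show aN 2 = 1 by decide, show aN 1 = 0 by decide, show aN 0 = 0 by decide,
      show bN 0 = 1 by decide]
  | (m+3) =>
    have h := aN_rec m
    rw [if_pos (by omega), if_pos (by omega), if_pos (by omega),
      if_pos (by omega), if_pos (by omega)]
    have e1 : m + 3 - 1 = m + 2 := by omega
    have e2 : m + 3 - 2 = m + 1 := by omega
    have e3 : m + 3 - 3 = m := by omega
    rw [e1, e2, e3, h]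
    push_cast
    ring

/-- As formal power series over `ℚ`:
`(1 − z − z² − z³)² · ∑_{n≥0} a_n zⁿ = z² + z³`. -/
theorem aSeq_generating_function :
    (1 - (X : PowerSeries ℚ) - X ^ 2 - X ^ 3) ^ 2 * PowerSeries.mk aSeq =
      (X : PowerSeries ℚ) ^ 2 + X ^ 3 := by
  have h : (1 - (X : PowerSeries ℚ) - X ^ 2 - X ^ 3) ^ 2 * PowerSeries.mk aSeq
      = (X ^ 2 + X ^ 3) * ((1 - (X : PowerSeries ℚ) - X ^ 2 - X ^ 3) * Bps) := by
    rw [sq, mul_assoc, claim2]; ring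
  rw [h, claim1, mul_one]
end

section
/- For all natural numbers n and s with n ≥ 3s+1 and every real number x, T_n^{(s)}(x) = ∑_{i=0}^{s} ∑_{j=0}^{s-i} ( s! / (i!·j!·(s-i-j)!) ) · x^{2s-i-2j} · T_{n-s-i-2j}^{(s-i-j)}(x). -/
namespace IncTribAux

open Finset

lemma pascalR (m k : ℕ) (hk : 1 ≤ k) :
    ((m+1).choose k : ℝ) = (m.choose k : ℝ) + (m.choose (k-1) : ℝ) := by
  cases k with
  | zero => omega
  | succ k => rw [Nat.choose_succ_succ]; push_cast; simp; ring

lemma pascalR' (m k : ℕ) (hm : 1 ≤ m) (hk : 1 ≤ k) :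
    (m.choose k : ℝ) = ((m-1).choose k : ℝ) + ((m-1).choose (k-1) : ℝ) := by
  cases m with
  | zero => omega
  | succ m => rw [show m + 1 - 1 = m by omega]; exact pascalR m k hk

lemma slot (n i j : ℕ) (hn : 4 ≤ n) (hj : j ≤ i) (x : ℝ) :
    (Nat.choose i j : ℝ) * (Nat.choose (n - 1 - i - j) i : ℝ) * x ^ (2 * (n - 1) - 3 * (i + j))
    = x ^ 2 * ((Nat.choose i j : ℝ) * (Nat.choose (n - 1 - 1 - i - j) i : ℝ) *
        x ^ (2 * (n - 1 - 1) - 3 * (i + j)))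
    + (if j + 1 ≤ i then
        x * ((Nat.choose (i-1) j : ℝ) * (Nat.choose (n - 2 - 1 - (i-1) - j) (i-1) : ℝ) *
          x ^ (2 * (n - 2 - 1) - 3 * ((i-1) + j))) else 0)
    + (if 1 ≤ j then
        ((Nat.choose (i-1) (j-1) : ℝ) * (Nat.choose (n - 3 - 1 - (i-1) - (j-1)) (i-1) : ℝ) *
          x ^ (2 * (n - 3 - 1) - 3 * ((i-1) + (j-1)))) else 0) := by
  by_cases hreg : n - 1 - i - j < i
  · have hi1 : 1 ≤ i := by omega
    have h0 : Nat.choose (n - 1 - i - j) i = 0 := Nat.choose_eq_zero_of_lt hreg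
    have h1 : Nat.choose (n - 1 - 1 - i - j) i = 0 := Nat.choose_eq_zero_of_lt (by omega)
    have h2 : Nat.choose (n - 2 - 1 - (i-1) - j) (i-1) = 0 := Nat.choose_eq_zero_of_lt (by omega)
    have h3 : Nat.choose (n - 3 - 1 - (i-1) - (j-1)) (i-1) = 0 := Nat.choose_eq_zero_of_lt (by omega)
    simp [h0, h1, h2, h3]
  · push_neg at hreg
    rcases Nat.eq_zero_or_pos i with hi0 | hi1
    · subst hi0
      have hj0 : j = 0 := Nat.le_zero.mp hj
      subst hj0
      rw [if_neg (by omega), if_neg (by omega)]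
      simp only [Nat.choose_self, Nat.choose_zero_right, Nat.cast_one]
      rw [show 2 * (n-1) - 3 * (0+0) = (2 * (n-1-1) - 3*(0+0)) + 2 by omega, pow_add]
      simp [Nat.choose]
      ring
    · by_cases hgen : 3 * (i + j) + 4 ≤ 2 * n
      · have hm : n - 1 - i - j = (n - 2 - i - j) + 1 := by omega
        have hA : n - 1 - 1 - i - j = n - 2 - i - j := by omega
        have hB : n - 2 - 1 - (i-1) - j = n - 2 - i - j := by omega
        have heA : 2 * (n-1) - 3 * (i+j) = (2 * (n-1-1) - 3*(i+j)) + 2 := by omega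
        have pascal : (Nat.choose (n-1-i-j) i : ℝ)
            = (Nat.choose (n-2-i-j) i : ℝ) + (Nat.choose (n-2-i-j) (i-1) : ℝ) := by
          rw [hm]; exact pascalR _ i hi1
        rcases Nat.eq_zero_or_pos j with hj0 | hj1
        · subst hj0
          rw [if_pos (show 0 + 1 ≤ i by omega), if_neg (by omega)]
          rw [pascal, hA, hB, heA,
            show 2 * (n-2-1) - 3 * ((i-1)+0) = (2 * (n-1-1) - 3 * (i+0)) + 1 by omega]
          simp only [Nat.choose_zero_right, Nat.cast_one, pow_add, pow_succ]
          ring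
        · by_cases hji : j + 1 ≤ i
          · rw [if_pos hji, if_pos (show 1 ≤ j from hj1)]
            have hC' : n - 3 - 1 - (i-1) - (j-1) = n - 2 - i - j := by omega
            have pascal2 : (Nat.choose i j : ℝ)
                = (Nat.choose (i-1) j : ℝ) + (Nat.choose (i-1) (j-1) : ℝ) :=
              pascalR' i j hi1 hj1
            rw [pascal, pascal2, hA, hB, hC', heA,
              show 2 * (n-2-1) - 3 * ((i-1)+j) = (2 * (n-1-1) - 3*(i+j)) + 1 by omega,
              show 2 * (n-3-1) - 3 * ((i-1)+(j-1)) = (2 * (n-1-1) - 3*(i+j)) + 2 by omega]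
            simp only [pow_add, pow_succ]
            ring
          · have hji' : j = i := by omega
            subst hji'
            rw [if_neg hji, if_pos (show 1 ≤ j from hj1)]
            have hC' : n - 3 - 1 - (j-1) - (j-1) = n - 2 - j - j := by omega
            rw [pascal, hA, hC',
              show 2 * (n-3-1) - 3 * ((j-1)+(j-1)) = (2 * (n-1-1) - 3*(j+j)) + 2 by omega,
              show 2 * (n-1) - 3 * (j+j) = (2 * (n-1-1) - 3*(j+j)) + 2 by omega]
            simp only [Nat.choose_self, Nat.cast_one, pow_add]
            ring
      · push_neg at hgen
        by_cases hb : 3 * (i + j) = 2 * n - 2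
        · have hij : i = j := by omega
          subst hij
          have hn3 : n = 3 * i + 1 := by omega
          subst hn3
          rw [if_neg (by omega), if_pos (show 1 ≤ i by omega)]
          rw [show 3*i+1 - 1 - i - i = i by omega, show 3*i+1 - 1 - 1 - i - i = i - 1 by omega,
            show 3*i+1 - 3 - 1 - (i-1) - (i-1) = i - 1 by omega,
            show 2 * (3*i+1 - 1) - 3 * (i+i) = 0 by omega,
            show 2 * (3*i+1 - 3 - 1) - 3 * ((i-1)+(i-1)) = 0 by omega]
          rw [Nat.choose_self, Nat.choose_self, Nat.choose_eq_zero_of_lt (by omega)]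
          simp
        · have hij : i = j + 1 := by omega
          subst hij
          have hn3 : n = 3 * (j + 1) := by omega
          subst hn3
          rw [if_pos (show j + 1 ≤ j + 1 by omega)]
          rcases Nat.eq_zero_or_pos j with hj0 | hj1
          · omega
          rw [if_pos (show 1 ≤ j from hj1)]
          rw [show 3*(j+1) - 1 - (j+1) - j = j + 1 by omega,
            show 3*(j+1) - 1 - 1 - (j+1) - j = j by omega,
            show 3*(j+1) - 2 - 1 - (j+1-1) - j = j by omega,
            show 3*(j+1) - 3 - 1 - (j+1-1) - (j-1) = j by omega,
            show j + 1 - 1 = j by omega,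
            show 2 * (3*(j+1) - 1) - 3 * ((j+1)+j) = 1 by omega,
            show 2 * (3*(j+1) - 1 - 1) - 3 * ((j+1)+j) = 0 by omega,
            show 2 * (3*(j+1) - 2 - 1) - 3 * (j+j) = 0 by omega,
            show 2 * (3*(j+1) - 3 - 1) - 3 * (j+(j-1)) = 1 by omega]
          simp only [Nat.choose_self, Nat.choose_succ_self_right,
            Nat.choose_eq_zero_of_lt (show j < j + 1 by omega),
            Nat.choose_symm (show 1 ≤ j from hj1), Nat.choose_one_right]
          push_cast
          ring

lemma rec1 (n s : ℕ) (hn : 4 ≤ n) (x : ℝ) :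
    incTrib n (s+1) x
      = x^2 * incTrib (n-1) (s+1) x + x * incTrib (n-2) s x + incTrib (n-3) s x := by
  have step : incTrib n (s+1) x
      = ∑ i ∈ range (s+1+1), ∑ j ∈ range (i+1),
          (x ^ 2 * ((Nat.choose i j : ℝ) * (Nat.choose (n - 1 - 1 - i - j) i : ℝ) *
            x ^ (2 * (n - 1 - 1) - 3 * (i + j)))
          + (if j + 1 ≤ i then
              x * ((Nat.choose (i-1) j : ℝ) * (Nat.choose (n - 2 - 1 - (i-1) - j) (i-1) : ℝ) *
                x ^ (2 * (n - 2 - 1) - 3 * ((i-1) + j))) else 0)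
          + (if 1 ≤ j then
              ((Nat.choose (i-1) (j-1) : ℝ) * (Nat.choose (n - 3 - 1 - (i-1) - (j-1)) (i-1) : ℝ) *
                x ^ (2 * (n - 3 - 1) - 3 * ((i-1) + (j-1)))) else 0)) := by
    rw [incTrib]
    refine Finset.sum_congr rfl fun i _ => Finset.sum_congr rfl fun j hj => ?_
    exact slot n i j hn (Nat.lt_succ_iff.mp (Finset.mem_range.mp hj)) x
  rw [step]
  simp only [Finset.sum_add_distrib]
  congr 1
  · congr 1
    · rw [incTrib, Finset.mul_sum]
      exact Finset.sum_congr rfl fun i _ => by rw [Finset.mul_sum]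
    · rw [Finset.sum_range_succ']
      have h0 : (∑ j ∈ range (0+1), (if j + 1 ≤ 0 then
          x * ((Nat.choose (0-1) j : ℝ) * (Nat.choose (n - 2 - 1 - (0-1) - j) (0-1) : ℝ) *
            x ^ (2 * (n - 2 - 1) - 3 * ((0-1) + j))) else 0)) = 0 := by simp
      rw [h0, add_zero]
      rw [incTrib, Finset.mul_sum]
      refine Finset.sum_congr rfl fun i hi => ?_
      rw [Finset.sum_range_succ, if_neg (by omega), add_zero, Finset.mul_sum]
      refine Finset.sum_congr rfl fun j hj => ?_
      have hji : j + 1 ≤ i + 1 := by simpa [Nat.lt_succ_iff] using Finset.mem_range.mp hj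
      rw [if_pos hji]
      simp only [Nat.add_sub_cancel]
  · rw [Finset.sum_range_succ']
    have h0 : (∑ j ∈ range (0+1), (if 1 ≤ j then
        ((Nat.choose (0-1) (j-1) : ℝ) * (Nat.choose (n - 3 - 1 - (0-1) - (j-1)) (0-1) : ℝ) *
          x ^ (2 * (n - 3 - 1) - 3 * ((0-1) + (j-1))))  else 0)) = 0 := by simp
    rw [h0, add_zero]
    rw [incTrib]
    refine Finset.sum_congr rfl fun i hi => ?_
    rw [Finset.sum_range_succ']
    have h1 : (if 1 ≤ 0 then
        ((Nat.choose (i+1-1) (0-1) : ℝ) * (Nat.choose (n - 3 - 1 - (i+1-1) - (0-1)) (i+1-1) : ℝ) *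
          x ^ (2 * (n - 3 - 1) - 3 * ((i+1-1) + (0-1)))) else 0) = 0 := by simp
    rw [h1, add_zero]
    refine Finset.sum_congr rfl fun j hj => ?_
    rw [if_pos (by omega)]
    simp only [Nat.add_sub_cancel]

lemma coeff_split (k i j : ℕ) (h : i + j ≤ k + 1) :
    ((Nat.factorial (k+1) : ℝ) /
        ((Nat.factorial i : ℝ) * (Nat.factorial j : ℝ) * (Nat.factorial ((k+1) - i - j) : ℝ)))
    = (if i + j ≤ k then
        (Nat.factorial k : ℝ) /
          ((Nat.factorial i : ℝ) * (Nat.factorial j : ℝ) * (Nat.factorial (k - i - j) : ℝ)) else 0)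
    + (if 1 ≤ i then
        (Nat.factorial k : ℝ) /
          ((Nat.factorial (i-1) : ℝ) * (Nat.factorial j : ℝ) * (Nat.factorial (k - (i-1) - j) : ℝ))
        else 0)
    + (if 1 ≤ j then
        (Nat.factorial k : ℝ) /
          ((Nat.factorial i : ℝ) * (Nat.factorial (j-1) : ℝ) * (Nat.factorial (k - i - (j-1)) : ℝ))
        else 0) := by
  have hfi : (Nat.factorial i : ℝ) ≠ 0 := Nat.cast_ne_zero.mpr (Nat.factorial_ne_zero i)
  have hfj : (Nat.factorial j : ℝ) ≠ 0 := Nat.cast_ne_zero.mpr (Nat.factorial_ne_zero j)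
  have hfm : (Nat.factorial ((k+1) - i - j) : ℝ) ≠ 0 :=
    Nat.cast_ne_zero.mpr (Nat.factorial_ne_zero _)
  set B : ℝ := (Nat.factorial k : ℝ) /
    ((Nat.factorial i : ℝ) * (Nat.factorial j : ℝ) * (Nat.factorial ((k+1) - i - j) : ℝ)) with hB
  have e0 : (Nat.factorial (k+1) : ℝ) /
      ((Nat.factorial i : ℝ) * (Nat.factorial j : ℝ) * (Nat.factorial ((k+1) - i - j) : ℝ))
      = ((k+1 : ℕ) : ℝ) * B := by
    rw [hB, Nat.factorial_succ]
    push_cast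
    field_simp
  have e1 : (if i + j ≤ k then
      (Nat.factorial k : ℝ) /
        ((Nat.factorial i : ℝ) * (Nat.factorial j : ℝ) * (Nat.factorial (k - i - j) : ℝ)) else 0)
      = (((k+1) - i - j : ℕ) : ℝ) * B := by
    by_cases hc : i + j ≤ k
    · rw [if_pos hc, hB, show (k+1) - i - j = (k - i - j) + 1 by omega, Nat.factorial_succ]
      have : (Nat.factorial (k - i - j) : ℝ) ≠ 0 := Nat.cast_ne_zero.mpr (Nat.factorial_ne_zero _)
      push_cast
      field_simp
    · rw [if_neg hc, show (k+1) - i - j = 0 by omega]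
      simp
  have e2 : (if 1 ≤ i then
      (Nat.factorial k : ℝ) /
        ((Nat.factorial (i-1) : ℝ) * (Nat.factorial j : ℝ) * (Nat.factorial (k - (i-1) - j) : ℝ))
      else 0) = (i : ℝ) * B := by
    by_cases hc : 1 ≤ i
    · rw [if_pos hc, hB, show k - (i-1) - j = (k+1) - i - j by omega,
        show i = (i - 1) + 1 by omega]
      rw [Nat.factorial_succ]
      have : (Nat.factorial (i - 1) : ℝ) ≠ 0 := Nat.cast_ne_zero.mpr (Nat.factorial_ne_zero _)
      push_cast
      field_simp
    · rw [if_neg hc, show i = 0 by omega]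
      simp
  have e3 : (if 1 ≤ j then
      (Nat.factorial k : ℝ) /
        ((Nat.factorial i : ℝ) * (Nat.factorial (j-1) : ℝ) * (Nat.factorial (k - i - (j-1)) : ℝ))
      else 0) = (j : ℝ) * B := by
    by_cases hc : 1 ≤ j
    · rw [if_pos hc, hB, show k - i - (j-1) = (k+1) - i - j by omega,
        show j = (j - 1) + 1 by omega]
      rw [Nat.factorial_succ]
      have : (Nat.factorial (j - 1) : ℝ) ≠ 0 := Nat.cast_ne_zero.mpr (Nat.factorial_ne_zero _)
      push_cast
      field_simp
    · rw [if_neg hc, show j = 0 by omega]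
      simp
  rw [e0, e1, e2, e3, ← add_mul, ← add_mul]
  congr 1
  norm_cast
  omega

lemma claim (k : ℕ) : ∀ (n s : ℕ), k ≤ s → 3*k+1 ≤ n → ∀ (x : ℝ),
    incTrib n s x =
      ∑ i ∈ Finset.range (k + 1), ∑ j ∈ Finset.range (k - i + 1),
        ((Nat.factorial k : ℝ) /
            ((Nat.factorial i : ℝ) * (Nat.factorial j : ℝ) * (Nat.factorial (k - i - j) : ℝ))) *
          x ^ (2 * k - i - 2 * j) * incTrib (n - k - i - 2 * j) (s - i - j) x := by
  induction k with
  | zero =>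
    intro n s _ _ x
    simp [Nat.factorial]
  | succ k ih =>
    intro n s hks hn x
    rw [ih n s (by omega) (by omega) x]
    -- expand each term via the recurrence
    have expand : ∀ i ∈ range (k+1), ∀ j ∈ range (k - i + 1),
        ((Nat.factorial k : ℝ) /
            ((Nat.factorial i : ℝ) * (Nat.factorial j : ℝ) * (Nat.factorial (k - i - j) : ℝ))) *
          x ^ (2 * k - i - 2 * j) * incTrib (n - k - i - 2 * j) (s - i - j) x
        = ((Nat.factorial k : ℝ) /
            ((Nat.factorial i : ℝ) * (Nat.factorial j : ℝ) * (Nat.factorial (k - i - j) : ℝ))) *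
          x ^ (2 * (k+1) - i - 2 * j) * incTrib (n - (k+1) - i - 2 * j) (s - i - j) x
        + ((Nat.factorial k : ℝ) /
            ((Nat.factorial i : ℝ) * (Nat.factorial j : ℝ) * (Nat.factorial (k - i - j) : ℝ))) *
          x ^ (2 * (k+1) - (i+1) - 2 * j) *
            incTrib (n - (k+1) - (i+1) - 2 * j) (s - (i+1) - j) x
        + ((Nat.factorial k : ℝ) /
            ((Nat.factorial i : ℝ) * (Nat.factorial j : ℝ) * (Nat.factorial (k - i - j) : ℝ))) *
          x ^ (2 * (k+1) - i - 2 * (j+1)) *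
            incTrib (n - (k+1) - i - 2 * (j+1)) (s - i - (j+1)) x := by
      intro i hi j hj
      have hik : i ≤ k := Nat.lt_succ_iff.mp (Finset.mem_range.mp hi)
      have hjk : j ≤ k - i := Nat.lt_succ_iff.mp (Finset.mem_range.mp hj)
      obtain ⟨t, ht⟩ : ∃ t, s - i - j = t + 1 := ⟨s - i - j - 1, by omega⟩
      rw [ht, rec1 (n - k - i - 2*j) t (by omega) x,
        show s - (i+1) - j = t by omega, show s - i - (j+1) = t by omega,
        show n - (k+1) - i - 2*j = n - k - i - 2*j - 1 by omega,
        show n - (k+1) - (i+1) - 2*j = n - k - i - 2*j - 2 by omega,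
        show n - (k+1) - i - 2*(j+1) = n - k - i - 2*j - 3 by omega,
        show 2 * (k+1) - i - 2*j = (2*k - i - 2*j) + 2 by omega,
        show 2 * (k+1) - (i+1) - 2*j = (2*k - i - 2*j) + 1 by omega,
        show 2 * (k+1) - i - 2*(j+1) = 2*k - i - 2*j by omega]
      simp only [pow_add, pow_succ]
      ring
    rw [Finset.sum_congr rfl fun i hi => Finset.sum_congr rfl fun j hj => expand i hi j hj]
    simp only [Finset.sum_add_distrib]
    -- now split the target similarly
    have tsplit : ∀ i ∈ range (k+1+1), ∀ j ∈ range ((k+1) - i + 1),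
        ((Nat.factorial (k+1) : ℝ) /
            ((Nat.factorial i : ℝ) * (Nat.factorial j : ℝ) *
              (Nat.factorial ((k+1) - i - j) : ℝ))) *
          x ^ (2 * (k+1) - i - 2 * j) * incTrib (n - (k+1) - i - 2 * j) (s - i - j) x
        = (if i + j ≤ k then
            (Nat.factorial k : ℝ) /
              ((Nat.factorial i : ℝ) * (Nat.factorial j : ℝ) * (Nat.factorial (k - i - j) : ℝ))
            else 0) *
            (x ^ (2 * (k+1) - i - 2 * j) * incTrib (n - (k+1) - i - 2 * j) (s - i - j) x)
        + (if 1 ≤ i then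
            (Nat.factorial k : ℝ) /
              ((Nat.factorial (i-1) : ℝ) * (Nat.factorial j : ℝ) *
                (Nat.factorial (k - (i-1) - j) : ℝ)) else 0) *
            (x ^ (2 * (k+1) - i - 2 * j) * incTrib (n - (k+1) - i - 2 * j) (s - i - j) x)
        + (if 1 ≤ j then
            (Nat.factorial k : ℝ) /
              ((Nat.factorial i : ℝ) * (Nat.factorial (j-1) : ℝ) *
                (Nat.factorial (k - i - (j-1)) : ℝ)) else 0) *
            (x ^ (2 * (k+1) - i - 2 * j) * incTrib (n - (k+1) - i - 2 * j) (s - i - j) x) := by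
      intro i hi j hj
      have hik : i ≤ k + 1 := Nat.lt_succ_iff.mp (Finset.mem_range.mp hi)
      have hjk : j ≤ (k+1) - i := Nat.lt_succ_iff.mp (Finset.mem_range.mp hj)
      rw [coeff_split k i j (by omega)]
      ring
    rw [Finset.sum_congr rfl fun i hi => Finset.sum_congr rfl fun j hj => tsplit i hi j hj]
    simp only [Finset.sum_add_distrib]
    congr 1
    · congr 1
      · -- A part
        symm
        rw [Finset.sum_range_succ, show (k+1) - (k+1) + 1 = 1 by omega, Finset.sum_range_one,
          if_neg (by omega), zero_mul, add_zero]
        refine Finset.sum_congr rfl fun i hi => ?_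
        have hik : i ≤ k := Nat.lt_succ_iff.mp (Finset.mem_range.mp hi)
        rw [show (k+1) - i + 1 = (k - i + 1) + 1 by omega, Finset.sum_range_succ,
          if_neg (by omega), zero_mul, add_zero]
        refine Finset.sum_congr rfl fun j hj => ?_
        have hjk : j ≤ k - i := Nat.lt_succ_iff.mp (Finset.mem_range.mp hj)
        rw [if_pos (by omega)]
        ring
      · -- B part
        symm
        rw [Finset.sum_range_succ']
        have h0 : (∑ j ∈ range ((k+1) - 0 + 1),
            (if 1 ≤ 0 then
              (Nat.factorial k : ℝ) /
                ((Nat.factorial (0-1) : ℝ) * (Nat.factorial j : ℝ) *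
                  (Nat.factorial (k - (0-1) - j) : ℝ)) else 0) *
              (x ^ (2 * (k+1) - 0 - 2 * j) * incTrib (n - (k+1) - 0 - 2 * j) (s - 0 - j) x)) = 0 := by
          simp
        rw [h0, add_zero]
        refine Finset.sum_congr rfl fun i hi => ?_
        have hik : i ≤ k := Nat.lt_succ_iff.mp (Finset.mem_range.mp hi)
        rw [show (k+1) - (i+1) + 1 = k - i + 1 by omega]
        refine Finset.sum_congr rfl fun j hj => ?_
        rw [if_pos (by omega)]
        simp only [Nat.add_sub_cancel]
        ring
    · -- C part
      symm
      rw [Finset.sum_range_succ, show (k+1) - (k+1) + 1 = 1 by omega, Finset.sum_range_one,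
        if_neg (by omega), zero_mul, add_zero]
      refine Finset.sum_congr rfl fun i hi => ?_
      have hik : i ≤ k := Nat.lt_succ_iff.mp (Finset.mem_range.mp hi)
      rw [show (k+1) - i + 1 = (k - i + 1) + 1 by omega, Finset.sum_range_succ']
      have h0 : (if 1 ≤ 0 then
          (Nat.factorial k : ℝ) /
            ((Nat.factorial i : ℝ) * (Nat.factorial (0-1) : ℝ) *
              (Nat.factorial (k - i - (0-1)) : ℝ)) else 0) *
          (x ^ (2 * (k+1) - i - 2 * 0) * incTrib (n - (k+1) - i - 2 * 0) (s - i - 0) x) = 0 := by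
        simp
      rw [h0, add_zero]
      refine Finset.sum_congr rfl fun j hj => ?_
      rw [if_pos (by omega)]
      simp only [Nat.add_sub_cancel]
      ring

end IncTribAux

/-- For `n ≥ 3s+1`:
`T_n^{(s)}(x) = ∑_{i=0}^{s} ∑_{j=0}^{s-i} (s!/(i!·j!·(s-i-j)!)) x^{2s-i-2j} T_{n-s-i-2j}^{(s-i-j)}(x)`. -/
theorem incTrib_identity5 (n s : ℕ) (hn : 3 * s + 1 ≤ n) (x : ℝ) :
    incTrib n s x =
      ∑ i ∈ Finset.range (s + 1), ∑ j ∈ Finset.range (s - i + 1),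
        ((Nat.factorial s : ℝ) /
            ((Nat.factorial i : ℝ) * (Nat.factorial j : ℝ) * (Nat.factorial (s - i - j) : ℝ))) *
          x ^ (2 * s - i - 2 * j) * incTrib (n - s - i - 2 * j) (s - i - j) x := by
  exact IncTribAux.claim s n s le_rfl hn x
end

section
/- For all natural numbers n and s with n ≥ 2s and every real number y, T_{n+1}^{(s)}(y^2) = y^{n} F_{n+1}^{(s)}(y^3) + ∑_{i=1}^{n-2} y^{i-1} ∑_{j=0}^{s-1} ( T_{n-i-1}^{(j)}(y^2) − T_{n-i-1}^{(j-1)}(y^2) ) · F_i^{(s-j-1)}(y^3), where T_m^{(-1)} is interpreted as 0. (This is the identity T_{n+1}^{(s)}(x) = x^{n/2} F_{n+1}^{(s)}(x^{3/2}) + ∑_{i=1}^{n-2} x^{(i-1)/2} ∑_{j=0}^{s-1} (T_{n-i-1}^{(j)}(x) − T_{n-i-1}^{(j-1)}(x)) F_i^{(s-j-1)}(x^{3/2}) after the substitution x = y^2.) -/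
/-- The incomplete tribonacci polynomial with an integer superscript,
with the convention `T_n^{(s)}(x) = 0` for `s < 0`. -/
def incTribZ (n : ℕ) (s : ℤ) (x : ℝ) : ℝ :=
  if 0 ≤ s then incTrib n s.toNat x else 0

/-- The incomplete Fibonacci polynomial `F_n^{(s)}(x) = ∑_{r=0}^{s} C(n-r-1, r) x^{n-2r-1}`. -/
def incFib (n s : ℕ) (x : ℝ) : ℝ :=
  ∑ r ∈ Finset.range (s + 1), (Nat.choose (n - r - 1) r : ℝ) * x ^ (n - 2 * r - 1)

namespace IncTribAux
open Finset

/-- Hockey stick identity. -/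
lemma hockey (N r : ℕ) : ∑ u ∈ range N, u.choose r = N.choose (r+1) := by
  induction N with
  | zero => simp
  | succ N ih =>
    rw [Finset.sum_range_succ, ih, Nat.choose_succ_succ]
    simp [Nat.succ_eq_add_one, add_comm]

/-- Upper-index Vandermonde identity. -/
lemma vand (P : ℕ) : ∀ j r : ℕ, ∑ u ∈ range (P+1), (P - u).choose j * u.choose r
    = (P+1).choose (j+r+1) := by
  induction P with
  | zero =>
    intro j r
    simp only [Finset.sum_range_one, Nat.choose_zero_right, Nat.zero_sub, Nat.choose_zero_right]
    cases j with
    | zero => cases r with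
      | zero => simp
      | succ r => simp [Nat.choose_eq_zero_of_lt]
    | succ j =>
      rw [Nat.choose_eq_zero_of_lt (by omega), Nat.choose_eq_zero_of_lt (by omega)]
      simp
  | succ P ih =>
    intro j r
    cases j with
    | zero =>
      simp only [Nat.choose_zero_right, one_mul, Nat.zero_add]
      rw [hockey]
    | succ j =>
      rw [Finset.sum_range_succ]
      have h1 : ∀ u ∈ range (P+1), (P + 1 - u).choose (j+1) * u.choose r
          = (P - u).choose j * u.choose r + (P - u).choose (j+1) * u.choose r := by
        intro u hu
        simp only [Finset.mem_range] at hu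
        have : P + 1 - u = (P - u) + 1 := by omega
        rw [this, Nat.choose_succ_succ, add_mul]
      rw [Finset.sum_congr rfl h1, Finset.sum_add_distrib, ih j r, ih (j+1) r]
      rw [Nat.sub_self, Nat.choose_zero_succ, zero_mul, add_zero]
      have h2 : j + 1 + r + 1 = (j + r + 1) + 1 := by omega
      rw [h2, Nat.choose_succ_succ (P+1)]

lemma vext (M P j r : ℕ) (h1 : P + 1 ≤ M) (h2 : j = 0 → M = P + 1) :
    ∑ u ∈ range M, (P - u).choose j * u.choose r = (P+1).choose (j+r+1) := by
  rw [← vand P j r]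
  symm
  apply Finset.sum_subset (Finset.range_subset_range.mpr h1)
  intro u hu hnu
  simp only [Finset.mem_range] at hu hnu
  have hj : j ≠ 0 := fun h => by omega
  have h3 : P - u = 0 := by omega
  have h4 : Nat.choose 0 j = 0 := Nat.choose_eq_zero_of_lt (by omega)
  rw [h3, h4, zero_mul]

lemma shift (M A j r : ℕ) :
    ∑ u ∈ range M, (A - u).choose j * (u - r).choose r
      = ∑ v ∈ range (M - r), (A - r - v).choose j * v.choose r := by
  have hz : ∀ u, u < r → (A - u).choose j * (u - r).choose r = 0 := by
    intro u hu
    have h3 : u - r = 0 := by omega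
    have h4 : Nat.choose 0 r = 0 := Nat.choose_eq_zero_of_lt (by omega)
    rw [h3, h4, mul_zero]
  rcases le_or_gt r M with h | h
  · have hsplit : ∑ u ∈ range M, (A - u).choose j * (u - r).choose r
        = ∑ u ∈ Finset.Ico r M, (A - u).choose j * (u - r).choose r := by
      rw [Finset.range_eq_Ico, ← Finset.sum_Ico_consecutive _ (Nat.zero_le r) h,
        Finset.sum_eq_zero (fun u hu => hz u (Finset.mem_Ico.mp hu).2), zero_add]
    rw [hsplit, Finset.sum_Ico_eq_sum_range]
    apply Finset.sum_congr rfl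
    intro v hv
    congr 2 <;> omega
  · rw [Finset.sum_eq_zero (fun u hu => hz u (by simp only [Finset.mem_range] at hu; omega)),
      show M - r = 0 by omega]
    simp

lemma lemB (n j k r : ℕ) (hk : k ≤ j) :
    ∑ i ∈ Finset.Icc 1 (n-2), (n - i - 2 - j - k).choose j * (i - r - 1).choose r
      = (n - 2 - j - k - r).choose (j + r + 1) := by
  have hIcc : Finset.Icc 1 (n-2) = Finset.Ico 1 (n-1) := by
    ext x; simp only [Finset.mem_Icc, Finset.mem_Ico]; omega
  rw [hIcc, Finset.sum_Ico_eq_sum_range]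
  have h1 : ∀ u ∈ range (n - 1 - 1), (n - (1 + u) - 2 - j - k).choose j * ((1 + u) - r - 1).choose r
      = ((n - 3 - j - k) - u).choose j * (u - r).choose r := by
    intro u hu; congr 2 <;> omega
  rw [Finset.sum_congr rfl h1, show n - 1 - 1 = n - 2 by omega, shift (n-2) (n-3-j-k) j r]
  by_cases hM : n - 2 - r = 0
  · rw [hM]
    simp only [Finset.range_zero, Finset.sum_empty]
    rw [Nat.choose_eq_zero_of_lt (by omega)]
  · have hn3 : r + 3 ≤ n := by omega
    rcases Nat.eq_zero_or_pos j with hj | hj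
    · subst hj
      have hk0 : k = 0 := by omega
      subst hk0
      rw [show n - 3 - 0 - 0 - r = n - 3 - r by omega,
        vext (n-2-r) (n-3-r) 0 r (by omega) (fun _ => by omega)]
      congr 1
      omega
    · rw [vext (n-2-r) (n-3-j-k-r) j r (by omega) (by omega)]
      by_cases hbig : 3 + j + k + r ≤ n
      · congr 1; omega
      · rw [Nat.choose_eq_zero_of_lt (by omega), Nat.choose_eq_zero_of_lt (by omega)]

lemma triangle (N : ℕ) (h : ℕ → ℕ → ℝ) :
    ∑ j ∈ range N, ∑ r ∈ range (N - j), h j r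
      = ∑ t ∈ range N, ∑ j ∈ range (t+1), h j (t - j) := by
  rw [Finset.sum_sigma', Finset.sum_sigma']
  apply Finset.sum_bij' (fun p _ => (⟨p.1 + p.2, p.1⟩ : Σ _ : ℕ, ℕ))
    (fun q _ => (⟨q.2, q.1 - q.2⟩ : Σ _ : ℕ, ℕ))
  · rintro ⟨x, y⟩ ha
    simp only [Finset.mem_sigma, Finset.mem_range] at ha ⊢
    omega
  · rintro ⟨x, y⟩ ha
    simp only [Finset.mem_sigma, Finset.mem_range] at ha ⊢
    omega
  · rintro ⟨x, y⟩ ha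
    simp only [Finset.mem_sigma, Finset.mem_range] at ha
    simp only [show x + y - x = y from by omega]
  · rintro ⟨x, y⟩ ha
    simp only [Finset.mem_sigma, Finset.mem_range] at ha
    simp only [show y + (x - y) = x from by omega]
  · rintro ⟨x, y⟩ ha
    simp only [Finset.mem_sigma, Finset.mem_range] at ha
    simp only
    congr 1
    omega

lemma diff_row (m j : ℕ) (x : ℝ) :
    incTrib m j x - incTribZ m ((j : ℤ) - 1) x
      = ∑ k ∈ range (j+1), (j.choose k : ℝ) * ((m - 1 - j - k).choose j : ℝ)
          * x ^ (2*(m-1) - 3*(j+k)) := by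
  cases j with
  | zero =>
    rw [incTribZ, if_neg (by norm_num)]
    simp [incTrib]
  | succ j' =>
    have h1 : ((j' + 1 : ℕ) : ℤ) - 1 = ((j' : ℕ) : ℤ) := by push_cast; ring
    rw [h1, incTribZ, if_pos (Int.natCast_nonneg j'), Int.toNat_natCast]
    rw [incTrib, incTrib, Finset.sum_range_succ, add_sub_cancel_left]

lemma main2 (n s : ℕ) (y : ℝ) :
    ∑ i ∈ Finset.Icc 1 (n - 2), y ^ (i - 1) *
        ∑ j ∈ Finset.range s,
          (incTrib (n - i - 1) j (y ^ 2) - incTribZ (n - i - 1) ((j : ℤ) - 1) (y ^ 2)) *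
            incFib i (s - j - 1) (y ^ 3)
    = ∑ j ∈ range s, ∑ k ∈ range (j+1), ∑ r ∈ range (s-j),
        (j.choose k : ℝ) * ((n-2-j-k-r).choose (j+r+1) : ℝ) * y ^ (4*n - 6*(j+k+r) - 12) := by
  have stepA : ∀ i ∈ Finset.Icc 1 (n-2), y ^ (i - 1) *
        ∑ j ∈ Finset.range s,
          (incTrib (n - i - 1) j (y ^ 2) - incTribZ (n - i - 1) ((j : ℤ) - 1) (y ^ 2)) *
            incFib i (s - j - 1) (y ^ 3)
      = ∑ j ∈ range s, ∑ k ∈ range (j+1), ∑ r ∈ range (s-j),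
          (j.choose k : ℝ) * ((n - i - 2 - j - k).choose j : ℝ) * ((i - r - 1).choose r : ℝ)
            * y ^ (4*n - 6*(j+k+r) - 12) := by
    intro i hi
    simp only [Finset.mem_Icc] at hi
    rw [Finset.mul_sum]
    apply Finset.sum_congr rfl
    intro j hj
    simp only [Finset.mem_range] at hj
    rw [diff_row, incFib, show s - j - 1 + 1 = s - j from by omega, Finset.sum_mul_sum,
      Finset.mul_sum]
    apply Finset.sum_congr rfl
    intro k hk
    rw [Finset.mul_sum]
    apply Finset.sum_congr rfl
    intro r hr
    simp only [Finset.mem_range] at hk hr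
    rw [show n - i - 1 - 1 - j - k = n - i - 2 - j - k from by omega]
    by_cases h1 : (j.choose k : ℝ) = 0
    · rw [h1]; ring
    by_cases h2 : ((n - i - 2 - j - k).choose j : ℝ) = 0
    · rw [h2]; ring
    by_cases h3 : ((i - r - 1).choose r : ℝ) = 0
    · rw [h3]; ring
    have e1 : ¬ (j < k) := fun h => h1 (by rw [Nat.choose_eq_zero_of_lt h]; norm_num)
    have e2 : ¬ (n - i - 2 - j - k < j) := fun h => h2 (by rw [Nat.choose_eq_zero_of_lt h]; norm_num)
    have e3 : ¬ (i - r - 1 < r) := fun h => h3 (by rw [Nat.choose_eq_zero_of_lt h]; norm_num)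
    have hpow : y ^ (i - 1) * ((y ^ 2) ^ (2 * (n - i - 1 - 1) - 3 * (j + k))
        * (y ^ 3) ^ (i - 2 * r - 1)) = y ^ (4*n - 6*(j+k+r) - 12) := by
      rw [← pow_mul, ← pow_mul, ← pow_add, ← pow_add]
      congr 1
      omega
    calc y ^ (i-1) * ((j.choose k : ℝ) * ((n - i - 2 - j - k).choose j : ℝ)
            * (y ^ 2) ^ (2 * (n - i - 1 - 1) - 3 * (j + k))
            * (((i - r - 1).choose r : ℝ) * (y ^ 3) ^ (i - 2 * r - 1)))
        = (j.choose k : ℝ) * ((n - i - 2 - j - k).choose j : ℝ) * ((i - r - 1).choose r : ℝ)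
            * (y ^ (i-1) * ((y ^ 2) ^ (2 * (n - i - 1 - 1) - 3 * (j + k))
              * (y ^ 3) ^ (i - 2 * r - 1))) := by ring
      _ = _ := by rw [hpow]
  rw [Finset.sum_congr rfl stepA]
  rw [Finset.sum_comm]
  apply Finset.sum_congr rfl
  intro j hj
  rw [Finset.sum_comm]
  apply Finset.sum_congr rfl
  intro k hk
  rw [Finset.sum_comm]
  apply Finset.sum_congr rfl
  intro r hr
  simp only [Finset.mem_range] at hk
  calc ∑ i ∈ Finset.Icc 1 (n-2), (j.choose k : ℝ) * ((n - i - 2 - j - k).choose j : ℝ)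
          * ((i - r - 1).choose r : ℝ) * y ^ (4*n - 6*(j+k+r) - 12)
      = (j.choose k : ℝ) * ((∑ i ∈ Finset.Icc 1 (n-2),
          (n - i - 2 - j - k).choose j * (i - r - 1).choose r : ℕ) : ℝ)
          * y ^ (4*n - 6*(j+k+r) - 12) := by
        rw [Nat.cast_sum, Finset.mul_sum, Finset.sum_mul]
        apply Finset.sum_congr rfl
        intro i _
        push_cast
        ring
    _ = _ := by rw [lemB n j k r (by omega)]

lemma main3 (n s : ℕ) (y : ℝ) :
    ∑ j ∈ range s, ∑ k ∈ range (j+1), ∑ r ∈ range (s-j),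
        (j.choose k : ℝ) * ((n-2-j-k-r).choose (j+r+1) : ℝ) * y ^ (4*n - 6*(j+k+r) - 12)
    = ∑ t ∈ range s, ∑ k ∈ range (t+1),
        ((t+1).choose (k+1) : ℝ) * ((n-2-k-t).choose (t+1) : ℝ) * y ^ (4*n - 6*(t+k) - 12) := by
  have hext1 : ∀ j ∈ range s, ∑ k ∈ range (j+1), ∑ r ∈ range (s-j),
        (j.choose k : ℝ) * ((n-2-j-k-r).choose (j+r+1) : ℝ) * y ^ (4*n - 6*(j+k+r) - 12)
      = ∑ k ∈ range s, ∑ r ∈ range (s-j),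
        (j.choose k : ℝ) * ((n-2-j-k-r).choose (j+r+1) : ℝ) * y ^ (4*n - 6*(j+k+r) - 12) := by
    intro j hj
    simp only [Finset.mem_range] at hj
    apply Finset.sum_subset (Finset.range_subset_range.mpr (by omega))
    intro k hk hnk
    simp only [Finset.mem_range] at hk hnk
    apply Finset.sum_eq_zero
    intro r _
    rw [Nat.choose_eq_zero_of_lt (show j < k by omega)]
    norm_num
  rw [Finset.sum_congr rfl hext1, Finset.sum_comm]
  have htri : ∀ k ∈ range s, ∑ j ∈ range s, ∑ r ∈ range (s-j),
        (j.choose k : ℝ) * ((n-2-j-k-r).choose (j+r+1) : ℝ) * y ^ (4*n - 6*(j+k+r) - 12)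
      = ∑ t ∈ range s, ∑ j ∈ range (t+1),
        (j.choose k : ℝ) * ((n-2-j-k-(t-j)).choose (j+(t-j)+1) : ℝ)
          * y ^ (4*n - 6*(j+k+(t-j)) - 12) := by
    intro k _
    exact triangle s _
  rw [Finset.sum_congr rfl htri]
  have hin : ∀ k ∈ range s, ∀ t ∈ range s, ∑ j ∈ range (t+1),
        (j.choose k : ℝ) * ((n-2-j-k-(t-j)).choose (j+(t-j)+1) : ℝ)
          * y ^ (4*n - 6*(j+k+(t-j)) - 12)
      = ((t+1).choose (k+1) : ℝ) * ((n-2-k-t).choose (t+1) : ℝ) * y ^ (4*n - 6*(t+k) - 12) := by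
    intro k _ t _
    have h1 : ∀ j ∈ range (t+1), (j.choose k : ℝ) * ((n-2-j-k-(t-j)).choose (j+(t-j)+1) : ℝ)
          * y ^ (4*n - 6*(j+k+(t-j)) - 12)
        = (j.choose k : ℝ) * (((n-2-k-t).choose (t+1) : ℝ) * y ^ (4*n - 6*(t+k) - 12)) := by
      intro j hj
      simp only [Finset.mem_range] at hj
      rw [show n-2-j-k-(t-j) = n-2-k-t from by omega, show j+(t-j)+1 = t+1 from by omega,
        show j+k+(t-j) = t+k from by omega, mul_assoc]
    rw [Finset.sum_congr rfl h1, ← Finset.sum_mul, ← Nat.cast_sum, hockey (t+1) k, mul_assoc]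
  rw [Finset.sum_congr rfl (fun k hk => Finset.sum_congr rfl (hin k hk))]
  rw [Finset.sum_comm]
  have hext2 : ∀ t ∈ range s, ∑ k ∈ range (t+1),
        ((t+1).choose (k+1) : ℝ) * ((n-2-k-t).choose (t+1) : ℝ) * y ^ (4*n - 6*(t+k) - 12)
      = ∑ k ∈ range s,
        ((t+1).choose (k+1) : ℝ) * ((n-2-k-t).choose (t+1) : ℝ) * y ^ (4*n - 6*(t+k) - 12) := by
    intro t ht
    simp only [Finset.mem_range] at ht
    apply Finset.sum_subset (Finset.range_subset_range.mpr (by omega))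
    intro k hk hnk
    simp only [Finset.mem_range] at hk hnk
    rw [Nat.choose_eq_zero_of_lt (show t+1 < k+1 by omega)]
    norm_num
  exact (Finset.sum_congr rfl hext2).symm

lemma main1 (n s : ℕ) (hn : 2 * s ≤ n) (y : ℝ) :
    incTrib (n + 1) s (y ^ 2)
    = y ^ n * incFib (n + 1) s (y ^ 3) +
      ∑ t ∈ range s, ∑ k ∈ range (t+1),
        ((t+1).choose (k+1) : ℝ) * ((n-2-k-t).choose (t+1) : ℝ) * y ^ (4*n - 6*(t+k) - 12) := by
  rw [incTrib]
  simp only [Nat.add_sub_cancel]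
  rw [Finset.sum_congr rfl (fun a _ => Finset.sum_range_succ' _ a), Finset.sum_add_distrib]
  rw [add_comm]
  congr 1
  · rw [incFib, Finset.mul_sum]
    apply Finset.sum_congr rfl
    intro r hr
    simp only [Finset.mem_range] at hr
    rw [Nat.choose_zero_right, Nat.cast_one, one_mul]
    rw [show n + 1 - r - 1 = n - r - 0 from by omega]
    have hp : (y^2) ^ (2*n - 3*(r+0)) = y ^ n * (y^3) ^ (n + 1 - 2*r - 1) := by
      rw [← pow_mul, ← pow_mul, ← pow_add]
      congr 1
      omega
    rw [hp]
    ring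
  · rw [Finset.sum_range_succ']
    simp only [Finset.range_zero, Finset.sum_empty, add_zero]
    apply Finset.sum_congr rfl
    intro t ht
    apply Finset.sum_congr rfl
    intro k hk
    simp only [Finset.mem_range] at ht hk
    rw [show n - (t+1) - (k+1) = n - 2 - k - t from by omega]
    by_cases h2 : ((n-2-k-t).choose (t+1) : ℝ) = 0
    · rw [h2]; ring
    have e2 : ¬ (n-2-k-t < t+1) := fun h => h2 (by rw [Nat.choose_eq_zero_of_lt h]; norm_num)
    rw [← pow_mul, show 2 * (2*n - 3*((t+1)+(k+1))) = 4*n - 6*(t+k) - 12 from by omega]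

end IncTribAux

/-- For `n ≥ 2s` (identity after the substitution `x = y²`):
`T_{n+1}^{(s)}(y²) = yⁿ F_{n+1}^{(s)}(y³)
  + ∑_{i=1}^{n-2} y^{i-1} ∑_{j=0}^{s-1} (T_{n-i-1}^{(j)}(y²) − T_{n-i-1}^{(j-1)}(y²)) F_i^{(s-j-1)}(y³)`,
with `T_m^{(-1)} = 0`. -/
theorem incTrib_incFib_identity (n s : ℕ) (hn : 2 * s ≤ n) (y : ℝ) :
    incTrib (n + 1) s (y ^ 2) =
      y ^ n * incFib (n + 1) s (y ^ 3) +
        ∑ i ∈ Finset.Icc 1 (n - 2), y ^ (i - 1) *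
          ∑ j ∈ Finset.range s,
            (incTrib (n - i - 1) j (y ^ 2) - incTribZ (n - i - 1) ((j : ℤ) - 1) (y ^ 2)) *
              incFib i (s - j - 1) (y ^ 3) := by
  rw [IncTribAux.main1 n s hn y, IncTribAux.main2 n s y, IncTribAux.main3 n s y]
end

section
/- For all natural numbers n and s with n ≥ 2s+1 and every real number x, T_n(x) = T_{n-2s}(x)·T_{2s+1}(x) + T_{n-2s-1}(x)·( T_{2s-1}(x) + x·T_{2s}(x) ) + T_{n-2s-2}(x)·T_{2s}(x), where T_{-1}(x) is interpreted as 0 (this convention is needed when n = 2s+1 or when s = 0). -/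
/-- Truncated subtraction supplies the convention `T_{-1} = T_0 = 0`. -/
lemma tribPoly_add_two (m : ℕ) (x : ℝ) :
    tribPoly (m + 2) x = x ^ 2 * tribPoly (m + 1) x + x * tribPoly m x + tribPoly (m - 1) x := by
  cases m <;> simp [tribPoly]

/- Induction on `m` for all `k` at once: the instance `(m, k + 1)`, with `T_{k+2}` expanded by
the recurrence, regroups into the instance `(m + 1, k)` via the recurrence for `T_{m+2}`. -/
theorem tribPoly_add (m k : ℕ) (x : ℝ) :
    tribPoly (m + k + 1) x =
      tribPoly (m + 1) x * tribPoly (k + 1) x +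
        tribPoly m x * (tribPoly (k - 1) x + x * tribPoly k x) +
          tribPoly (m - 1) x * tribPoly k x := by
  induction m generalizing k with
  | zero => simp [tribPoly]
  | succ m ih =>
    rw [show m + 1 + k + 1 = m + (k + 1) + 1 by omega, ih (k + 1), tribPoly_add_two k,
      tribPoly_add_two m, Nat.add_sub_cancel, Nat.add_sub_cancel]
    ring

/-- For `n ≥ 2s+1`:
`T_n(x) = T_{n-2s}(x) T_{2s+1}(x) + T_{n-2s-1}(x) (T_{2s-1}(x) + x T_{2s}(x))
  + T_{n-2s-2}(x) T_{2s}(x)`.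
The convention `T_{-1}(x) = 0` (needed when `n = 2s+1` or `s = 0`) agrees with the
truncated natural subtraction here, since `tribPoly 0 x = 0 = T_{-1}(x)`. -/
theorem tribPoly_splitting (n s : ℕ) (hn : 2 * s + 1 ≤ n) (x : ℝ) :
    tribPoly n x =
      tribPoly (n - 2 * s) x * tribPoly (2 * s + 1) x +
        tribPoly (n - 2 * s - 1) x * (tribPoly (2 * s - 1) x + x * tribPoly (2 * s) x) +
          tribPoly (n - 2 * s - 2) x * tribPoly (2 * s) x := by
  obtain ⟨m, rfl⟩ : ∃ m, n = m + 2 * s + 1 := ⟨n - (2 * s + 1), by omega⟩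
  rw [show m + 2 * s + 1 - 2 * s = m + 1 by omega, Nat.add_sub_cancel,
    show m + 1 - 2 = m - 1 by omega]
  exact tribPoly_add m (2 * s) x
end

section
/- For all natural numbers n and s with n ≥ 2s+1 and every real number x, T_n^{(s)}(x) = T_n(x) − ∑_{i=0}^{n-2s-1} r_i(x) · T_{n-2s-i}(x). -/
/-- For a fixed `s`: `r 0 = r 1 = 0`, `r 2 = x^{s+1}`, and for `n ≥ 3`,
`r n = ∑_{j=0}^{s} C(s,j) C(n+s-j-2, s) x^{2n+s-3j-3}
     + ∑_{j=0}^{s} C(s,j) C(n+s-j-3, s) x^{2n+s-3j-6}`. -/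
def rPoly (s n : ℕ) (x : ℝ) : ℝ :=
  if n = 0 ∨ n = 1 then 0
  else if n = 2 then x ^ (s + 1)
  else
    (∑ j ∈ Finset.range (s + 1),
      (Nat.choose s j : ℝ) * (Nat.choose (n + s - j - 2) s : ℝ) * x ^ (2 * n + s - 3 * j - 3)) +
    ∑ j ∈ Finset.range (s + 1),
      (Nat.choose s j : ℝ) * (Nat.choose (n + s - j - 3) s : ℝ) * x ^ (2 * n + s - 3 * j - 6)

noncomputable def trm (x : ℝ) (m i j : ℕ) : ℝ :=
  (Nat.choose i j : ℝ) * (Nat.choose (m - 1 - i - j) i : ℝ) * x ^ (2 * (m - 1) - 3 * (i + j))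

noncomputable def row (x : ℝ) (m i : ℕ) : ℝ := ∑ j ∈ Finset.range (i + 1), trm x m i j

lemma incTrib_eq_rows (n s : ℕ) (x : ℝ) :
    incTrib n s x = ∑ i ∈ Finset.range (s + 1), row x n i := rfl

lemma inc_succ (n s : ℕ) (x : ℝ) :
    incTrib n (s + 1) x = incTrib n s x + row x n (s + 1) := by
  rw [incTrib_eq_rows, incTrib_eq_rows, Finset.sum_range_succ]

lemma row_zero (x : ℝ) {m i : ℕ} (h1 : 1 ≤ m) (h2 : m ≤ 2 * i) : row x m i = 0 := by
  apply Finset.sum_eq_zero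
  intro j hj
  have h : m - 1 - i - j < i := by omega
  simp [trm, Nat.choose_eq_zero_of_lt h]

lemma row_top (x : ℝ) (i : ℕ) : row x (2 * i + 1) i = x ^ i := by
  rw [row, Finset.sum_eq_single 0]
  · have h1 : 2 * i + 1 - 1 - i - 0 = i := by omega
    have h2 : 2 * (2 * i + 1 - 1) - 3 * (i + 0) = i := by omega
    simp only [trm]
    rw [h1, h2]
    simp
  · intro j hj hj0
    have h : 2 * i + 1 - 1 - i - j < i := by
      simp only [Finset.mem_range] at hj; omega
    have h0 : Nat.choose (2 * i + 1 - 1 - i - j) i = 0 := Nat.choose_eq_zero_of_lt h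
    simp only [trm]
    rw [h0]
    simp
  · simp

lemma trm_rec (x : ℝ) (n i j : ℕ) (hn : 1 ≤ n) (hji : j ≤ i) :
    trm x (n + 3) i j = x ^ 2 * trm x (n + 2) i j
      + (if i = 0 then 0 else x * trm x (n + 1) (i - 1) j)
      + (if i = 0 ∨ j = 0 then 0 else trm x n (i - 1) (j - 1)) := by
  rcases i with _ | i'
  · -- i = 0, so j = 0
    have hj0 : j = 0 := Nat.le_zero.mp hji
    subst hj0
    rw [if_pos rfl, if_pos (Or.inl rfl)]
    simp only [trm, Nat.choose_self, Nat.choose_zero_right]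
    have e : 2 * (n + 3 - 1) - 3 * (0 + 0) = 2 + (2 * (n + 2 - 1) - 3 * (0 + 0)) := by omega
    rw [e, pow_add]
    push_cast
    ring
  · rw [if_neg (Nat.succ_ne_zero i')]
    simp only [Nat.add_sub_cancel]
    rcases Nat.lt_or_ge (n + 1) (2 * (i' + 1) + j) with hB | hA
    · by_cases hBe : n + 2 = 2 * (i' + 1) + j
      · -- boundary case
        have t2 : n + 2 - 1 - (i' + 1) - j = i' := by omega
        have c2 : Nat.choose (n + 2 - 1 - (i' + 1) - j) (i' + 1) = 0 := by
          rw [t2]; exact Nat.choose_eq_zero_of_lt (by omega)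
        have tL : n + 3 - 1 - (i' + 1) - j = i' + 1 := by omega
        have t1 : n + 1 - 1 - i' - j = i' := by omega
        rcases j with _ | j''
        · rw [if_pos (Or.inr rfl)]
          have hi1 : 1 ≤ i' := by omega
          have eL : 2 * (n + 3 - 1) - 3 * (i' + 1 + 0) = i' + 1 := by omega
          have e1 : 2 * (n + 1 - 1) - 3 * (i' + 0) = i' := by omega
          simp only [trm]
          rw [c2, tL, t1, eL, e1]
          simp only [Nat.choose_self, Nat.choose_zero_right, Nat.cast_one, Nat.cast_zero]
          ring
        · rw [if_neg (by simp)]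
          simp only [Nat.add_sub_cancel]
          by_cases hji' : j'' + 1 ≤ i'
          · obtain ⟨d, hd⟩ : ∃ d, i' = j'' + 1 + d := ⟨i' - (j'' + 1), by omega⟩
            have eL : 2 * (n + 3 - 1) - 3 * (i' + 1 + (j'' + 1)) = d + 1 := by omega
            have e1 : 2 * (n + 1 - 1) - 3 * (i' + (j'' + 1)) = d := by omega
            have tS2 : n - 1 - i' - j'' = i' := by omega
            have eS2 : 2 * (n - 1) - 3 * (i' + j'') = d + 1 := by omega
            simp only [trm]
            rw [c2, tL, t1, tS2, eL, e1, eS2, Nat.choose_succ_succ (i' : ℕ) j'']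
            simp only [Nat.choose_self, Nat.succ_eq_add_one, Nat.cast_one, Nat.cast_zero]
            push_cast
            ring
          · -- j = i' + 1
            have hj : j'' + 1 = i' + 1 := by omega
            have c1 : Nat.choose i' (j'' + 1) = 0 :=
              Nat.choose_eq_zero_of_lt (by omega)
            have tS2 : n - 1 - i' - j'' = i' := by omega
            have eL : 2 * (n + 3 - 1) - 3 * (i' + 1 + (j'' + 1)) = 0 := by omega
            have eS2 : 2 * (n - 1) - 3 * (i' + j'') = 0 := by omega
            have hjj : j'' = i' := by omega
            simp only [trm]
            rw [c2, tL, tS2, eL, eS2, c1, hjj]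
            simp only [Nat.choose_self, Nat.cast_one, Nat.cast_zero]
            ring
      · -- degenerate case: everything vanishes
        have cL : Nat.choose (n + 3 - 1 - (i' + 1) - j) (i' + 1) = 0 :=
          Nat.choose_eq_zero_of_lt (by omega)
        have c2 : Nat.choose (n + 2 - 1 - (i' + 1) - j) (i' + 1) = 0 :=
          Nat.choose_eq_zero_of_lt (by omega)
        have c1 : Nat.choose (n + 1 - 1 - i' - j) i' = 0 :=
          Nat.choose_eq_zero_of_lt (by omega)
        rcases j with _ | j''
        · rw [if_pos (Or.inr rfl)]
          simp only [trm]
          rw [cL, c2, c1]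
          simp
        · rw [if_neg (by simp)]
          simp only [Nat.add_sub_cancel]
          have cS2 : Nat.choose (n - 1 - i' - j'') i' = 0 :=
            Nat.choose_eq_zero_of_lt (by omega)
          simp only [trm]
          rw [cL, c2, c1, cS2]
          simp
    · -- main case
      obtain ⟨K, hK⟩ : ∃ K, n = i' + 1 + j + K := ⟨n - (i' + 1 + j), by omega⟩
      have hKi : i' ≤ K := by omega
      obtain ⟨M, hM⟩ : ∃ M, 2 * K + 1 = i' + j + M := ⟨2 * K + 1 - (i' + j), by omega⟩
      have tL : n + 3 - 1 - (i' + 1) - j = K + 2 := by omega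
      have t2 : n + 2 - 1 - (i' + 1) - j = K + 1 := by omega
      have t1 : n + 1 - 1 - i' - j = K + 1 := by omega
      have eL : 2 * (n + 3 - 1) - 3 * (i' + 1 + j) = M + 2 := by omega
      have e2 : 2 * (n + 2 - 1) - 3 * (i' + 1 + j) = M := by omega
      have e1 : 2 * (n + 1 - 1) - 3 * (i' + j) = M + 1 := by omega
      rcases j with _ | j''
      · rw [if_pos (Or.inr rfl)]
        simp only [trm]
        rw [tL, t2, t1, eL, e2, e1, Nat.choose_succ_succ (K + 1) i']
        simp only [Nat.choose_zero_right, Nat.succ_eq_add_one, Nat.cast_one]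
        push_cast
        ring
      · rw [if_neg (by simp)]
        simp only [Nat.add_sub_cancel]
        have tS2 : n - 1 - i' - j'' = K + 1 := by omega
        have eS2 : 2 * (n - 1) - 3 * (i' + j'') = M + 2 := by omega
        simp only [trm]
        rw [tL, t2, t1, tS2, eL, e2, e1, eS2, Nat.choose_succ_succ (K + 1) i',
          Nat.choose_succ_succ (i' : ℕ) j'']
        simp only [Nat.succ_eq_add_one]
        push_cast
        ring

lemma claim1_s13 (x : ℝ) (n s : ℕ) :
    (∑ i ∈ Finset.range (s + 1), ∑ j ∈ Finset.range (i + 1),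
        (if i = 0 then 0 else x * trm x (n + 1) (i - 1) j))
      + x * row x (n + 1) s = x * incTrib (n + 1) s x := by
  rw [Finset.sum_range_succ' _ s]
  have h0 : (∑ j ∈ Finset.range (0 + 1),
      (if (0 : ℕ) = 0 then (0 : ℝ) else x * trm x (n + 1) (0 - 1) j)) = 0 := by simp
  rw [h0, add_zero]
  have hbody : ∀ i ∈ Finset.range s,
      (∑ j ∈ Finset.range (i + 1 + 1),
        (if i + 1 = 0 then (0 : ℝ) else x * trm x (n + 1) (i + 1 - 1) j))
      = x * row x (n + 1) i := by
    intro i _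
    simp only [Nat.succ_ne_zero, if_false, Nat.add_sub_cancel]
    rw [Finset.sum_range_succ]
    have hz : trm x (n + 1) i (i + 1) = 0 := by
      simp [trm, Nat.choose_eq_zero_of_lt (Nat.lt_succ_self i)]
    rw [hz, mul_zero, add_zero, row, Finset.mul_sum]
  rw [Finset.sum_congr rfl hbody]
  rw [incTrib_eq_rows, Finset.mul_sum, Finset.sum_range_succ]

lemma claim2_s13 (x : ℝ) (n s : ℕ) :
    (∑ i ∈ Finset.range (s + 1), ∑ j ∈ Finset.range (i + 1),
        (if i = 0 ∨ j = 0 then 0 else trm x n (i - 1) (j - 1)))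
      + row x n s = incTrib n s x := by
  rw [Finset.sum_range_succ' _ s]
  have h0 : (∑ j ∈ Finset.range (0 + 1),
      (if (0 : ℕ) = 0 ∨ j = 0 then (0 : ℝ) else trm x n (0 - 1) (j - 1))) = 0 := by simp
  rw [h0, add_zero]
  have hbody : ∀ i ∈ Finset.range s,
      (∑ j ∈ Finset.range (i + 1 + 1),
        (if i + 1 = 0 ∨ j = 0 then (0 : ℝ) else trm x n (i + 1 - 1) (j - 1)))
      = row x n i := by
    intro i _
    rw [Finset.sum_range_succ' _ (i + 1)]
    have hj0 : (if i + 1 = 0 ∨ (0 : ℕ) = 0 then (0 : ℝ) else trm x n (i + 1 - 1) (0 - 1)) = 0 := by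
      simp
    rw [hj0, add_zero, row]
    apply Finset.sum_congr rfl
    intro j _
    simp
  rw [Finset.sum_congr rfl hbody]
  rw [incTrib_eq_rows, Finset.sum_range_succ]

lemma star (x : ℝ) (n s : ℕ) (hn : 1 ≤ n) :
    incTrib (n + 3) s x + x * row x (n + 1) s + row x n s
      = x ^ 2 * incTrib (n + 2) s x + x * incTrib (n + 1) s x + incTrib n s x := by
  have expand : incTrib (n + 3) s x
      = x ^ 2 * incTrib (n + 2) s x
        + (∑ i ∈ Finset.range (s + 1), ∑ j ∈ Finset.range (i + 1),
            (if i = 0 then 0 else x * trm x (n + 1) (i - 1) j))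
        + (∑ i ∈ Finset.range (s + 1), ∑ j ∈ Finset.range (i + 1),
            (if i = 0 ∨ j = 0 then 0 else trm x n (i - 1) (j - 1))) := by
    have : incTrib (n + 3) s x
        = ∑ i ∈ Finset.range (s + 1), ∑ j ∈ Finset.range (i + 1),
            (x ^ 2 * trm x (n + 2) i j
              + (if i = 0 then 0 else x * trm x (n + 1) (i - 1) j)
              + (if i = 0 ∨ j = 0 then 0 else trm x n (i - 1) (j - 1))) := by
      rw [show incTrib (n + 3) s x = ∑ i ∈ Finset.range (s + 1),
            ∑ j ∈ Finset.range (i + 1), trm x (n + 3) i j from rfl]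
      apply Finset.sum_congr rfl
      intro i _
      apply Finset.sum_congr rfl
      intro j hj
      exact trm_rec x n i j hn (by simpa [Nat.lt_succ_iff] using hj)
    rw [this]
    simp only [Finset.sum_add_distrib]
    congr 1
    · congr 1
      rw [show incTrib (n + 2) s x = ∑ i ∈ Finset.range (s + 1),
            ∑ j ∈ Finset.range (i + 1), trm x (n + 2) i j from rfl]
      rw [Finset.mul_sum]
      apply Finset.sum_congr rfl
      intro i _
      rw [Finset.mul_sum]
  have c1 := claim1_s13 x n s
  have c2 := claim2_s13 x n s
  linarith [expand]

lemma inc1 (x : ℝ) : ∀ s, incTrib 1 s x = 1 := by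
  intro s
  induction s with
  | zero => norm_num [incTrib]
  | succ s ih => rw [inc_succ, ih, row_zero x le_rfl (by omega), add_zero]

lemma inc2 (x : ℝ) : ∀ s, incTrib 2 s x = x ^ 2 := by
  intro s
  induction s with
  | zero => norm_num [incTrib]
  | succ s ih => rw [inc_succ, ih, row_zero x (by omega) (by omega), add_zero]

lemma inc3 (x : ℝ) : ∀ s, incTrib 3 (s + 1) x = x ^ 4 + x := by
  intro s
  induction s with
  | zero =>
    norm_num [incTrib, Finset.sum_range_succ]
  | succ s ih => rw [inc_succ, ih, row_zero x (by omega) (by omega), add_zero]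

lemma trib3 (x : ℝ) : tribPoly 3 x = x ^ 4 + x := by
  show x ^ 2 * tribPoly 2 x + x * tribPoly 1 x + tribPoly 0 x = x ^ 4 + x
  show x ^ 2 * x ^ 2 + x * 1 + 0 = x ^ 4 + x
  ring

lemma full (x : ℝ) (s : ℕ) : ∀ n, 1 ≤ n → n ≤ 2 * s + 2 → incTrib n s x = tribPoly n x := by
  intro n
  induction n using Nat.strong_induction_on with
  | _ n ih =>
    match n with
    | 0 => intro h _; omega
    | 1 => intro _ _; exact (inc1 x s).trans rfl
    | 2 => intro _ _; exact (inc2 x s).trans rfl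
    | 3 =>
      intro _ h3
      rcases s with _ | s'
      · omega
      · rw [inc3 x s', trib3]
    | (p + 4) =>
      intro _ hle
      have hp : 1 ≤ p + 1 := by omega
      have hstar := star x (p + 1) s hp
      have hr1 : row x (p + 2) s = 0 := row_zero x (by omega) (by omega)
      have hr2 : row x (p + 1) s = 0 := row_zero x (by omega) (by omega)
      rw [hr1, hr2] at hstar
      have i1 : incTrib (p + 3) s x = tribPoly (p + 3) x := ih (p + 3) (by omega) (by omega) (by omega)
      have i2 : incTrib (p + 2) s x = tribPoly (p + 2) x := ih (p + 2) (by omega) (by omega) (by omega)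
      have i3 : incTrib (p + 1) s x = tribPoly (p + 1) x := ih (p + 1) (by omega) (by omega) (by omega)
      have : incTrib (p + 4) s x
          = x ^ 2 * tribPoly (p + 3) x + x * tribPoly (p + 2) x + tribPoly (p + 1) x := by
        rw [← i1, ← i2, ← i3]
        linarith [hstar]
      rw [this]
      rfl

lemma r_match (x : ℝ) (n s : ℕ) (hn : 2 * s + 1 ≤ n) :
    rPoly s (n - 2 * s + 2) x = x * row x (n + 1) s + row x n s := by
  have h0 : ¬(n - 2 * s + 2 = 0 ∨ n - 2 * s + 2 = 1) := by omega
  have h2 : ¬(n - 2 * s + 2 = 2) := by omega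
  simp only [rPoly]
  rw [if_neg h0, if_neg h2]
  have A : (∑ j ∈ Finset.range (s + 1),
      (Nat.choose s j : ℝ) * (Nat.choose (n - 2 * s + 2 + s - j - 2) s : ℝ)
        * x ^ (2 * (n - 2 * s + 2) + s - 3 * j - 3)) = x * row x (n + 1) s := by
    rw [row, Finset.mul_sum]
    apply Finset.sum_congr rfl
    intro j hj
    have hjs : j ≤ s := by simpa [Nat.lt_succ_iff] using hj
    have ht : n - 2 * s + 2 + s - j - 2 = n + 1 - 1 - s - j := by omega
    simp only [trm]
    rw [ht]
    by_cases h : 3 * (s + j) ≤ 2 * n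
    · have he : 2 * (n - 2 * s + 2) + s - 3 * j - 3 = (2 * (n + 1 - 1) - 3 * (s + j)) + 1 := by
        omega
      rw [he, pow_succ]
      ring
    · have hlt : n + 1 - 1 - s - j < s := by omega
      simp only [Nat.choose_eq_zero_of_lt hlt]
      simp
  have B : (∑ j ∈ Finset.range (s + 1),
      (Nat.choose s j : ℝ) * (Nat.choose (n - 2 * s + 2 + s - j - 3) s : ℝ)
        * x ^ (2 * (n - 2 * s + 2) + s - 3 * j - 6)) = row x n s := by
    rw [row]
    apply Finset.sum_congr rfl
    intro j hj
    have hjs : j ≤ s := by simpa [Nat.lt_succ_iff] using hj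
    have ht : n - 2 * s + 2 + s - j - 3 = n - 1 - s - j := by omega
    simp only [trm]
    rw [ht]
    by_cases h : 3 * (s + j) + 2 ≤ 2 * n
    · have he : 2 * (n - 2 * s + 2) + s - 3 * j - 6 = 2 * (n - 1) - 3 * (s + j) := by omega
      rw [he]
    · have hlt : n - 1 - s - j < s := by omega
      simp only [Nat.choose_eq_zero_of_lt hlt]
      simp
  rw [A, B]

lemma trib2 (x : ℝ) : tribPoly 2 x = x ^ 2 := rfl
lemma trib1 (x : ℝ) : tribPoly 1 x = 1 := rfl

lemma tel (x : ℝ) (s m : ℕ) (hm : 1 ≤ m) :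
    ∑ i ∈ Finset.range (m + 3), rPoly s i x * tribPoly (m + 3 - i) x
      = x ^ 2 * (∑ i ∈ Finset.range (m + 2), rPoly s i x * tribPoly (m + 2 - i) x)
      + x * (∑ i ∈ Finset.range (m + 1), rPoly s i x * tribPoly (m + 1 - i) x)
      + (∑ i ∈ Finset.range m, rPoly s i x * tribPoly (m - i) x)
      + rPoly s (m + 2) x := by
  simp only [Finset.sum_range_succ]
  have b1 : m + 3 - m = 3 := by omega
  have b2 : m + 3 - (m + 1) = 2 := by omega
  have b3 : m + 3 - (m + 2) = 1 := by omega
  have b4 : m + 2 - m = 2 := by omega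
  have b5 : m + 2 - (m + 1) = 1 := by omega
  have b6 : m + 1 - m = 1 := by omega
  rw [b1, b2, b3, b4, b5, b6, trib1, trib2, trib3]
  have hs : ∀ i ∈ Finset.range m,
      rPoly s i x * tribPoly (m + 3 - i) x
        = x ^ 2 * (rPoly s i x * tribPoly (m + 2 - i) x)
          + x * (rPoly s i x * tribPoly (m + 1 - i) x)
          + rPoly s i x * tribPoly (m - i) x := by
    intro i hi
    have hi' : i < m := Finset.mem_range.mp hi
    have h3 : m + 3 - i = (m - i) + 3 := by omega
    have h2 : m + 2 - i = (m - i) + 2 := by omega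
    have h1 : m + 1 - i = (m - i) + 1 := by omega
    rw [h3, h2, h1]
    have : tribPoly (m - i + 3) x
        = x ^ 2 * tribPoly (m - i + 2) x + x * tribPoly (m - i + 1) x + tribPoly (m - i) x := rfl
    rw [this]
    ring
  rw [Finset.sum_congr rfl hs]
  simp only [Finset.sum_add_distrib, ← Finset.mul_sum]
  ring

/-- For `n ≥ 2s+1`: `T_n^{(s)}(x) = T_n(x) − ∑_{i=0}^{n-2s-1} r_i(x) T_{n-2s-i}(x)`. -/
theorem incTrib_eq_tribPoly_sub (n s : ℕ) (hn : 2 * s + 1 ≤ n) (x : ℝ) :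
    incTrib n s x =
      tribPoly n x - ∑ i ∈ Finset.range (n - 2 * s), rPoly s i x * tribPoly (n - 2 * s - i) x := by
  revert hn
  induction n using Nat.strong_induction_on with
  | _ n ih =>
    intro hn
    rcases Nat.lt_or_ge n (2 * s + 4) with hsm | hbig
    · rcases Nat.lt_or_ge n (2 * s + 3) with hsm2 | hge3
      · -- n = 2s+1 or 2s+2
        have hfull : incTrib n s x = tribPoly n x := full x s n (by omega) (by omega)
        have hsum : (∑ i ∈ Finset.range (n - 2 * s), rPoly s i x * tribPoly (n - 2 * s - i) x)
            = 0 := by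
          apply Finset.sum_eq_zero
          intro i hi
          have hi' : i < n - 2 * s := Finset.mem_range.mp hi
          have : i = 0 ∨ i = 1 := by omega
          rcases this with h | h <;> subst h <;> simp [rPoly]
        rw [hfull, hsum, sub_zero]
      · -- n = 2s+3
        have hn3 : n = 2 * s + 3 := by omega
        have hsum : (∑ i ∈ Finset.range (n - 2 * s), rPoly s i x * tribPoly (n - 2 * s - i) x)
            = x ^ (s + 1) := by
          have h3 : n - 2 * s = 3 := by omega
          rw [h3]
          simp only [Finset.sum_range_succ, Finset.sum_range_zero]
          norm_num [rPoly, trib1]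
        have h1 : incTrib n (s + 1) x = tribPoly n x := full x (s + 1) n (by omega) (by omega)
        have h2 : incTrib n (s + 1) x = incTrib n s x + row x n (s + 1) := inc_succ n s x
        have h3 : row x n (s + 1) = x ^ (s + 1) := by
          rw [show n = 2 * (s + 1) + 1 from by omega]
          exact row_top x (s + 1)
        rw [hsum]
        rw [h3] at h2
        linarith
    · -- n ≥ 2s+4
      obtain ⟨p, rfl⟩ : ∃ p, n = p + 3 := ⟨n - 3, by omega⟩
      have hp : 2 * s + 1 ≤ p := by omega
      have ihp := ih p (by omega) hp
      have ihp1 := ih (p + 1) (by omega) (by omega)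
      have ihp2 := ih (p + 2) (by omega) (by omega)
      have hstar := star x p s (by omega)
      have hrm := r_match x p s hp
      have htel := tel x s (p - 2 * s) (by omega)
      have e3 : p + 3 - 2 * s = p - 2 * s + 3 := by omega
      have e2 : p + 2 - 2 * s = p - 2 * s + 2 := by omega
      have e1 : p + 1 - 2 * s = p - 2 * s + 1 := by omega
      rw [e3]
      rw [e2] at ihp2
      rw [e1] at ihp1
      have htrib : tribPoly (p + 3) x
          = x ^ 2 * tribPoly (p + 2) x + x * tribPoly (p + 1) x + tribPoly p x := rfl
      have m2 : x ^ 2 * incTrib (p + 2) s x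
          = x ^ 2 * tribPoly (p + 2) x
            - x ^ 2 * ∑ i ∈ Finset.range (p - 2 * s + 2), rPoly s i x
                * tribPoly (p - 2 * s + 2 - i) x := by
        rw [ihp2]; ring
      have m1 : x * incTrib (p + 1) s x
          = x * tribPoly (p + 1) x
            - x * ∑ i ∈ Finset.range (p - 2 * s + 1), rPoly s i x
                * tribPoly (p - 2 * s + 1 - i) x := by
        rw [ihp1]; ring
      linarith [hstar, m2, m1, ihp, htel, hrm, htrib]
end

section
/- For every natural number s and every real number x, as an identity of formal power series in z over ℝ: (1 − x^2 z)^{s+1} · ∑_{i ≥ 0} r_i(x) z^i = z^2 · (x + z)^{s+1}. -/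
/-!
Since `(1 - x²z)⁻¹ ^ (s+1) = ∑ₖ C(k+s, s) x^{2k} zᵏ` (the rescaling `z ↦ x²z` of
`invOneSubPow`), it suffices to show that `r_n(x)` is the `n`-th coefficient of
`z² (x + z)^{s+1} (1 - x²z)^{-(s+1)}`. Writing `(x + z)^{s+1} = x (x + z)^s + z (x + z)^s` and
expanding `(x + z)^s` binomially produces exactly the two sums defining `r_n` for `n ≥ 3`: the
`j`-th terms come from `C(s,j) x^{s-j} z^{j+2}` resp. `z^{j+3}`, and when that power exceeds `zⁿ`
the truncated binomial `C(n+s-j-2, s)` resp. `C(n+s-j-3, s)` vanishes.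
-/

open PowerSeries

open Finset

namespace PowerSeries

variable {R : Type*} [CommRing R]

theorem one_sub_C_mul_X_pow_mul_rescale_invOneSubPow (a : R) (d : ℕ) :
    (1 - C a * X) ^ d * rescale a (invOneSubPow R d : R⟦X⟧) = 1 := by
  have h := congrArg (rescale a) (invOneSubPow R d).inv_val
  rwa [invOneSubPow_inv_eq_one_sub_pow, map_mul, map_pow, map_sub, map_one, rescale_X] at h

theorem coeff_rescale_invOneSubPow_succ (a : R) (s k : ℕ) :
    coeff k (rescale a (invOneSubPow R (s + 1) : R⟦X⟧)) = a ^ k * (s + k).choose s := by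
  rw [coeff_rescale, invOneSubPow_val_succ_eq_mk_add_choose, coeff_mk]

theorem coeff_X_pow_mul_C_add_X_pow_mul (a : R) (f : R⟦X⟧) (m s n : ℕ) :
    coeff n (X ^ m * (C a + X) ^ s * f) =
      ∑ j ∈ range (s + 1),
        s.choose j * a ^ (s - j) * if j + m ≤ n then coeff (n - (j + m)) f else 0 := by
  rw [add_comm, add_pow, mul_sum, sum_mul, map_sum]
  refine sum_congr rfl fun j _ => ?_
  have hterm : X ^ m * (X ^ j * C a ^ (s - j) * (s.choose j : R⟦X⟧)) * f =
      C (s.choose j * a ^ (s - j)) * (X ^ (j + m) * f) := by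
    rw [map_mul, map_pow, map_natCast]
    ring
  rw [hterm, coeff_C_mul, coeff_X_pow_mul']

end PowerSeries

theorem mk_rPoly_eq (s : ℕ) (x : ℝ) :
    mk (fun n => rPoly s n x) =
      X ^ 2 * (C x + X) ^ (s + 1) * rescale (x ^ 2) (invOneSubPow ℝ (s + 1) : ℝ⟦X⟧) := by
  set g := rescale (x ^ 2) (invOneSubPow ℝ (s + 1) : ℝ⟦X⟧)
  have hg (k : ℕ) : coeff k g = (x ^ 2) ^ k * (s + k).choose s :=
    coeff_rescale_invOneSubPow_succ _ s k
  ext n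
  rw [coeff_mk]
  obtain hn | hn := lt_or_ge n 3
  · have hg₀ : constantCoeff g = 1 := by
      rw [← coeff_zero_eq_constantCoeff_apply, hg]
      simp
    rw [mul_assoc, coeff_X_pow_mul']
    interval_cases n <;> simp [rPoly, hg₀]
  · have hsplit : X ^ 2 * (C x + X) ^ (s + 1) * g =
        C x * (X ^ 2 * (C x + X) ^ s * g) + X ^ 3 * (C x + X) ^ s * g := by
      ring
    rw [hsplit, map_add, coeff_C_mul, coeff_X_pow_mul_C_add_X_pow_mul,
      coeff_X_pow_mul_C_add_X_pow_mul, mul_sum, rPoly, if_neg (by omega), if_neg (by omega)]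
    congr 1 <;> refine sum_congr rfl fun j hj => ?_ <;> have hjs := mem_range.1 hj
    · by_cases h : j + 2 ≤ n
      · rw [if_pos h, hg, ← pow_mul, show n + s - j - 2 = s + (n - (j + 2)) by omega,
          show 2 * n + s - 3 * j - 3 = 1 + (s - j) + 2 * (n - (j + 2)) by omega, pow_add, pow_add]
        ring
      · rw [if_neg h, Nat.choose_eq_zero_of_lt (by omega : n + s - j - 2 < s)]
        simp
    · by_cases h : j + 3 ≤ n
      · rw [if_pos h, hg, ← pow_mul, show n + s - j - 3 = s + (n - (j + 3)) by omega,
          show 2 * n + s - 3 * j - 6 = (s - j) + 2 * (n - (j + 3)) by omega, pow_add]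
        ring
      · rw [if_neg h, Nat.choose_eq_zero_of_lt (by omega : n + s - j - 3 < s)]
        simp

/-- As formal power series over `ℝ`:
`(1 − x²z)^{s+1} · ∑_{i≥0} r_i(x) z^i = z² (x + z)^{s+1}`. -/
theorem rPoly_generating_function (s : ℕ) (x : ℝ) :
    (1 - PowerSeries.C (x ^ 2) * X) ^ (s + 1) * PowerSeries.mk (fun i => rPoly s i x) =
      (X : PowerSeries ℝ) ^ 2 * (PowerSeries.C x + X) ^ (s + 1) := by
  rw [mk_rPoly_eq, mul_left_comm, one_sub_C_mul_X_pow_mul_rescale_invOneSubPow, mul_one]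
end
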